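/- arXiv:2507.17714 — 6 statements merged into one kernel-verified Lean document; each statement's English description precedes it below -/
import Mathlib

section
/- Assume ζ < 1. Then there exists a strictly increasing bijection λ : [0,t̄] → [0,t̄] such that: (i) Q_φ(s,λ(s)) = 0 for all s ∈ [0,t̄]; (ii) for every s, λ' ∈ [0,t̄], Q_φ(s,λ') = 0 implies λ' = λ(s); (iii) λ(0) = 0 and λ(t̄) = t̄; (iv) for all s, s' ∈ [0,t̄], ((1−ζ)/(1+ζ))·|s−s'| ≤ |λ(s)−λ(s')| ≤ ((1+ζ)/(1−ζ))·|s−s'| (so λ is bi-Lipschitz, with Lip(λ) ≤ (1+ζ)/(1−ζ) and Lip(λ⁻¹) ≤ (1+ζ)/(1−ζ)). -/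
open Set

noncomputable section

/-- `Q_φ(s,λ) = λ - s + 2(γ₂(λ) - γ₁(s))(φ₂(λ) + φ₁(s))` from the paper. -/
def Qphi (γ₁ γ₂ φ₁ φ₂ : ℝ → ℝ) (s l : ℝ) : ℝ :=
  l - s + 2 * (γ₂ l - γ₁ s) * (φ₂ l + φ₁ s)

/-!
Write `Q_φ(s, λ) = λ - s + g(s, λ)`. The Lipschitz and sup bounds on `γᵢ, φᵢ` make `g` jointly
`ζ`-Lipschitz, `|g(s,λ) - g(s',λ')| ≤ ζ (|s - s'| + |λ - λ'|)`, and `g` vanishes at `(0,0)` and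
`(t̄,t̄)`. Hence `Q_φ(s,0) ≤ 0 ≤ Q_φ(s,t̄)` and the intermediate value theorem gives a root `λ(s)`.
Subtracting the equations for two roots gives `|Δλ - Δs| ≤ ζ (|Δs| + |Δλ|)`, which with `ζ < 1`
forces uniqueness, strict monotonicity and the bi-Lipschitz bounds; continuity of `λ` and
`λ(0) = 0`, `λ(t̄) = t̄` then give surjectivity.
-/

lemma abs_mul_sub_mul_le (a b c d : ℝ) : |a * b - c * d| ≤ |a - c| * |b| + |c| * |b - d| := by
  calc |a * b - c * d| = |(a - c) * b + c * (b - d)| := by ring_nf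
    _ ≤ |(a - c) * b| + |c * (b - d)| := abs_add_le _ _
    _ = |a - c| * |b| + |c| * |b - d| := by rw [abs_mul, abs_mul]

section TwoPointEstimates

variable {S : Set ℝ} {u₁ u₂ v₁ v₂ : ℝ → ℝ} {Lu Lv : NNReal} {Mu Mv : ℝ}

lemma LipschitzOnWith.abs_add_sub_add_le (h₁ : LipschitzOnWith Lu u₁ S)
    (h₂ : LipschitzOnWith Lu u₂ S) {s s' l l' : ℝ} (hs : s ∈ S) (hs' : s' ∈ S) (hl : l ∈ S)
    (hl' : l' ∈ S) :
    |(u₂ l + u₁ s) - (u₂ l' + u₁ s')| ≤ Lu * (|s - s'| + |l - l'|) := by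
  have e₁ := h₁.dist_le_mul s hs s' hs'
  have e₂ := h₂.dist_le_mul l hl l' hl'
  rw [Real.dist_eq, Real.dist_eq] at e₁ e₂
  calc |(u₂ l + u₁ s) - (u₂ l' + u₁ s')| = |(u₂ l - u₂ l') + (u₁ s - u₁ s')| := by ring_nf
    _ ≤ |u₂ l - u₂ l'| + |u₁ s - u₁ s'| := abs_add_le _ _
    _ ≤ Lu * (|s - s'| + |l - l'|) := by linarith

lemma abs_two_mul_add_mul_add_sub_le (hu₁ : LipschitzOnWith Lu u₁ S)
    (hu₂ : LipschitzOnWith Lu u₂ S) (hv₁ : LipschitzOnWith Lv v₁ S)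
    (hv₂ : LipschitzOnWith Lv v₂ S) (hu₁bd : ∀ x ∈ S, |u₁ x| ≤ Mu) (hu₂bd : ∀ x ∈ S, |u₂ x| ≤ Mu)
    (hv₁bd : ∀ x ∈ S, |v₁ x| ≤ Mv) (hv₂bd : ∀ x ∈ S, |v₂ x| ≤ Mv)
    {s s' l l' : ℝ} (hs : s ∈ S) (hs' : s' ∈ S) (hl : l ∈ S) (hl' : l' ∈ S) :
    |2 * (u₂ l + u₁ s) * (v₂ l + v₁ s) - 2 * (u₂ l' + u₁ s') * (v₂ l' + v₁ s')| ≤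
      4 * (Lu * Mv + Mu * Lv) * (|s - s'| + |l - l'|) := by
  have hΔu := hu₁.abs_add_sub_add_le hu₂ hs hs' hl hl'
  have hΔv := hv₁.abs_add_sub_add_le hv₂ hs hs' hl hl'
  have hu : |u₂ l' + u₁ s'| ≤ 2 * Mu :=
    (abs_add_le _ _).trans (by linarith [hu₂bd l' hl', hu₁bd s' hs'])
  have hv : |v₂ l + v₁ s| ≤ 2 * Mv :=
    (abs_add_le _ _).trans (by linarith [hv₂bd l hl, hv₁bd s hs])
  have hd : 0 ≤ |s - s'| + |l - l'| := by positivity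
  rw [mul_assoc, mul_assoc, ← mul_sub, abs_mul, abs_two]
  calc 2 * |(u₂ l + u₁ s) * (v₂ l + v₁ s) - (u₂ l' + u₁ s') * (v₂ l' + v₁ s')|
      ≤ 2 * (|(u₂ l + u₁ s) - (u₂ l' + u₁ s')| * |v₂ l + v₁ s| +
          |u₂ l' + u₁ s'| * |(v₂ l + v₁ s) - (v₂ l' + v₁ s')|) := by
        gcongr; exact abs_mul_sub_mul_le _ _ _ _
    _ ≤ 2 * (Lu * (|s - s'| + |l - l'|) * (2 * Mv) + 2 * Mu * (Lv * (|s - s'| + |l - l'|))) := by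
        gcongr
        · exact (abs_nonneg _).trans hu
    _ = 4 * (Lu * Mv + Mu * Lv) * (|s - s'| + |l - l'|) := by ring

end TwoPointEstimates

section PerturbedIdentity

variable {ζ x y : ℝ}

lemma mul_abs_le_of_abs_sub_le (h : |x - y| ≤ ζ * (|y| + |x|)) :
    (1 - ζ) * |x| ≤ (1 + ζ) * |y| := by
  linarith [abs_sub_abs_le_abs_sub x y]

lemma pos_of_abs_sub_le (hζ : ζ < 1) (h : |x - y| ≤ ζ * (|y| + |x|)) (hy : 0 < y) : 0 < x := by
  by_contra! hx
  rw [abs_of_nonpos (by linarith), abs_of_pos hy, abs_of_nonpos hx] at h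
  nlinarith

variable {a b : ℝ} {g : ℝ → ℝ → ℝ}

lemma exists_root_sub_add (hζ : ζ < 1) (hg : ∀ s ∈ Icc a b, ∀ s' ∈ Icc a b, ∀ l ∈ Icc a b,
      ∀ l' ∈ Icc a b, |g s l - g s' l'| ≤ ζ * (|s - s'| + |l - l'|))
    (hga : g a a = 0) (hgb : g b b = 0) {s : ℝ} (hs : s ∈ Icc a b) :
    ∃ l ∈ Icc a b, l - s + g s l = 0 := by
  have hab : a ≤ b := hs.1.trans hs.2
  have ha : a ∈ Icc a b := left_mem_Icc.2 hab
  have hb : b ∈ Icc a b := right_mem_Icc.2 hab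
  have hcont : ContinuousOn (fun l ↦ l - s + g s l) (Icc a b) := by
    refine (continuousOn_id.sub continuousOn_const).add
      (LipschitzOnWith.continuousOn (K := ζ.toNNReal) ?_)
    refine LipschitzOnWith.of_dist_le_mul fun l hl l' hl' ↦ ?_
    have := hg s hs s hs l hl l' hl'
    rw [sub_self, abs_zero, zero_add] at this
    rw [Real.dist_eq, Real.dist_eq]
    exact this.trans (by gcongr; exact Real.le_coe_toNNReal ζ)
  have hleft : a - s + g s a ≤ 0 := by
    have := hg s hs a ha a ha a ha
    rw [hga, sub_zero, abs_of_nonneg (sub_nonneg.2 hs.1), sub_self, abs_zero, add_zero] at this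
    linarith [le_abs_self (g s a), mul_le_of_le_one_left (sub_nonneg.2 hs.1) hζ.le]
  have hright : 0 ≤ b - s + g s b := by
    have := hg s hs b hb b hb b hb
    rw [hgb, sub_zero, abs_sub_comm, abs_of_nonneg (sub_nonneg.2 hs.2), sub_self, abs_zero,
      add_zero] at this
    linarith [neg_abs_le (g s b), mul_le_of_le_one_left (sub_nonneg.2 hs.2) hζ.le]
  exact intermediate_value_Icc hab hcont ⟨hleft, hright⟩

lemma abs_sub_sub_le_of_root (hg : ∀ s ∈ Icc a b, ∀ s' ∈ Icc a b, ∀ l ∈ Icc a b,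
      ∀ l' ∈ Icc a b, |g s l - g s' l'| ≤ ζ * (|s - s'| + |l - l'|))
    {s s' l l' : ℝ} (hs : s ∈ Icc a b) (hs' : s' ∈ Icc a b) (hl : l ∈ Icc a b)
    (hl' : l' ∈ Icc a b) (hroot : l - s + g s l = 0) (hroot' : l' - s' + g s' l' = 0) :
    |(l - l') - (s - s')| ≤ ζ * (|s - s'| + |l - l'|) := by
  have : (l - l') - (s - s') = -(g s l - g s' l') := by linarith
  rw [this, abs_neg]
  exact hg s hs s' hs' l hl l' hl'

theorem exists_strictMonoOn_bijOn_root_sub_add (hζ₀ : 0 ≤ ζ) (hζ : ζ < 1)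
    (hab : a ≤ b) (hg : ∀ s ∈ Icc a b, ∀ s' ∈ Icc a b, ∀ l ∈ Icc a b,
      ∀ l' ∈ Icc a b, |g s l - g s' l'| ≤ ζ * (|s - s'| + |l - l'|))
    (hga : g a a = 0) (hgb : g b b = 0) :
    ∃ lam : ℝ → ℝ,
      StrictMonoOn lam (Icc a b) ∧ BijOn lam (Icc a b) (Icc a b) ∧
      (∀ s ∈ Icc a b, lam s - s + g s (lam s) = 0) ∧
      (∀ s ∈ Icc a b, ∀ l ∈ Icc a b, l - s + g s l = 0 → l = lam s) ∧
      lam a = a ∧ lam b = b ∧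
      (∀ s ∈ Icc a b, ∀ s' ∈ Icc a b,
        (1 - ζ) / (1 + ζ) * |s - s'| ≤ |lam s - lam s'| ∧
        |lam s - lam s'| ≤ (1 + ζ) / (1 - ζ) * |s - s'|) := by
  choose! lam hlam hroot using fun s (hs : s ∈ Icc a b) ↦ exists_root_sub_add hζ hg hga hgb hs
  have key : ∀ s ∈ Icc a b, ∀ s' ∈ Icc a b,
      |(lam s - lam s') - (s - s')| ≤ ζ * (|s - s'| + |lam s - lam s'|) := fun s hs s' hs' ↦
    abs_sub_sub_le_of_root hg hs hs' (hlam s hs) (hlam s' hs') (hroot s hs) (hroot s' hs')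
  have unique : ∀ s ∈ Icc a b, ∀ l ∈ Icc a b, l - s + g s l = 0 → l = lam s := by
    intro s hs l hl hl0
    have h := mul_abs_le_of_abs_sub_le (abs_sub_sub_le_of_root hg hs hs hl (hlam s hs) hl0
      (hroot s hs))
    rw [sub_self, abs_zero, mul_zero] at h
    have : |l - lam s| ≤ 0 := nonpos_of_mul_nonpos_right h (by linarith)
    exact sub_eq_zero.1 (abs_nonpos_iff.1 this)
  have bilip : ∀ s ∈ Icc a b, ∀ s' ∈ Icc a b,
      (1 - ζ) / (1 + ζ) * |s - s'| ≤ |lam s - lam s'| ∧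
      |lam s - lam s'| ≤ (1 + ζ) / (1 - ζ) * |s - s'| := by
    intro s hs s' hs'
    have h := key s hs s' hs'
    have h' : |(s - s') - (lam s - lam s')| ≤ ζ * (|lam s - lam s'| + |s - s'|) := by
      rwa [abs_sub_comm, add_comm]
    rw [div_mul_eq_mul_div, div_mul_eq_mul_div, div_le_iff₀ (by linarith),
      le_div_iff₀ (by linarith)]
    exact ⟨by linarith [mul_abs_le_of_abs_sub_le h'], by linarith [mul_abs_le_of_abs_sub_le h]⟩
  have hmono : StrictMonoOn lam (Icc a b) := fun s hs s' hs' hss' ↦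
    sub_pos.1 (pos_of_abs_sub_le hζ (key s' hs' s hs) (sub_pos.2 hss'))
  have ha : a ∈ Icc a b := left_mem_Icc.2 hab
  have hb : b ∈ Icc a b := right_mem_Icc.2 hab
  have hla : lam a = a := (unique a ha a ha (by simp [hga])).symm
  have hlb : lam b = b := (unique b hb b hb (by simp [hgb])).symm
  have hcont : ContinuousOn lam (Icc a b) := by
    refine LipschitzOnWith.continuousOn (K := ((1 + ζ) / (1 - ζ)).toNNReal) ?_
    refine LipschitzOnWith.of_dist_le_mul fun s hs s' hs' ↦ ?_
    rw [Real.dist_eq, Real.dist_eq, Real.coe_toNNReal _ (div_nonneg (by linarith) (by linarith))]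
    exact (bilip s hs s' hs').2
  have hsurj : SurjOn lam (Icc a b) (Icc a b) := fun y hy ↦
    intermediate_value_Icc hab hcont (by rwa [hla, hlb])
  exact ⟨lam, hmono, ⟨hlam, hmono.injOn, hsurj⟩, hroot, unique, hla, hlb, bilip⟩

end PerturbedIdentity

theorem stmt_1_general (tb : ℝ) (htb : 0 < tb)
    (γ₁ γ₂ φ₁ φ₂ : ℝ → ℝ) (Mγ Lγ Mφ Lφ : NNReal)
    (hγ₁lip : LipschitzOnWith Lγ γ₁ (Set.Icc 0 tb))
    (hγ₂lip : LipschitzOnWith Lγ γ₂ (Set.Icc 0 tb))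
    (hγ₁bd : ∀ s ∈ Set.Icc 0 tb, |γ₁ s| ≤ (Mγ : ℝ))
    (hγ₂bd : ∀ s ∈ Set.Icc 0 tb, |γ₂ s| ≤ (Mγ : ℝ))
    (hφ₁lip : LipschitzOnWith Lφ φ₁ (Set.Icc 0 tb))
    (hφ₂lip : LipschitzOnWith Lφ φ₂ (Set.Icc 0 tb))
    (hφ₁bd : ∀ s ∈ Set.Icc 0 tb, |φ₁ s| ≤ (Mφ : ℝ))
    (hφ₂bd : ∀ s ∈ Set.Icc 0 tb, |φ₂ s| ≤ (Mφ : ℝ))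
    (hγ₁0 : γ₁ 0 = 0) (hγ₁t : γ₁ tb = 0) (hγ₂0 : γ₂ 0 = 0) (hγ₂t : γ₂ tb = 0)
    (zeta : ℝ) (hzdef : zeta = 4 * ((Mγ : ℝ) + (Lγ : ℝ)) * ((Mφ : ℝ) + (Lφ : ℝ)))
    (hzeta : zeta < 1) :
    ∃ lam : ℝ → ℝ,
      StrictMonoOn lam (Set.Icc 0 tb) ∧
      Set.BijOn lam (Set.Icc 0 tb) (Set.Icc 0 tb) ∧
      (∀ s ∈ Set.Icc 0 tb, Qphi γ₁ γ₂ φ₁ φ₂ s (lam s) = 0) ∧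
      (∀ s ∈ Set.Icc 0 tb, ∀ l' ∈ Set.Icc 0 tb,
        Qphi γ₁ γ₂ φ₁ φ₂ s l' = 0 → l' = lam s) ∧
      lam 0 = 0 ∧ lam tb = tb ∧
      (∀ s ∈ Set.Icc 0 tb, ∀ s' ∈ Set.Icc 0 tb,
        (1 - zeta) / (1 + zeta) * |s - s'| ≤ |lam s - lam s'| ∧
        |lam s - lam s'| ≤ (1 + zeta) / (1 - zeta) * |s - s'|) := by
  have hζ₀ : 0 ≤ zeta := by rw [hzdef]; positivity
  have hζ : 4 * ((Lγ : ℝ) * Mφ + Mγ * Lφ) ≤ zeta := by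
    rw [hzdef]
    nlinarith [mul_nonneg Mγ.coe_nonneg Mφ.coe_nonneg, mul_nonneg Lγ.coe_nonneg Lφ.coe_nonneg]
  have hg : ∀ s ∈ Icc 0 tb, ∀ s' ∈ Icc 0 tb, ∀ l ∈ Icc 0 tb, ∀ l' ∈ Icc 0 tb,
      |2 * (γ₂ l - γ₁ s) * (φ₂ l + φ₁ s) - 2 * (γ₂ l' - γ₁ s') * (φ₂ l' + φ₁ s')| ≤
        zeta * (|s - s'| + |l - l'|) := by
    intro s hs s' hs' l hl l' hl'
    simp only [sub_eq_add_neg (γ₂ _)]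
    refine (abs_two_mul_add_mul_add_sub_le (u₁ := -γ₁) hγ₁lip.neg hγ₂lip hφ₁lip hφ₂lip
      (fun x hx ↦ by simpa using hγ₁bd x hx) hγ₂bd hφ₁bd hφ₂bd hs hs' hl hl').trans ?_
    gcongr
  exact exists_strictMonoOn_bijOn_root_sub_add hζ₀ (by linarith) htb.le hg
    (by simp [hγ₁0, hγ₂0]) (by simp [hγ₁t, hγ₂t])

/-- existence of the horizontal interpolation reparametrization `λ`. -/
theorem stmt_1 (tb : ℝ) (htb : 0 < tb)
    (γ₁ γ₂ φ₁ φ₂ : ℝ → ℝ) (Mγ Lγ Mφ Lφ : NNReal)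
    (hγ₁lip : LipschitzOnWith Lγ γ₁ (Set.Icc 0 tb))
    (hγ₂lip : LipschitzOnWith Lγ γ₂ (Set.Icc 0 tb))
    (hγ₁bd : ∀ s ∈ Set.Icc 0 tb, |γ₁ s| ≤ (Mγ : ℝ))
    (hγ₂bd : ∀ s ∈ Set.Icc 0 tb, |γ₂ s| ≤ (Mγ : ℝ))
    (hφ₁lip : LipschitzOnWith Lφ φ₁ (Set.Icc 0 tb))
    (hφ₂lip : LipschitzOnWith Lφ φ₂ (Set.Icc 0 tb))
    (hφ₁bd : ∀ s ∈ Set.Icc 0 tb, |φ₁ s| ≤ (Mφ : ℝ))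
    (hφ₂bd : ∀ s ∈ Set.Icc 0 tb, |φ₂ s| ≤ (Mφ : ℝ))
    (hsign : ∀ t ∈ Set.Ioo 0 tb, γ₁ t < 0 ∧ 0 < γ₂ t)
    (hγ₁0 : γ₁ 0 = 0) (hγ₁t : γ₁ tb = 0) (hγ₂0 : γ₂ 0 = 0) (hγ₂t : γ₂ tb = 0)
    (hφ0 : φ₁ 0 = φ₂ 0) (hφt : φ₁ tb = φ₂ tb)
    (zeta : ℝ) (hzdef : zeta = 4 * ((Mγ : ℝ) + (Lγ : ℝ)) * ((Mφ : ℝ) + (Lφ : ℝ)))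
    (hzeta : zeta < 1) :
    ∃ lam : ℝ → ℝ,
      StrictMonoOn lam (Set.Icc 0 tb) ∧
      Set.BijOn lam (Set.Icc 0 tb) (Set.Icc 0 tb) ∧
      (∀ s ∈ Set.Icc 0 tb, Qphi γ₁ γ₂ φ₁ φ₂ s (lam s) = 0) ∧
      (∀ s ∈ Set.Icc 0 tb, ∀ l' ∈ Set.Icc 0 tb,
        Qphi γ₁ γ₂ φ₁ φ₂ s l' = 0 → l' = lam s) ∧
      lam 0 = 0 ∧ lam tb = tb ∧
      (∀ s ∈ Set.Icc 0 tb, ∀ s' ∈ Set.Icc 0 tb,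
        (1 - zeta) / (1 + zeta) * |s - s'| ≤ |lam s - lam s'| ∧
        |lam s - lam s'| ≤ (1 + zeta) / (1 - zeta) * |s - s'|) :=
  stmt_1_general tb htb γ₁ γ₂ φ₁ φ₂ Mγ Lγ Mφ Lφ hγ₁lip hγ₂lip hγ₁bd hγ₂bd hφ₁lip hφ₂lip hφ₁bd hφ₂bd
    hγ₁0 hγ₁t hγ₂0 hγ₂t zeta hzdef hzeta
end
end

section
/- Assume ζ < 1. Then the map ρ : [0,1]×[0,t̄] → ℝ³, ρ(h,s) = (1−h)·p₁(s) + h·p₂(λ(s)), is Lipschitz continuous and satisfies: (a) ρ(∂Q) = p₁([0,t̄]) ∪ p₂([0,t̄]), where Q = (0,1)×I; (b) ρ(h,s) = (1−h)·ρ(0,s) + h·ρ(1,s) for all (h,s); (c) for every (h,s) ∈ Q, ∂ρ/∂h (h,s) = ρ(1,s) − ρ(0,s) = p₂(λ(s)) − p₁(s) lies in the horizontal plane H_{ρ(h,s)}, i.e. its third component equals 2ρ₂(h,s) times its first component minus 2ρ₁(h,s) times its second component. In particular the parametric surface R_φ = ρ(Q) is foliated by straight horizontal segments spanned by the intrinsic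 graph of φ. -/
/-!
`ρ(h, s)` is the affine interpolation between `p₁(s)` and `p₂(λ(s))`, so it is affine in `h`
with `h`-derivative `p₂(λ(s)) - p₁(s)`. Along a segment from `p` to `q` the horizontality defect
of `q - p` does not depend on the point of the segment, and at `p = p₁(s)`, `q = p₂(l)` it is
exactly `Q_φ(s, l)`; hence the equation defining `λ` makes every segment horizontal.

Lipschitz continuity of `ρ` reduces to that of `λ`: the equation reads `λ = s + F(s, λ)` with
`F(s, l) = -2(γ₂(l) - γ₁(s))(φ₂(l) + φ₁(s))`, which is `ζ`-Lipschitz for the `ℓ¹` distance, so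
`(1 - ζ)|λ(s) - λ(s')| ≤ (1 + ζ)|s - s'|`. On `∂Q` the sides `s = 0` and `s = t̄` collapse to
the common endpoints of `p₁` and `p₂`, while `h = 0` and `h = 1` trace `p₁` and `p₂ ∘ λ`.
-/

open Set

noncomputable section

/-- The boundary curve `p(s) = (φ(s), γ(s), s + 2γ(s)φ(s))` in `ℝ³ ≅ ℍ`. -/
def heisP (γ φ : ℝ → ℝ) (s : ℝ) : ℝ × ℝ × ℝ :=
  (φ s, γ s, s + 2 * γ s * φ s)

/-- The ruled parametrization `ρ(h,s) = (1-h)·p₁(s) + h·p₂(λ(s))`. -/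
def heisRho (γ₁ γ₂ φ₁ φ₂ lam : ℝ → ℝ) (w : ℝ × ℝ) : ℝ × ℝ × ℝ :=
  (1 - w.1) • heisP γ₁ φ₁ w.2 + w.1 • heisP γ₂ φ₂ (lam w.2)

open Bornology AffineMap
open scoped NNReal

section Lipschitz

variable {α 𝕜 E : Type*} [PseudoMetricSpace α] [NormedField 𝕜] [SeminormedAddCommGroup E]
  [NormedSpace 𝕜 E]

theorem norm_smul_sub_smul_le (a b : 𝕜) (x y : E) :
    ‖a • x - b • y‖ ≤ ‖a‖ * ‖x - y‖ + ‖a - b‖ * ‖y‖ := by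
  calc ‖a • x - b • y‖ = ‖a • (x - y) + (a - b) • y‖ := by rw [smul_sub, sub_smul]; abel_nf
    _ ≤ ‖a‖ * ‖x - y‖ + ‖a - b‖ * ‖y‖ := by
      rw [← norm_smul, ← norm_smul]; exact norm_add_le _ _

theorem LipschitzOnWith.isBounded_image {β : Type*} [PseudoMetricSpace β] {f : α → β}
    {K : ℝ≥0} {s : Set α} (hf : LipschitzOnWith K f s) (hs : IsBounded s) :
    IsBounded (f '' s) := by
  obtain ⟨C, hC⟩ := Metric.isBounded_iff.1 hs
  refine Metric.isBounded_iff.2 ⟨K * C, ?_⟩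
  rintro _ ⟨x, hx, rfl⟩ _ ⟨y, hy, rfl⟩
  exact (hf.dist_le_mul x hx y hy).trans (by gcongr; exact hC hx hy)

theorem LipschitzOnWith.smul_of_isBounded {s : Set α} (hs : IsBounded s) {f : α → 𝕜}
    {g : α → E} {Kf Kg : ℝ≥0} (hf : LipschitzOnWith Kf f s) (hg : LipschitzOnWith Kg g s) :
    ∃ K, LipschitzOnWith K (fun x => f x • g x) s := by
  obtain ⟨A, hA⟩ := isBounded_iff_forall_norm_le.1 (hf.isBounded_image hs)
  obtain ⟨B, hB⟩ := isBounded_iff_forall_norm_le.1 (hg.isBounded_image hs)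
  refine ⟨A.toNNReal * Kg + Kf * B.toNNReal, LipschitzOnWith.of_dist_le_mul fun x hx y hy => ?_⟩
  have hfx : ‖f x‖ ≤ A.toNNReal := (hA _ (mem_image_of_mem f hx)).trans (le_max_left _ _)
  have hgy : ‖g y‖ ≤ B.toNNReal := (hB _ (mem_image_of_mem g hy)).trans (le_max_left _ _)
  rw [dist_eq_norm]
  calc ‖f x • g x - f y • g y‖ ≤ ‖f x‖ * ‖g x - g y‖ + ‖f x - f y‖ * ‖g y‖ :=
        norm_smul_sub_smul_le _ _ _ _
    _ ≤ A.toNNReal * (Kg * dist x y) + Kf * dist x y * B.toNNReal := by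
      rw [← dist_eq_norm, ← dist_eq_norm]
      gcongr
      exacts [hg.dist_le_mul x hx y hy, hf.dist_le_mul x hx y hy]
    _ = ↑(A.toNNReal * Kg + Kf * B.toNNReal) * dist x y := by push_cast; ring

theorem exists_lipschitzOnWith_lineMap {F : Type*} [SeminormedAddCommGroup F] [NormedSpace ℝ F]
    {s t : Set ℝ} (hs : IsBounded s) (ht : IsBounded t) {p q : ℝ → F} {Kp Kq : ℝ≥0}
    (hp : LipschitzOnWith Kp p t) (hq : LipschitzOnWith Kq q t) :
    ∃ K, LipschitzOnWith K (fun w : ℝ × ℝ => lineMap (p w.2) (q w.2) w.1) (s ×ˢ t) := by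
  have hsnd : ∀ {K : ℝ≥0} {f : ℝ → F}, LipschitzOnWith K f t →
      LipschitzOnWith K (fun w : ℝ × ℝ => f w.2) (s ×ˢ t) := fun hf => by
    simpa only [Function.comp_def, mul_one] using
      hf.comp LipschitzWith.prod_snd.lipschitzOnWith fun _ hw => hw.2
  obtain ⟨K, hK⟩ := (LipschitzWith.prod_fst.lipschitzOnWith (s := s ×ˢ t)).smul_of_isBounded
    (hs.prod ht) ((hsnd hq).sub (hsnd hp))
  exact ⟨_, by simpa only [lineMap_apply_module'] using hK.add (hsnd hp)⟩

theorem lipschitzOnWith_of_eq_add {s t : Set ℝ} {u : ℝ → ℝ} {F : ℝ → ℝ → ℝ} {c : ℝ}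
    (hc : c < 1) (hu : MapsTo u s t)
    (hF : ∀ x ∈ s, ∀ x' ∈ s, ∀ y ∈ t, ∀ y' ∈ t,
      |F x y - F x' y'| ≤ c * (|x - x'| + |y - y'|))
    (hsol : ∀ x ∈ s, u x = x + F x (u x)) :
    LipschitzOnWith (Real.toNNReal ((1 + c) / (1 - c))) u s := by
  refine LipschitzOnWith.of_dist_le_mul fun x hx x' hx' => ?_
  rw [Real.dist_eq, Real.dist_eq, Real.coe_toNNReal']
  have hdiff : u x - u x' = (x - x') + (F x (u x) - F x' (u x')) := by
    linarith [hsol x hx, hsol x' hx']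
  have key : |u x - u x'| ≤ |x - x'| + c * (|x - x'| + |u x - u x'|) := by
    nth_rw 1 [hdiff]
    exact (abs_add_le _ _).trans (add_le_add le_rfl (hF x hx x' hx' _ (hu hx) _ (hu hx')))
  calc |u x - u x'| ≤ (1 + c) / (1 - c) * |x - x'| := by
        rw [div_mul_eq_mul_div, le_div_iff₀ (by linarith)]; linarith
    _ ≤ max ((1 + c) / (1 - c)) 0 * |x - x'| := by gcongr; exact le_max_left _ _

end Lipschitz

theorem frontier_Ioo_prod_Ioo {α : Type*} [LinearOrder α] [TopologicalSpace α] [OrderTopology α]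
    [DenselyOrdered α] {a b c d : α} (hab : a < b) (hcd : c < d) :
    frontier (Ioo a b ×ˢ Ioo c d) = Icc a b ×ˢ {c, d} ∪ {a, b} ×ˢ Icc c d := by
  rw [frontier_prod_eq, closure_Ioo hab.ne, closure_Ioo hcd.ne, frontier_Ioo hab,
    frontier_Ioo hcd]

/-- `IsHorizontal p v` says that `v` lies in the horizontal plane `H_p = span {X p, Y p}`. -/
def IsHorizontal (p v : ℝ × ℝ × ℝ) : Prop :=
  v.2.2 = 2 * p.2.1 * v.1 - 2 * p.1 * v.2.1

theorem isHorizontal_lineMap_iff (p q : ℝ × ℝ × ℝ) (x : ℝ) :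
    IsHorizontal (lineMap p q x) (q - p) ↔ IsHorizontal p (q - p) := by
  unfold IsHorizontal
  rw [show 2 * (lineMap p q x).2.1 * (q - p).1 - 2 * (lineMap p q x).1 * (q - p).2.1
      = 2 * p.2.1 * (q - p).1 - 2 * p.1 * (q - p).2.1 by
    simp only [lineMap_apply_module', Prod.fst_add, Prod.snd_add, Prod.smul_fst, Prod.smul_snd,
      smul_eq_mul]
    ring]

section Heisenberg

variable {γ γ₁ γ₂ φ φ₁ φ₂ lam : ℝ → ℝ}

theorem exists_lipschitzOnWith_heisP {s : Set ℝ} (hs : IsBounded s) {Kγ Kφ : ℝ≥0}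
    (hγ : LipschitzOnWith Kγ γ s) (hφ : LipschitzOnWith Kφ φ s) :
    ∃ K, LipschitzOnWith K (heisP γ φ) s := by
  obtain ⟨K, hK⟩ := hγ.smul_of_isBounded hs hφ
  have hthird := LipschitzWith.id.lipschitzOnWith.add
    ((lipschitzWith_smul (2 : ℝ)).comp_lipschitzOnWith hK)
  have hfun : heisP γ φ = fun x => (φ x, γ x, x + (2 : ℝ) • (γ x • φ x)) := by
    funext x
    simp only [heisP, smul_eq_mul, mul_assoc]
  rw [hfun]
  exact ⟨_, hφ.prodMk (hγ.prodMk hthird)⟩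

theorem isHorizontal_heisP_sub_heisP_iff (s l : ℝ) :
    IsHorizontal (heisP γ₁ φ₁ s) (heisP γ₂ φ₂ l - heisP γ₁ φ₁ s) ↔
      Qphi γ₁ γ₂ φ₁ φ₂ s l = 0 := by
  simp only [IsHorizontal, heisP, Qphi, Prod.fst_sub, Prod.snd_sub]
  constructor <;> intro h <;> linear_combination h

theorem exists_lipschitzOnWith_of_Qphi_eq_zero {tb : ℝ} {Mγ Lγ Mφ Lφ : ℝ≥0}
    (hγ₁ : LipschitzOnWith Lγ γ₁ (Icc 0 tb)) (hγ₂ : LipschitzOnWith Lγ γ₂ (Icc 0 tb))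
    (hφ₁ : LipschitzOnWith Lφ φ₁ (Icc 0 tb)) (hφ₂ : LipschitzOnWith Lφ φ₂ (Icc 0 tb))
    (hγ₁bd : ∀ s ∈ Icc 0 tb, |γ₁ s| ≤ Mγ) (hγ₂bd : ∀ s ∈ Icc 0 tb, |γ₂ s| ≤ Mγ)
    (hφ₁bd : ∀ s ∈ Icc 0 tb, |φ₁ s| ≤ Mφ) (hφ₂bd : ∀ s ∈ Icc 0 tb, |φ₂ s| ≤ Mφ)
    (hζ : 4 * ((Mγ : ℝ) + Lγ) * ((Mφ : ℝ) + Lφ) < 1)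
    (hmaps : MapsTo lam (Icc 0 tb) (Icc 0 tb))
    (hsol : ∀ s ∈ Icc 0 tb, Qphi γ₁ γ₂ φ₁ φ₂ s (lam s) = 0) :
    ∃ K, LipschitzOnWith K lam (Icc 0 tb) := by
  have lip : ∀ {f : ℝ → ℝ} {K : ℝ≥0}, LipschitzOnWith K f (Icc 0 tb) →
      ∀ a ∈ Icc 0 tb, ∀ b ∈ Icc 0 tb, |f a - f b| ≤ K * |a - b| := fun hf a ha b hb => by
    simpa only [Real.dist_eq] using hf.dist_le_mul a ha b hb
  refine ⟨_, lipschitzOnWith_of_eq_add hζ hmaps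
    (F := fun s l => -(2 * ((γ₂ l - γ₁ s) * (φ₂ l + φ₁ s)))) ?_ fun s hs => ?_⟩
  · intro x hx x' hx' y hy y' hy'
    set e := |x - x'| + |y - y'|
    have hA : |(γ₂ y - γ₁ x) - (γ₂ y' - γ₁ x')| ≤ Lγ * e :=
      calc _ = |(γ₂ y - γ₂ y') - (γ₁ x - γ₁ x')| := by ring_nf
        _ ≤ |γ₂ y - γ₂ y'| + |γ₁ x - γ₁ x'| := abs_sub _ _
        _ ≤ Lγ * |y - y'| + Lγ * |x - x'| :=
          add_le_add (lip hγ₂ y hy y' hy') (lip hγ₁ x hx x' hx')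
        _ = Lγ * e := by ring
    have hB : |(φ₂ y + φ₁ x) - (φ₂ y' + φ₁ x')| ≤ Lφ * e :=
      calc _ = |(φ₂ y - φ₂ y') + (φ₁ x - φ₁ x')| := by ring_nf
        _ ≤ |φ₂ y - φ₂ y'| + |φ₁ x - φ₁ x'| := abs_add_le _ _
        _ ≤ Lφ * |y - y'| + Lφ * |x - x'| :=
          add_le_add (lip hφ₂ y hy y' hy') (lip hφ₁ x hx x' hx')
        _ = Lφ * e := by ring
    have hA' : |γ₂ y - γ₁ x| ≤ 2 * Mγ :=
      (abs_sub _ _).trans (by linarith [hγ₂bd y hy, hγ₁bd x hx])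
    have hB' : |φ₂ y' + φ₁ x'| ≤ 2 * Mφ :=
      (abs_add_le _ _).trans (by linarith [hφ₂bd y' hy', hφ₁bd x' hx'])
    have he : 0 ≤ (Mγ * Mφ + Lγ * Lφ : ℝ) * e := by positivity
    calc |-(2 * ((γ₂ y - γ₁ x) * (φ₂ y + φ₁ x))) - -(2 * ((γ₂ y' - γ₁ x') * (φ₂ y' + φ₁ x')))|
        = 2 * |(γ₂ y - γ₁ x) * (φ₂ y + φ₁ x) - (γ₂ y' - γ₁ x') * (φ₂ y' + φ₁ x')| := by
          rw [neg_sub_neg, ← mul_sub, abs_mul, abs_two, abs_sub_comm]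
      _ ≤ 2 * (|γ₂ y - γ₁ x| * |(φ₂ y + φ₁ x) - (φ₂ y' + φ₁ x')|
            + |(γ₂ y - γ₁ x) - (γ₂ y' - γ₁ x')| * |φ₂ y' + φ₁ x'|) := by
          gcongr
          simpa only [smul_eq_mul, Real.norm_eq_abs] using
            norm_smul_sub_smul_le (𝕜 := ℝ) (E := ℝ) _ _ _ _
      _ ≤ 2 * (2 * Mγ * (Lφ * e) + Lγ * e * (2 * Mφ)) := by gcongr
      _ ≤ 4 * ((Mγ : ℝ) + Lγ) * ((Mφ : ℝ) + Lφ) * (|x - x'| + |y - y'|) := by linarith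
  · have := hsol s hs
    unfold Qphi at this
    linarith

theorem heisRho_eq_lineMap :
    heisRho γ₁ γ₂ φ₁ φ₂ lam = fun w => lineMap (heisP γ₁ φ₁ w.2) (heisP γ₂ φ₂ (lam w.2)) w.1 :=
  funext fun _ => (lineMap_apply_module _ _ _).symm

@[simp]
theorem heisRho_zero (s : ℝ) : heisRho γ₁ γ₂ φ₁ φ₂ lam (0, s) = heisP γ₁ φ₁ s := by
  simp [heisRho]

@[simp]
theorem heisRho_one (s : ℝ) : heisRho γ₁ γ₂ φ₁ φ₂ lam (1, s) = heisP γ₂ φ₂ (lam s) := by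
  simp [heisRho]

theorem heisRho_of_heisP_eq {s : ℝ} (h : heisP γ₂ φ₂ (lam s) = heisP γ₁ φ₁ s) (x : ℝ) :
    heisRho γ₁ γ₂ φ₁ φ₂ lam (x, s) = heisP γ₁ φ₁ s := by
  simp only [heisRho_eq_lineMap]
  rw [h, lineMap_same_apply]

theorem hasDerivAt_heisRho (x s : ℝ) :
    HasDerivAt (fun x' => heisRho γ₁ γ₂ φ₁ φ₂ lam (x', s))
      (heisP γ₂ φ₂ (lam s) - heisP γ₁ φ₁ s) x := by
  simp only [heisRho_eq_lineMap]
  exact hasDerivAt_lineMap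

theorem heisRho_image_frontier {tb : ℝ} (htb : 0 < tb) (hlam : BijOn lam (Icc 0 tb) (Icc 0 tb))
    (h0 : heisP γ₂ φ₂ (lam 0) = heisP γ₁ φ₁ 0) (ht : heisP γ₂ φ₂ (lam tb) = heisP γ₁ φ₁ tb) :
    heisRho γ₁ γ₂ φ₁ φ₂ lam '' frontier (Ioo (0 : ℝ) 1 ×ˢ Ioo 0 tb) =
      heisP γ₁ φ₁ '' Icc 0 tb ∪ heisP γ₂ φ₂ '' Icc 0 tb := by
  have hsides : heisRho γ₁ γ₂ φ₁ φ₂ lam '' ({0, 1} ×ˢ Icc 0 tb) =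
      heisP γ₁ φ₁ '' Icc 0 tb ∪ heisP γ₂ φ₂ '' Icc 0 tb := by
    rw [insert_prod, singleton_prod, image_union, image_image, image_image]
    simp only [heisRho_zero, heisRho_one]
    rw [← image_image (heisP γ₂ φ₂) lam, hlam.image_eq]
  have hcorners : heisRho γ₁ γ₂ φ₁ φ₂ lam '' (Icc 0 1 ×ˢ {0, tb}) ⊆ heisP γ₁ φ₁ '' Icc 0 tb := by
    rintro _ ⟨⟨x, s⟩, ⟨-, hs⟩, rfl⟩
    obtain hs | hs : s = 0 ∨ s = tb := hs
    · exact ⟨0, left_mem_Icc.2 htb.le, by rw [hs, heisRho_of_heisP_eq h0]⟩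
    · exact ⟨tb, right_mem_Icc.2 htb.le, by rw [hs, heisRho_of_heisP_eq ht]⟩
  rw [frontier_Ioo_prod_Ioo one_pos htb, image_union, hsides,
    union_eq_self_of_subset_left (hcorners.trans subset_union_left)]

theorem exists_lipschitzOnWith_heisRho {tb : ℝ} {K₁ K₂ : ℝ≥0}
    (hP₁ : LipschitzOnWith K₁ (heisP γ₁ φ₁) (Icc 0 tb))
    (hP₂ : LipschitzOnWith K₂ (fun s => heisP γ₂ φ₂ (lam s)) (Icc 0 tb)) :
    ∃ K : ℝ≥0, LipschitzOnWith K (heisRho γ₁ γ₂ φ₁ φ₂ lam) (Icc 0 1 ×ˢ Icc 0 tb) := by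
  obtain ⟨K, hK⟩ := exists_lipschitzOnWith_lineMap (Metric.isBounded_Icc (0 : ℝ) 1)
    (Metric.isBounded_Icc _ _) hP₁ hP₂
  rw [heisRho_eq_lineMap]
  exact ⟨K, hK⟩

end Heisenberg

theorem stmt_4_general (tb : ℝ) (htb : 0 < tb)
    (γ₁ γ₂ φ₁ φ₂ : ℝ → ℝ) (Mγ Lγ Mφ Lφ : NNReal)
    (hγ₁lip : LipschitzOnWith Lγ γ₁ (Set.Icc 0 tb))
    (hγ₂lip : LipschitzOnWith Lγ γ₂ (Set.Icc 0 tb))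
    (hγ₁bd : ∀ s ∈ Set.Icc 0 tb, |γ₁ s| ≤ (Mγ : ℝ))
    (hγ₂bd : ∀ s ∈ Set.Icc 0 tb, |γ₂ s| ≤ (Mγ : ℝ))
    (hφ₁lip : LipschitzOnWith Lφ φ₁ (Set.Icc 0 tb))
    (hφ₂lip : LipschitzOnWith Lφ φ₂ (Set.Icc 0 tb))
    (hφ₁bd : ∀ s ∈ Set.Icc 0 tb, |φ₁ s| ≤ (Mφ : ℝ))
    (hφ₂bd : ∀ s ∈ Set.Icc 0 tb, |φ₂ s| ≤ (Mφ : ℝ))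
    (hγ₁0 : γ₁ 0 = 0) (hγ₁t : γ₁ tb = 0) (hγ₂0 : γ₂ 0 = 0) (hγ₂t : γ₂ tb = 0)
    (hφ0 : φ₁ 0 = φ₂ 0) (hφt : φ₁ tb = φ₂ tb)
    (zeta : ℝ) (hzdef : zeta = 4 * ((Mγ : ℝ) + (Lγ : ℝ)) * ((Mφ : ℝ) + (Lφ : ℝ)))
    (hzeta : zeta < 1)
    (lam : ℝ → ℝ)
    (hlam_bij : Set.BijOn lam (Set.Icc 0 tb) (Set.Icc 0 tb))
    (hlam_sol : ∀ s ∈ Set.Icc 0 tb, Qphi γ₁ γ₂ φ₁ φ₂ s (lam s) = 0)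
    (hlam0 : lam 0 = 0) (hlamt : lam tb = tb) :
    -- ρ is Lipschitz on [0,1] × [0,t̄]
    (∃ K : NNReal, LipschitzOnWith K (heisRho γ₁ γ₂ φ₁ φ₂ lam)
      (Set.Icc 0 1 ×ˢ Set.Icc 0 tb)) ∧
    -- (a) ρ(∂Q) = p₁([0,t̄]) ∪ p₂([0,t̄])
    (heisRho γ₁ γ₂ φ₁ φ₂ lam '' frontier (Set.Ioo (0:ℝ) 1 ×ˢ Set.Ioo (0:ℝ) tb)
      = heisP γ₁ φ₁ '' Set.Icc 0 tb ∪ heisP γ₂ φ₂ '' Set.Icc 0 tb) ∧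
    -- (b) ρ(h,s) = (1-h)·ρ(0,s) + h·ρ(1,s)
    (∀ h s : ℝ, heisRho γ₁ γ₂ φ₁ φ₂ lam (h, s)
      = (1 - h) • heisRho γ₁ γ₂ φ₁ φ₂ lam (0, s)
        + h • heisRho γ₁ γ₂ φ₁ φ₂ lam (1, s)) ∧
    -- (c) ∂ρ/∂h is the horizontal vector p₂(λ(s)) - p₁(s) at every point ρ(h,s)
    (∀ h ∈ Set.Ioo (0:ℝ) 1, ∀ s ∈ Set.Ioo 0 tb,
      HasDerivAt (fun h' : ℝ => heisRho γ₁ γ₂ φ₁ φ₂ lam (h', s))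
        (heisRho γ₁ γ₂ φ₁ φ₂ lam (1, s) - heisRho γ₁ γ₂ φ₁ φ₂ lam (0, s)) h ∧
      heisRho γ₁ γ₂ φ₁ φ₂ lam (1, s) - heisRho γ₁ γ₂ φ₁ φ₂ lam (0, s)
        = heisP γ₂ φ₂ (lam s) - heisP γ₁ φ₁ s ∧
      (heisP γ₂ φ₂ (lam s) - heisP γ₁ φ₁ s).2.2
        = 2 * (heisRho γ₁ γ₂ φ₁ φ₂ lam (h, s)).2.1
            * (heisP γ₂ φ₂ (lam s) - heisP γ₁ φ₁ s).1
          - 2 * (heisRho γ₁ γ₂ φ₁ φ₂ lam (h, s)).1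
            * (heisP γ₂ φ₂ (lam s) - heisP γ₁ φ₁ s).2.1) := by
  subst hzdef
  have h0 : heisP γ₂ φ₂ (lam 0) = heisP γ₁ φ₁ 0 := by simp [heisP, hlam0, hγ₁0, hγ₂0, hφ0]
  have ht : heisP γ₂ φ₂ (lam tb) = heisP γ₁ φ₁ tb := by simp [heisP, hlamt, hγ₁t, hγ₂t, hφt]
  refine ⟨?_, heisRho_image_frontier htb hlam_bij h0 ht,
    fun h s => by rw [heisRho_zero, heisRho_one]; rfl, fun h _ s hs => ?_⟩
  · obtain ⟨Klam, hlam_lip⟩ := exists_lipschitzOnWith_of_Qphi_eq_zero hγ₁lip hγ₂lip hφ₁lip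
      hφ₂lip hγ₁bd hγ₂bd hφ₁bd hφ₂bd hzeta hlam_bij.mapsTo hlam_sol
    obtain ⟨K₁, hP₁⟩ := exists_lipschitzOnWith_heisP (Metric.isBounded_Icc _ _) hγ₁lip hφ₁lip
    obtain ⟨K₂, hP₂⟩ := exists_lipschitzOnWith_heisP (Metric.isBounded_Icc _ _) hγ₂lip hφ₂lip
    exact exists_lipschitzOnWith_heisRho hP₁ (hP₂.comp hlam_lip hlam_bij.mapsTo)
  rw [heisRho_zero, heisRho_one]
  refine ⟨hasDerivAt_heisRho h s, rfl, ?_⟩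
  rw [heisRho_eq_lineMap]
  exact (isHorizontal_lineMap_iff _ _ h).2
    ((isHorizontal_heisP_sub_heisP_iff s (lam s)).2 (hlam_sol s (Ioo_subset_Icc_self hs)))

/-- the ruled parametrization `ρ` is Lipschitz, sends `∂Q` onto the
intrinsic graph of `φ`, is affine in `h`, and its `h`-derivative is a horizontal
vector at every point of the segment. -/
theorem stmt_4 (tb : ℝ) (htb : 0 < tb)
    (γ₁ γ₂ φ₁ φ₂ : ℝ → ℝ) (Mγ Lγ Mφ Lφ : NNReal)
    (hγ₁lip : LipschitzOnWith Lγ γ₁ (Set.Icc 0 tb))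
    (hγ₂lip : LipschitzOnWith Lγ γ₂ (Set.Icc 0 tb))
    (hγ₁bd : ∀ s ∈ Set.Icc 0 tb, |γ₁ s| ≤ (Mγ : ℝ))
    (hγ₂bd : ∀ s ∈ Set.Icc 0 tb, |γ₂ s| ≤ (Mγ : ℝ))
    (hφ₁lip : LipschitzOnWith Lφ φ₁ (Set.Icc 0 tb))
    (hφ₂lip : LipschitzOnWith Lφ φ₂ (Set.Icc 0 tb))
    (hφ₁bd : ∀ s ∈ Set.Icc 0 tb, |φ₁ s| ≤ (Mφ : ℝ))
    (hφ₂bd : ∀ s ∈ Set.Icc 0 tb, |φ₂ s| ≤ (Mφ : ℝ))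
    (hsign : ∀ t ∈ Set.Ioo 0 tb, γ₁ t < 0 ∧ 0 < γ₂ t)
    (hγ₁0 : γ₁ 0 = 0) (hγ₁t : γ₁ tb = 0) (hγ₂0 : γ₂ 0 = 0) (hγ₂t : γ₂ tb = 0)
    (hφ0 : φ₁ 0 = φ₂ 0) (hφt : φ₁ tb = φ₂ tb)
    (zeta : ℝ) (hzdef : zeta = 4 * ((Mγ : ℝ) + (Lγ : ℝ)) * ((Mφ : ℝ) + (Lφ : ℝ)))
    (hzeta : zeta < 1)
    (lam : ℝ → ℝ)
    (hlam_bij : Set.BijOn lam (Set.Icc 0 tb) (Set.Icc 0 tb))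
    (hlam_mono : StrictMonoOn lam (Set.Icc 0 tb))
    (hlam_sol : ∀ s ∈ Set.Icc 0 tb, Qphi γ₁ γ₂ φ₁ φ₂ s (lam s) = 0)
    (hlam0 : lam 0 = 0) (hlamt : lam tb = tb) :
    -- ρ is Lipschitz on [0,1] × [0,t̄]
    (∃ K : NNReal, LipschitzOnWith K (heisRho γ₁ γ₂ φ₁ φ₂ lam)
      (Set.Icc 0 1 ×ˢ Set.Icc 0 tb)) ∧
    -- (a) ρ(∂Q) = p₁([0,t̄]) ∪ p₂([0,t̄])
    (heisRho γ₁ γ₂ φ₁ φ₂ lam '' frontier (Set.Ioo (0:ℝ) 1 ×ˢ Set.Ioo (0:ℝ) tb)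
      = heisP γ₁ φ₁ '' Set.Icc 0 tb ∪ heisP γ₂ φ₂ '' Set.Icc 0 tb) ∧
    -- (b) ρ(h,s) = (1-h)·ρ(0,s) + h·ρ(1,s)
    (∀ h s : ℝ, heisRho γ₁ γ₂ φ₁ φ₂ lam (h, s)
      = (1 - h) • heisRho γ₁ γ₂ φ₁ φ₂ lam (0, s)
        + h • heisRho γ₁ γ₂ φ₁ φ₂ lam (1, s)) ∧
    -- (c) ∂ρ/∂h is the horizontal vector p₂(λ(s)) - p₁(s) at every point ρ(h,s)
    (∀ h ∈ Set.Ioo (0:ℝ) 1, ∀ s ∈ Set.Ioo 0 tb,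
      HasDerivAt (fun h' : ℝ => heisRho γ₁ γ₂ φ₁ φ₂ lam (h', s))
        (heisRho γ₁ γ₂ φ₁ φ₂ lam (1, s) - heisRho γ₁ γ₂ φ₁ φ₂ lam (0, s)) h ∧
      heisRho γ₁ γ₂ φ₁ φ₂ lam (1, s) - heisRho γ₁ γ₂ φ₁ φ₂ lam (0, s)
        = heisP γ₂ φ₂ (lam s) - heisP γ₁ φ₁ s ∧
      (heisP γ₂ φ₂ (lam s) - heisP γ₁ φ₁ s).2.2
        = 2 * (heisRho γ₁ γ₂ φ₁ φ₂ lam (h, s)).2.1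
            * (heisP γ₂ φ₂ (lam s) - heisP γ₁ φ₁ s).1
          - 2 * (heisRho γ₁ γ₂ φ₁ φ₂ lam (h, s)).1
            * (heisP γ₂ φ₂ (lam s) - heisP γ₁ φ₁ s).2.1) :=
  stmt_4_general tb htb γ₁ γ₂ φ₁ φ₂ Mγ Lγ Mφ Lφ hγ₁lip hγ₂lip hγ₁bd hγ₂bd hφ₁lip hφ₂lip hφ₁bd hφ₂bd
    hγ₁0 hγ₁t hγ₂0 hγ₂t hφ0 hφt zeta hzdef hzeta lam hlam_bij hlam_sol hlam0 hlamt
end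
end

section
/- Assume D is lenticular (γ₁ convex and γ₂ concave on I) and ζ < (√129 − 11)/4. Then the map F : Q → ℝ², F(h,s) = (ρ₂(h,s), ρ₃(h,s) − 2ρ₁(h,s)ρ₂(h,s)) — i.e. the composition of ρ with the projection π(x,y,t) = (y, t−2xy) onto W along the integral curves of X — is a bijection from Q = (0,1)×I onto D. -/
open Set

noncomputable section

/-- The lenticular domain `D = {(y,t) : t ∈ (0,t̄), γ₁(t) < y < γ₂(t)}`. -/
def lensD (γ₁ γ₂ : ℝ → ℝ) (tb : ℝ) : Set (ℝ × ℝ) :=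
  {w | w.2 ∈ Set.Ioo 0 tb ∧ γ₁ w.2 < w.1 ∧ w.1 < γ₂ w.2}

/-!
On the ruling over `s`, the first coordinate `y` of `F` runs from `γ₁ s` to `γ₂ (λ s)`. For fixed
`y`, clamp `y` into that ruling and let `T y s = s - timeShift y s` be the second coordinate of `F`
at the clamped point: `T y s = s` when `y ≤ γ₁ s` and, by `Q_φ(s, λ s) = 0`, `T y s = λ s` when
`γ₂ (λ s) ≤ y`; the rulings over `0` and `t̄` are single points.

The equation `λ s = s - 2 (γ₂ (λ s) - γ₁ s)(φ₂ (λ s) + φ₁ s)` makes `λ` the identity plus a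
`2κ`-Lipschitz perturbation, `κ = 4 (Mγ Lφ + Mφ Lγ) ≤ ζ < 1/10`, so `λ` is `5/4`-Lipschitz and
`timeShift y` is `9κ`-Lipschitz. Hence each `T y` is strictly increasing and continuous on
`[0, t̄]` and fixes its endpoints. Injectivity of `F` follows, and surjectivity by the
intermediate value theorem: if `T y s = t` with `(y, t) ∈ D`, then `y` lies inside the ruling
over `s`, since otherwise `t = s` or `t = λ s` would put `(y, t)` outside `D`.
-/

open NNReal

theorem abs_sq_div_sub_sq_div_le {w₁ w₂ c₁ c₂ : ℝ} (hw₁ : 0 ≤ w₁) (hwc₁ : w₁ ≤ c₁)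
    (hw₂ : 0 ≤ w₂) (hwc₂ : w₂ ≤ c₂) :
    |w₁ ^ 2 / c₁ - w₂ ^ 2 / c₂| ≤ 2 * |w₁ - w₂| + |c₁ - c₂| := by
  -- `w / c * c = w` survives `c = 0` because then `w = 0` and `0 / 0 = 0`.
  have ratio : ∀ {w c : ℝ}, 0 ≤ w → w ≤ c → 0 ≤ w / c ∧ w / c ≤ 1 ∧ w / c * c = w := by
    intro w c hw hwc
    rcases (hw.trans hwc).eq_or_lt with hc | hc
    · subst hc; simp [le_antisymm hwc hw]
    · exact ⟨div_nonneg hw hc.le, div_le_one_of_le₀ hwc hc.le, div_mul_cancel₀ w hc.ne'⟩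
  obtain ⟨hr₁, hr₁', hrc₁⟩ := ratio hw₁ hwc₁
  obtain ⟨hr₂, hr₂', hrc₂⟩ := ratio hw₂ hwc₂
  set r₁ := w₁ / c₁
  set r₂ := w₂ / c₂
  have key : w₁ ^ 2 / c₁ - w₂ ^ 2 / c₂ = (r₁ + r₂) * (w₁ - w₂) - r₁ * r₂ * (c₁ - c₂) := by
    have e₁ : w₁ ^ 2 / c₁ = r₁ * w₁ := by ring
    have e₂ : w₂ ^ 2 / c₂ = r₂ * w₂ := by ring
    rw [e₁, e₂]
    linear_combination r₂ * hrc₁ - r₁ * hrc₂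
  rw [key]
  calc |(r₁ + r₂) * (w₁ - w₂) - r₁ * r₂ * (c₁ - c₂)|
      ≤ (r₁ + r₂) * |w₁ - w₂| + r₁ * r₂ * |c₁ - c₂| := by
        refine (abs_sub _ _).trans (le_of_eq ?_)
        rw [abs_mul, abs_mul, abs_of_nonneg (add_nonneg hr₁ hr₂),
          abs_of_nonneg (mul_nonneg hr₁ hr₂)]
    _ ≤ 2 * |w₁ - w₂| + |c₁ - c₂| := by
        have := mul_le_one₀ hr₁' hr₂ hr₂'
        nlinarith [abs_nonneg (w₁ - w₂), abs_nonneg (c₁ - c₂)]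

namespace LipschitzOnWith

variable {α R : Type*} [PseudoMetricSpace α] [SeminormedRing R] {s : Set α}

theorem const_mul {f : α → R} {Kf : ℝ≥0} (hf : LipschitzOnWith Kf f s) (a : R) :
    LipschitzOnWith (‖a‖₊ * Kf) (fun x => a * f x) s :=
  (lipschitzWith_smul a).comp_lipschitzOnWith hf

theorem mul_of_norm_le {f g : α → R} {Kf Kg Mf Mg : ℝ≥0} (hf : LipschitzOnWith Kf f s)
    (hg : LipschitzOnWith Kg g s)
    (hfM : ∀ x ∈ s, ‖f x‖ ≤ Mf) (hgM : ∀ x ∈ s, ‖g x‖ ≤ Mg) :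
    LipschitzOnWith (Mf * Kg + Mg * Kf) (fun x => f x * g x) s := by
  refine LipschitzOnWith.of_dist_le_mul fun x hx y hy => ?_
  have hfd := hf.dist_le_mul x hx y hy
  have hgd := hg.dist_le_mul x hx y hy
  rw [dist_eq_norm] at hfd hgd ⊢
  calc ‖f x * g x - f y * g y‖ = ‖f x * (g x - g y) + (f x - f y) * g y‖ := by noncomm_ring
    _ ≤ ‖f x‖ * ‖g x - g y‖ + ‖f x - f y‖ * ‖g y‖ :=
      (norm_add_le _ _).trans (add_le_add (norm_mul_le _ _) (norm_mul_le _ _))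
    _ ≤ Mf * (Kg * dist x y) + Kf * dist x y * Mg := by
      gcongr
      exacts [hfM x hx, hgM y hy]
    _ = ↑(Mf * Kg + Mg * Kf) * dist x y := by push_cast; ring

theorem max_min_zero {p c : α → ℝ} {K : ℝ≥0} (hp : LipschitzOnWith K p s)
    (hc : LipschitzOnWith K c s) :
    LipschitzOnWith K (fun x => max (min (p x) (c x)) 0) s := by
  simpa [Function.comp_def] using ((LipschitzWith.prod_fst.min LipschitzWith.prod_snd).max_const
    (0 : ℝ)).comp_lipschitzOnWith (hp.prodMk hc)

theorem sq_div {w c : α → ℝ} {Kw Kc : ℝ≥0} (hw : LipschitzOnWith Kw w s)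
    (hc : LipschitzOnWith Kc c s)
    (hw₀ : ∀ x ∈ s, 0 ≤ w x) (hwc : ∀ x ∈ s, w x ≤ c x) :
    LipschitzOnWith (2 * Kw + Kc) (fun x => w x ^ 2 / c x) s := by
  refine LipschitzOnWith.of_dist_le_mul fun x hx y hy => ?_
  have hwd := hw.dist_le_mul x hx y hy
  have hcd := hc.dist_le_mul x hx y hy
  rw [Real.dist_eq] at hwd hcd ⊢
  calc _ ≤ 2 * |w x - w y| + |c x - c y| :=
        abs_sq_div_sub_sq_div_le (hw₀ x hx) (hwc x hx) (hw₀ y hy) (hwc y hy)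
    _ ≤ 2 * (Kw * dist x y) + Kc * dist x y := by gcongr
    _ = ↑(2 * Kw + Kc) * dist x y := by push_cast; ring

theorem of_eq_sub {u v : Set ℝ} {l : ℝ → ℝ} {G : ℝ × ℝ → ℝ} {K L : ℝ≥0}
    (hG : LipschitzOnWith K G (u ×ˢ v)) (hl : MapsTo l u v)
    (heq : ∀ x ∈ u, l x = x - G (x, l x)) (hKL : 1 + K * L ≤ L) :
    LipschitzOnWith L l u := by
  refine LipschitzOnWith.of_dist_le_mul fun x hx y hy => ?_
  have hGd := hG.dist_le_mul (x, l x) ⟨hx, hl hx⟩ (y, l y) ⟨hy, hl hy⟩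
  simp only [Prod.dist_eq, Real.dist_eq] at hGd
  rw [Real.dist_eq, Real.dist_eq]
  have hKL' : (1 : ℝ) + K * L ≤ L := by exact_mod_cast hKL
  have hK : (0 : ℝ) ≤ K := K.2
  have hL : (1 : ℝ) ≤ L := by nlinarith [mul_nonneg hK L.2]
  have hdl : |l x - l y| ≤ |x - y| + K * max |x - y| |l x - l y| := by
    calc |l x - l y| = |(x - y) - (G (x, l x) - G (y, l y))| := by
          congr 1; linarith [heq x hx, heq y hy]
      _ ≤ |x - y| + |G (x, l x) - G (y, l y)| := abs_sub _ _
      _ ≤ _ := by gcongr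
  rcases le_total |x - y| |l x - l y| with h | h
  · rw [max_eq_right h] at hdl
    nlinarith [mul_le_mul_of_nonneg_left hdl L.2, abs_nonneg (l x - l y)]
  · rw [max_eq_left h] at hdl
    nlinarith [abs_nonneg (x - y)]

end LipschitzOnWith

theorem strictMonoOn_sub_of_lipschitzOnWith {s : Set ℝ} {P : ℝ → ℝ} {K : ℝ≥0} (hK : K < 1)
    (hP : LipschitzOnWith K P s) : StrictMonoOn (fun x => x - P x) s := by
  intro x hx y hy hxy
  have h := hP.le_add_mul hy hx
  have hK' : (K : ℝ) < 1 := hK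
  rw [Real.dist_eq, abs_of_pos (sub_pos.2 hxy)] at h
  nlinarith

theorem Set.BijOn.mapsTo_Ioo {α : Type*} [LinearOrder α] {a b : α} {f : α → α}
    (hf : BijOn f (Icc a b) (Icc a b)) (ha : f a = a) (hb : f b = b) :
    MapsTo f (Ioo a b) (Ioo a b) := fun x hx => by
  have hxI := Ioo_subset_Icc_self hx
  have hab := hx.1.le.trans hx.2.le
  refine ⟨(hf.mapsTo hxI).1.lt_of_ne fun h => hx.1.ne ?_,
    (hf.mapsTo hxI).2.lt_of_ne fun h => hx.2.ne ?_⟩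
  · exact hf.injOn (left_mem_Icc.2 hab) hxI (ha.trans h)
  · exact hf.injOn hxI (right_mem_Icc.2 hab) (h.trans hb.symm)

section Sweep

variable {tb : ℝ} {γ₁ γ₂ lam : ℝ → ℝ} {T : ℝ → ℝ → ℝ}

def sweepMap (γ₁ γ₂ lam : ℝ → ℝ) (T : ℝ → ℝ → ℝ) (w : ℝ × ℝ) : ℝ × ℝ :=
  ((1 - w.1) * γ₁ w.2 + w.1 * γ₂ (lam w.2), T ((1 - w.1) * γ₁ w.2 + w.1 * γ₂ (lam w.2)) w.2)

theorem injOn_sweepMap (hgap : ∀ s ∈ Ioo 0 tb, γ₁ s < γ₂ (lam s))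
    (hT : ∀ y, StrictMonoOn (T y) (Icc 0 tb)) :
    InjOn (sweepMap γ₁ γ₂ lam T) (Ioo 0 1 ×ˢ Ioo 0 tb) := by
  rintro ⟨h₁, s₁⟩ ⟨-, hs₁⟩ ⟨h₂, s₂⟩ ⟨-, hs₂⟩ heq
  simp only [sweepMap, Prod.mk.injEq] at heq
  obtain ⟨hy, ht⟩ := heq
  rw [hy] at ht
  obtain rfl : s₁ = s₂ := (hT _).injOn (Ioo_subset_Icc_self hs₁) (Ioo_subset_Icc_self hs₂) ht
  have hc : γ₂ (lam s₁) - γ₁ s₁ ≠ 0 := (sub_pos.2 (hgap s₁ hs₁)).ne'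
  have hh : (h₁ - h₂) * (γ₂ (lam s₁) - γ₁ s₁) = 0 := by linear_combination hy
  simp only [mul_eq_zero, hc, or_false, sub_eq_zero] at hh
  rw [hh]

theorem mapsTo_sweepMap (hgap : ∀ s ∈ Ioo 0 tb, γ₁ s < γ₂ (lam s))
    (hlam : SurjOn lam (Icc 0 tb) (Icc 0 tb))
    (hT : ∀ y, StrictMonoOn (T y) (Icc 0 tb)) (hT₀ : ∀ y, T y 0 = 0) (hT_tb : ∀ y, T y tb = tb)
    (hT_lower : ∀ y s, y ≤ γ₁ s → T y s = s)
    (hT_upper : ∀ y, ∀ s ∈ Icc 0 tb, γ₂ (lam s) ≤ y → T y s = lam s) :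
    MapsTo (sweepMap γ₁ γ₂ lam T) (Ioo 0 1 ×ˢ Ioo 0 tb) (lensD γ₁ γ₂ tb) := by
  rintro ⟨h, s⟩ ⟨⟨h₀, h₁⟩, hs⟩
  set y := (1 - h) * γ₁ s + h * γ₂ (lam s)
  have hgs := hgap s hs
  have hy₁ : γ₁ s < y := by nlinarith
  have hy₂ : y < γ₂ (lam s) := by nlinarith
  have hsI := Ioo_subset_Icc_self hs
  have ht : T y s ∈ Ioo 0 tb := by
    constructor
    · simpa [hT₀] using hT y (left_mem_Icc.2 (hs.1.le.trans hs.2.le)) hsI hs.1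
    · simpa [hT_tb] using hT y hsI (right_mem_Icc.2 (hs.1.le.trans hs.2.le)) hs.2
  have htI := Ioo_subset_Icc_self ht
  refine ⟨ht, show γ₁ (T y s) < y from ?_, show y < γ₂ (T y s) from ?_⟩
  · by_contra! hle
    have hts : T y s = s := (hT y).injOn htI hsI (hT_lower y _ hle)
    rw [hts] at hle
    linarith
  · by_contra! hle
    obtain ⟨s', hs', hls'⟩ := hlam htI
    rw [← hls'] at hle
    have hs's : s' = s := (hT y).injOn hs' hsI ((hT_upper y s' hs' hle).trans hls')
    rw [hs's] at hle
    linarith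

theorem surjOn_sweepMap (hT : ∀ y, StrictMonoOn (T y) (Icc 0 tb))
    (hT_cont : ∀ y, ContinuousOn (T y) (Icc 0 tb)) (hT₀ : ∀ y, T y 0 = 0)
    (hT_tb : ∀ y, T y tb = tb)
    (hT_lower : ∀ y s, y ≤ γ₁ s → T y s = s)
    (hT_upper : ∀ y, ∀ s ∈ Icc 0 tb, γ₂ (lam s) ≤ y → T y s = lam s) :
    SurjOn (sweepMap γ₁ γ₂ lam T) (Ioo 0 1 ×ˢ Ioo 0 tb) (lensD γ₁ γ₂ tb) := by
  rintro ⟨y, t⟩ ⟨ht, hy₁, hy₂⟩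
  obtain ⟨s, hs, hTs⟩ : t ∈ T y '' Icc 0 tb :=
    intermediate_value_Icc (ht.1.le.trans ht.2.le) (hT_cont y)
      (by rw [hT₀, hT_tb]; exact Ioo_subset_Icc_self ht)
  have hsIoo : s ∈ Ioo 0 tb := by
    refine ⟨hs.1.lt_of_ne ?_, hs.2.lt_of_ne ?_⟩ <;> rintro rfl
    · exact ht.1.ne (hTs ▸ hT₀ y).symm
    · exact ht.2.ne (hTs ▸ hT_tb y)
  have hlo : γ₁ s < y := by
    by_contra! h
    rw [hT_lower y s h] at hTs
    subst hTs
    linarith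
  have hup : y < γ₂ (lam s) := by
    by_contra! h
    rw [hT_upper y s hs h] at hTs
    rw [← hTs] at hy₂
    linarith
  have hc : 0 < γ₂ (lam s) - γ₁ s := by linarith
  refine ⟨((y - γ₁ s) / (γ₂ (lam s) - γ₁ s), s),
    ⟨⟨div_pos (by linarith) hc, (div_lt_one hc).2 (by linarith)⟩, hsIoo⟩, ?_⟩
  have hy : (1 - (y - γ₁ s) / (γ₂ (lam s) - γ₁ s)) * γ₁ s
      + (y - γ₁ s) / (γ₂ (lam s) - γ₁ s) * γ₂ (lam s) = y := by
    field_simp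
    ring
  simp only [sweepMap, hy, hTs]

theorem bijOn_sweepMap (hgap : ∀ s ∈ Ioo 0 tb, γ₁ s < γ₂ (lam s))
    (hlam : SurjOn lam (Icc 0 tb) (Icc 0 tb)) (hT : ∀ y, StrictMonoOn (T y) (Icc 0 tb))
    (hT_cont : ∀ y, ContinuousOn (T y) (Icc 0 tb)) (hT₀ : ∀ y, T y 0 = 0)
    (hT_tb : ∀ y, T y tb = tb) (hT_lower : ∀ y s, y ≤ γ₁ s → T y s = s)
    (hT_upper : ∀ y, ∀ s ∈ Icc 0 tb, γ₂ (lam s) ≤ y → T y s = lam s) :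
    BijOn (sweepMap γ₁ γ₂ lam T) (Ioo 0 1 ×ˢ Ioo 0 tb) (lensD γ₁ γ₂ tb) :=
  ⟨mapsTo_sweepMap hgap hlam hT hT₀ hT_tb hT_lower hT_upper, injOn_sweepMap hgap hT,
    surjOn_sweepMap hT hT_cont hT₀ hT_tb hT_lower hT_upper⟩

end Sweep

section Lens

variable {γ₁ γ₂ φ₁ φ₂ lam : ℝ → ℝ} {y s : ℝ}

def clampOffset (γ₁ γ₂ lam : ℝ → ℝ) (y s : ℝ) : ℝ :=
  max (min (y - γ₁ s) (γ₂ (lam s) - γ₁ s)) 0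

def timeShift (γ₁ γ₂ φ₁ φ₂ lam : ℝ → ℝ) (y s : ℝ) : ℝ :=
  4 * (φ₁ s * clampOffset γ₁ γ₂ lam y s)
    + 2 * (clampOffset γ₁ γ₂ lam y s ^ 2 / (γ₂ (lam s) - γ₁ s) * (φ₂ (lam s) - φ₁ s))

theorem sub_timeShift_of_le_lower (h : y ≤ γ₁ s) : s - timeShift γ₁ γ₂ φ₁ φ₂ lam y s = s := by
  simp [timeShift, clampOffset, min_le_of_left_le (sub_nonpos.2 h)]

theorem sub_timeShift_of_gap_nonpos (h : γ₂ (lam s) ≤ γ₁ s) :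
    s - timeShift γ₁ γ₂ φ₁ φ₂ lam y s = s := by
  simp [timeShift, clampOffset, min_le_of_right_le (sub_nonpos.2 h)]

theorem sub_timeShift_of_upper_le (hgap : γ₁ s ≤ γ₂ (lam s))
    (hQ : Qphi γ₁ γ₂ φ₁ φ₂ s (lam s) = 0) (h : γ₂ (lam s) ≤ y) :
    s - timeShift γ₁ γ₂ φ₁ φ₂ lam y s = lam s := by
  have hw : clampOffset γ₁ γ₂ lam y s = γ₂ (lam s) - γ₁ s := by
    rw [clampOffset, min_eq_right (by linarith), max_eq_left (by linarith)]
  rw [timeShift, hw, sq, mul_self_div_self]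
  unfold Qphi at hQ
  linear_combination -hQ

theorem proj_heisRho_eq_sweepMap {h : ℝ} (hgap : γ₁ s < γ₂ (lam s))
    (hQ : Qphi γ₁ γ₂ φ₁ φ₂ s (lam s) = 0) (hh : h ∈ Icc 0 1) :
    ((heisRho γ₁ γ₂ φ₁ φ₂ lam (h, s)).2.1,
      (heisRho γ₁ γ₂ φ₁ φ₂ lam (h, s)).2.2
        - 2 * (heisRho γ₁ γ₂ φ₁ φ₂ lam (h, s)).1 * (heisRho γ₁ γ₂ φ₁ φ₂ lam (h, s)).2.1)
      = sweepMap γ₁ γ₂ lam (fun y s => s - timeShift γ₁ γ₂ φ₁ φ₂ lam y s) (h, s) := by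
  have hc : 0 < γ₂ (lam s) - γ₁ s := sub_pos.2 hgap
  have hw : clampOffset γ₁ γ₂ lam ((1 - h) * γ₁ s + h * γ₂ (lam s)) s
      = h * (γ₂ (lam s) - γ₁ s) := by
    rw [clampOffset, min_eq_left (by nlinarith [hh.2]), max_eq_left (by nlinarith [hh.1])]
    ring
  simp only [heisRho, heisP, sweepMap, timeShift, hw, Prod.smul_mk, Prod.mk_add_mk,
    smul_eq_mul, Prod.mk.injEq, true_and]
  unfold Qphi at hQ
  field_simp
  linear_combination h * hQ

end Lens

theorem mul_add_mul_lt_of_zeta_lt {Mγ Lγ Mφ Lφ : ℝ≥0}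
    (h : 4 * ((Mγ : ℝ) + Lγ) * ((Mφ : ℝ) + Lφ) < (Real.sqrt 129 - 11) / 4) :
    4 * (Mγ * Lφ + Mφ * Lγ) < 1 / 10 := by
  have : √129 < 11.4 := (Real.sqrt_lt' (by norm_num)).2 (by norm_num)
  rw [← NNReal.coe_lt_coe]
  push_cast
  nlinarith [mul_nonneg Mγ.2 Mφ.2, mul_nonneg Lγ.2 Lφ.2]

section Lipschitz

variable {S : Set ℝ} {γ₁ γ₂ φ₁ φ₂ lam : ℝ → ℝ} {Mγ Lγ Mφ Lφ : ℝ≥0}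

theorem lipschitzOnWith_of_Qphi_eq_zero
    (hγ₁ : LipschitzOnWith Lγ γ₁ S) (hγ₂ : LipschitzOnWith Lγ γ₂ S)
    (hγ₁M : ∀ s ∈ S, |γ₁ s| ≤ Mγ) (hγ₂M : ∀ s ∈ S, |γ₂ s| ≤ Mγ)
    (hφ₁ : LipschitzOnWith Lφ φ₁ S) (hφ₂ : LipschitzOnWith Lφ φ₂ S)
    (hφ₁M : ∀ s ∈ S, |φ₁ s| ≤ Mφ) (hφ₂M : ∀ s ∈ S, |φ₂ s| ≤ Mφ)
    (hlamS : MapsTo lam S S) (hQ : ∀ s ∈ S, Qphi γ₁ γ₂ φ₁ φ₂ s (lam s) = 0)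
    (hκ : 4 * (Mγ * Lφ + Mφ * Lγ) ≤ 1 / 10) :
    LipschitzOnWith (5 / 4) lam S := by
  have hfst : MapsTo Prod.fst (S ×ˢ S) S := fun p hp => hp.1
  have hsnd : MapsTo Prod.snd (S ×ˢ S) S := fun p hp => hp.2
  have hgap := (hγ₂.comp LipschitzWith.prod_snd.lipschitzOnWith hsnd).sub
    (hγ₁.comp LipschitzWith.prod_fst.lipschitzOnWith hfst)
  have hsum := (hφ₁.comp LipschitzWith.prod_fst.lipschitzOnWith hfst).add
    (hφ₂.comp LipschitzWith.prod_snd.lipschitzOnWith hsnd)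
  have hgapM : ∀ p ∈ S ×ˢ S, ‖γ₂ p.2 - γ₁ p.1‖ ≤ (2 * Mγ : ℝ≥0) := fun p hp => by
    have := (abs_sub _ _).trans (add_le_add (hγ₂M _ hp.2) (hγ₁M _ hp.1))
    push_cast; rw [Real.norm_eq_abs]; linarith
  have hsumM : ∀ p ∈ S ×ˢ S, ‖φ₁ p.1 + φ₂ p.2‖ ≤ (2 * Mφ : ℝ≥0) := fun p hp => by
    have := (abs_add_le _ _).trans (add_le_add (hφ₁M _ hp.1) (hφ₂M _ hp.2))
    push_cast; rw [Real.norm_eq_abs]; linarith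
  have hG := (hgap.mul_of_norm_le hsum hgapM hsumM).const_mul 2
  refine LipschitzOnWith.of_eq_sub hG hlamS (fun s hs => ?_) ?_
  · have := hQ s hs
    unfold Qphi at this
    simp only [Function.comp_apply]
    linear_combination this
  · rw [← NNReal.coe_le_coe] at hκ ⊢
    push_cast at hκ ⊢
    norm_num
    nlinarith

theorem lipschitzOnWith_timeShift
    (hγ₁ : LipschitzOnWith Lγ γ₁ S) (hγ₂ : LipschitzOnWith Lγ γ₂ S)
    (hγ₁M : ∀ s ∈ S, |γ₁ s| ≤ Mγ) (hγ₂M : ∀ s ∈ S, |γ₂ s| ≤ Mγ)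
    (hφ₁ : LipschitzOnWith Lφ φ₁ S) (hφ₂ : LipschitzOnWith Lφ φ₂ S)
    (hφ₁M : ∀ s ∈ S, |φ₁ s| ≤ Mφ) (hφ₂M : ∀ s ∈ S, |φ₂ s| ≤ Mφ)
    (hlam : LipschitzOnWith (5 / 4) lam S) (hlamS : MapsTo lam S S)
    (hgap : ∀ s ∈ S, γ₁ s ≤ γ₂ (lam s)) (y : ℝ) :
    LipschitzOnWith (9 * (4 * (Mγ * Lφ + Mφ * Lγ))) (timeShift γ₁ γ₂ φ₁ φ₂ lam y) S := by
  have hc := (hγ₂.comp hlam hlamS).sub hγ₁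
  have hw : LipschitzOnWith (Lγ * (5 / 4) + Lγ) (clampOffset γ₁ γ₂ lam y) S :=
    (((LipschitzWith.const y).lipschitzOnWith.sub hγ₁).weaken (by
      rw [zero_add]; exact le_add_of_nonneg_left bot_le)).max_min_zero hc
  have hw₀ : ∀ s ∈ S, 0 ≤ clampOffset γ₁ γ₂ lam y s := fun s _ => le_max_right _ _
  have hwc : ∀ s ∈ S, clampOffset γ₁ γ₂ lam y s ≤ γ₂ (lam s) - γ₁ s := fun s hs =>
    max_le (min_le_right _ _) (sub_nonneg.2 (hgap s hs))
  have hcM : ∀ s ∈ S, γ₂ (lam s) - γ₁ s ≤ 2 * Mγ := fun s hs => by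
    have := (le_abs_self _).trans ((abs_sub _ _).trans
      (add_le_add (hγ₂M _ (hlamS hs)) (hγ₁M _ hs)))
    linarith
  have hwM : ∀ s ∈ S, ‖clampOffset γ₁ γ₂ lam y s‖ ≤ (2 * Mγ : ℝ≥0) := fun s hs => by
    rw [Real.norm_eq_abs, abs_of_nonneg (hw₀ s hs)]; push_cast
    exact (hwc s hs).trans (hcM s hs)
  have hg := hw.sq_div hc hw₀ hwc
  have hgM : ∀ s ∈ S, ‖clampOffset γ₁ γ₂ lam y s ^ 2 / (γ₂ (lam s) - γ₁ s)‖
      ≤ (2 * Mγ : ℝ≥0) := fun s hs => by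
    have hc₀ := (hw₀ s hs).trans (hwc s hs)
    rw [Real.norm_eq_abs, abs_of_nonneg (div_nonneg (sq_nonneg _) hc₀)]
    refine (div_le_of_le_mul₀ hc₀ (hw₀ s hs) ?_).trans (hwM s hs |>.trans_eq' ?_)
    · rw [sq]; exact mul_le_mul_of_nonneg_left (hwc s hs) (hw₀ s hs)
    · rw [Real.norm_eq_abs, abs_of_nonneg (hw₀ s hs)]
  have hvu := (hφ₂.comp hlam hlamS).sub hφ₁
  have hvuM : ∀ s ∈ S, ‖φ₂ (lam s) - φ₁ s‖ ≤ (2 * Mφ : ℝ≥0) := fun s hs => by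
    have := (abs_sub _ _).trans (add_le_add (hφ₂M _ (hlamS hs)) (hφ₁M _ hs))
    push_cast; rw [Real.norm_eq_abs]; linarith
  refine (((hφ₁.mul_of_norm_le hw hφ₁M hwM).const_mul 4).add
    ((hg.mul_of_norm_le hvu hgM hvuM).const_mul 2)).weaken ?_
  rw [← NNReal.coe_le_coe]
  push_cast
  norm_num
  nlinarith [mul_nonneg Mγ.2 Lφ.2, mul_nonneg Mφ.2 Lγ.2]

end Lipschitz

theorem stmt_5_general (tb : ℝ)
    (γ₁ γ₂ φ₁ φ₂ : ℝ → ℝ) (Mγ Lγ Mφ Lφ : NNReal)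
    (hγ₁lip : LipschitzOnWith Lγ γ₁ (Set.Icc 0 tb))
    (hγ₂lip : LipschitzOnWith Lγ γ₂ (Set.Icc 0 tb))
    (hγ₁bd : ∀ s ∈ Set.Icc 0 tb, |γ₁ s| ≤ (Mγ : ℝ))
    (hγ₂bd : ∀ s ∈ Set.Icc 0 tb, |γ₂ s| ≤ (Mγ : ℝ))
    (hφ₁lip : LipschitzOnWith Lφ φ₁ (Set.Icc 0 tb))
    (hφ₂lip : LipschitzOnWith Lφ φ₂ (Set.Icc 0 tb))
    (hφ₁bd : ∀ s ∈ Set.Icc 0 tb, |φ₁ s| ≤ (Mφ : ℝ))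
    (hφ₂bd : ∀ s ∈ Set.Icc 0 tb, |φ₂ s| ≤ (Mφ : ℝ))
    (hsign : ∀ t ∈ Set.Ioo 0 tb, γ₁ t < 0 ∧ 0 < γ₂ t)
    (hγ₁0 : γ₁ 0 = 0) (hγ₁t : γ₁ tb = 0) (hγ₂0 : γ₂ 0 = 0) (hγ₂t : γ₂ tb = 0)
    (zeta : ℝ) (hzdef : zeta = 4 * ((Mγ : ℝ) + (Lγ : ℝ)) * ((Mφ : ℝ) + (Lφ : ℝ)))
    (hzeta : zeta < (Real.sqrt 129 - 11) / 4)
    (lam : ℝ → ℝ)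
    (hlam_bij : Set.BijOn lam (Set.Icc 0 tb) (Set.Icc 0 tb))
    (hlam_sol : ∀ s ∈ Set.Icc 0 tb, Qphi γ₁ γ₂ φ₁ φ₂ s (lam s) = 0)
    (hlam0 : lam 0 = 0) (hlamt : lam tb = tb)
    :
    Set.BijOn
      (fun w : ℝ × ℝ =>
        ((heisRho γ₁ γ₂ φ₁ φ₂ lam w).2.1,
         (heisRho γ₁ γ₂ φ₁ φ₂ lam w).2.2
           - 2 * (heisRho γ₁ γ₂ φ₁ φ₂ lam w).1 * (heisRho γ₁ γ₂ φ₁ φ₂ lam w).2.1))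
      (Set.Ioo (0:ℝ) 1 ×ˢ Set.Ioo (0:ℝ) tb) (lensD γ₁ γ₂ tb) := by
  have hκ := mul_add_mul_lt_of_zeta_lt (hzdef ▸ hzeta)
  have hgap : ∀ s ∈ Ioo 0 tb, γ₁ s < γ₂ (lam s) := fun s hs =>
    (hsign s hs).1.trans (hsign _ (hlam_bij.mapsTo_Ioo hlam0 hlamt hs)).2
  have hgap₀ : γ₂ (lam 0) = γ₁ 0 := by rw [hlam0, hγ₁0, hγ₂0]
  have hgap_tb : γ₂ (lam tb) = γ₁ tb := by rw [hlamt, hγ₁t, hγ₂t]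
  have hgapI : ∀ s ∈ Icc 0 tb, γ₁ s ≤ γ₂ (lam s) := fun s hs => by
    rcases eq_endpoints_or_mem_Ioo_of_mem_Icc hs with rfl | rfl | hs
    exacts [hgap₀.ge, hgap_tb.ge, (hgap s hs).le]
  have hlam := lipschitzOnWith_of_Qphi_eq_zero hγ₁lip hγ₂lip hγ₁bd hγ₂bd hφ₁lip hφ₂lip hφ₁bd
    hφ₂bd hlam_bij.mapsTo hlam_sol hκ.le
  have hP := lipschitzOnWith_timeShift hγ₁lip hγ₂lip hγ₁bd hγ₂bd hφ₁lip hφ₂lip hφ₁bd hφ₂bd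
    hlam hlam_bij.mapsTo hgapI
  have h9κ : 9 * (4 * (Mγ * Lφ + Mφ * Lγ)) < 1 := by
    rw [← NNReal.coe_lt_coe] at hκ ⊢; push_cast at hκ ⊢; linarith
  refine (bijOn_sweepMap hgap hlam_bij.surjOn
    (fun y => strictMonoOn_sub_of_lipschitzOnWith h9κ (hP y))
    (fun y => continuousOn_id.sub (hP y).continuousOn)
    (fun _ => sub_timeShift_of_gap_nonpos hgap₀.le)
    (fun _ => sub_timeShift_of_gap_nonpos hgap_tb.le)
    (fun _ _ => sub_timeShift_of_le_lower)
    (fun _ s hs => sub_timeShift_of_upper_le (hgapI s hs) (hlam_sol s hs))).congr ?_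
  rintro ⟨h, s⟩ ⟨hh, hs⟩
  exact (proj_heisRho_eq_sweepMap (hgap s hs) (hlam_sol s (Ioo_subset_Icc_self hs))
    (Ioo_subset_Icc_self hh)).symm

/-- the projection of the ruled surface along `X` is a bijection
from `Q = (0,1) × I` onto the lenticular domain `D`. -/
theorem stmt_5 (tb : ℝ) (htb : 0 < tb)
    (γ₁ γ₂ φ₁ φ₂ : ℝ → ℝ) (Mγ Lγ Mφ Lφ : NNReal)
    (hγ₁lip : LipschitzOnWith Lγ γ₁ (Set.Icc 0 tb))
    (hγ₂lip : LipschitzOnWith Lγ γ₂ (Set.Icc 0 tb))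
    (hγ₁bd : ∀ s ∈ Set.Icc 0 tb, |γ₁ s| ≤ (Mγ : ℝ))
    (hγ₂bd : ∀ s ∈ Set.Icc 0 tb, |γ₂ s| ≤ (Mγ : ℝ))
    (hφ₁lip : LipschitzOnWith Lφ φ₁ (Set.Icc 0 tb))
    (hφ₂lip : LipschitzOnWith Lφ φ₂ (Set.Icc 0 tb))
    (hφ₁bd : ∀ s ∈ Set.Icc 0 tb, |φ₁ s| ≤ (Mφ : ℝ))
    (hφ₂bd : ∀ s ∈ Set.Icc 0 tb, |φ₂ s| ≤ (Mφ : ℝ))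
    (hsign : ∀ t ∈ Set.Ioo 0 tb, γ₁ t < 0 ∧ 0 < γ₂ t)
    (hγ₁0 : γ₁ 0 = 0) (hγ₁t : γ₁ tb = 0) (hγ₂0 : γ₂ 0 = 0) (hγ₂t : γ₂ tb = 0)
    (hφ0 : φ₁ 0 = φ₂ 0) (hφt : φ₁ tb = φ₂ tb)
    (hconv : ConvexOn ℝ (Set.Icc 0 tb) γ₁)
    (hconc : ConcaveOn ℝ (Set.Icc 0 tb) γ₂)
    (zeta : ℝ) (hzdef : zeta = 4 * ((Mγ : ℝ) + (Lγ : ℝ)) * ((Mφ : ℝ) + (Lφ : ℝ)))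
    (hzeta : zeta < (Real.sqrt 129 - 11) / 4)
    (lam : ℝ → ℝ)
    (hlam_bij : Set.BijOn lam (Set.Icc 0 tb) (Set.Icc 0 tb))
    (hlam_mono : StrictMonoOn lam (Set.Icc 0 tb))
    (hlam_sol : ∀ s ∈ Set.Icc 0 tb, Qphi γ₁ γ₂ φ₁ φ₂ s (lam s) = 0)
    (hlam0 : lam 0 = 0) (hlamt : lam tb = tb)
    :
    Set.BijOn
      (fun w : ℝ × ℝ =>
        ((heisRho γ₁ γ₂ φ₁ φ₂ lam w).2.1,
         (heisRho γ₁ γ₂ φ₁ φ₂ lam w).2.2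
           - 2 * (heisRho γ₁ γ₂ φ₁ φ₂ lam w).1 * (heisRho γ₁ γ₂ φ₁ φ₂ lam w).2.1))
      (Set.Ioo (0:ℝ) 1 ×ˢ Set.Ioo (0:ℝ) tb) (lensD γ₁ γ₂ tb) :=
  stmt_5_general tb γ₁ γ₂ φ₁ φ₂ Mγ Lγ Mφ Lφ hγ₁lip hγ₂lip hγ₁bd hγ₂bd hφ₁lip hφ₂lip hφ₁bd hφ₂bd
    hsign hγ₁0 hγ₁t hγ₂0 hγ₂t zeta hzdef hzeta lam hlam_bij hlam_sol hlam0 hlamt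
end
end

section
/- Assume D is lenticular (γ₁ convex and γ₂ concave on I) and ζ < (√129 − 11)/4. Then there exists a Lipschitz continuous function u : D̄ → ℝ such that: (i) R_φ = ρ(Q) coincides with the left intrinsic graph S_u = {(u(y,t), y, t+2y·u(y,t)) : (y,t) ∈ D}; (ii) u = φ on ∂D. -/
/-!
Over the height `y`, the segment of the ruling joining `p₁(s)` to `p₂(λ s)` passes through the
point with graph coordinates `(xCoord y s, y, tCoord y s)`. The smallness of `ζ` makes
`tCoord y - id` a `4/5`-Lipschitz perturbation of the identity fixing `0` and `t̄`, so each
`(y, t)` of the lens lies on exactly one segment `s = σ(y, t)`, and `u(y, t) = xCoord y σ(y, t)`.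
Near the tips of the lens the slope `height / width` of a segment is not Lipschitz; what saves
the Lipschitz bound for `u` is that, by the concavity of `γ₂`, the width degenerates only
linearly, while the jump `φ₂ ∘ λ - φ₁` vanishes at least linearly there.
-/

open Set

noncomputable section

open scoped NNReal

theorem abs_mul_sub_mul_le_of_le {a a' b b' A B δ ε : ℝ} (ha : |a - a'| ≤ δ) (hb : |b| ≤ B)
    (ha' : |a'| ≤ A) (hb' : |b - b'| ≤ ε) : |a * b - a' * b'| ≤ δ * B + A * ε := by
  have hδ : 0 ≤ δ := (abs_nonneg _).trans ha
  have hA : 0 ≤ A := (abs_nonneg _).trans ha'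
  calc |a * b - a' * b'| = |(a - a') * b + a' * (b - b')| := by ring_nf
    _ ≤ |a - a'| * |b| + |a'| * |b - b'| := by rw [← abs_mul, ← abs_mul]; exact abs_add_le _ _
    _ ≤ δ * B + A * ε := by gcongr

theorem abs_le_of_abs_sub_le_div_eleven {a b : ℝ} (h : |a - b| ≤ (|a| + |b|) / 11) :
    |a| ≤ 6 / 5 * |b| := by
  linarith [abs_sub_abs_le_abs_sub a b]

theorem abs_div_sub_div_mul_le {w d w' d' : ℝ} (hw : 0 ≤ w) (hwd : w ≤ d) (hw' : 0 ≤ w')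
    (hwd' : w' ≤ d') : |w / d - w' / d'| * d ≤ |w - w'| + |d - d'| := by
  rcases (hw.trans hwd).eq_or_lt with rfl | hd
  · simp only [mul_zero]; positivity
  rcases (hw'.trans hwd').eq_or_lt with rfl | hd'
  · obtain rfl : w' = 0 := le_antisymm hwd' hw'
    rw [div_zero, sub_zero, abs_of_nonneg (div_nonneg hw hd.le), div_mul_cancel₀ _ hd.ne',
      sub_zero, abs_of_nonneg hw]
    exact le_add_of_nonneg_right (abs_nonneg _)
  have hq : |w' / d'| ≤ 1 := by
    rw [abs_of_nonneg (div_nonneg hw' hd'.le)]; exact div_le_one_of_le₀ hwd' hd'.le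
  calc |w / d - w' / d'| * d = |(w / d - w' / d') * d| := by rw [abs_mul, abs_of_pos hd]
    _ = |(w - w') + w' / d' * (d' - d)| := by congr 1; field_simp; ring
    _ ≤ |w - w'| + |w' / d'| * |d' - d| := by rw [← abs_mul]; exact abs_add_le _ _
    _ ≤ |w - w'| + 1 * |d - d'| := by rw [abs_sub_comm d']; gcongr
    _ = |w - w'| + |d - d'| := by rw [one_mul]

theorem abs_mul_div_sub_mul_div_le {w d w' d' : ℝ} (hw : 0 ≤ w) (hwd : w ≤ d) (hw' : 0 ≤ w')
    (hwd' : w' ≤ d') : |w * (w / d) - w' * (w' / d')| ≤ 2 * |w - w'| + |d - d'| := by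
  have hq : |w / d| ≤ 1 := by
    rw [abs_of_nonneg (div_nonneg hw (hw.trans hwd))]; exact div_le_one_of_le₀ hwd (hw.trans hwd)
  have hq' : |w'| * |w / d - w' / d'| ≤ |w - w'| + |d - d'| := by
    have h := abs_div_sub_div_mul_le hw' hwd' hw hwd
    rw [abs_sub_comm (w' / d'), abs_sub_comm w', abs_sub_comm d'] at h
    rw [abs_of_nonneg hw', mul_comm]
    exact (mul_le_mul_of_nonneg_left hwd' (abs_nonneg _)).trans h
  calc |w * (w / d) - w' * (w' / d')| = |(w - w') * (w / d) + w' * (w / d - w' / d')| := by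
        ring_nf
    _ ≤ |w - w'| * |w / d| + |w'| * |w / d - w' / d'| := by
        rw [← abs_mul, ← abs_mul]; exact abs_add_le _ _
    _ ≤ |w - w'| * 1 + (|w - w'| + |d - d'|) := by gcongr
    _ = 2 * |w - w'| + |d - d'| := by ring

theorem abs_max_zero_min_sub_le (a b a' b' : ℝ) :
    |max 0 (min a b) - max 0 (min a' b')| ≤ max |a - a'| |b - b'| :=
  calc |max 0 (min a b) - max 0 (min a' b')| ≤ max |(0 : ℝ) - 0| |min a b - min a' b'| :=
        abs_max_sub_max_le_max _ _ _ _
    _ ≤ max |a - a'| |b - b'| := by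
        rw [sub_self, abs_zero, max_eq_right (abs_nonneg _)]
        exact abs_min_sub_min_le_max _ _ _ _

theorem ConcaveOn.mul_min_le {g : ℝ → ℝ} {tb τ : ℝ} (htb : 0 < tb)
    (hg : ConcaveOn ℝ (Icc 0 tb) g) (hg₀ : g 0 = 0) (hg₁ : g tb = 0) (hτ : τ ∈ Icc 0 tb) :
    2 * g (tb / 2) / tb * min τ (tb - τ) ≤ g τ := by
  have hmid : tb / 2 ∈ Icc 0 tb := ⟨by linarith, by linarith⟩
  rcases le_total τ (tb / 2) with hτ' | hτ'
  · have key : (2 * τ / tb) • g (tb / 2) + (1 - 2 * τ / tb) • g 0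
        ≤ g ((2 * τ / tb) • (tb / 2) + (1 - 2 * τ / tb) • 0) :=
      hg.2 hmid (left_mem_Icc.2 htb.le) (by have := hτ.1; positivity)
        (by rw [sub_nonneg, div_le_one htb]; linarith) (by ring)
    simp only [smul_eq_mul, hg₀, mul_zero, add_zero] at key
    rw [show 2 * τ / tb * (tb / 2) = τ by field_simp] at key
    rw [min_eq_left (by linarith)]
    calc 2 * g (tb / 2) / tb * τ = 2 * τ / tb * g (tb / 2) := by ring
      _ ≤ g τ := key
  · have key : (2 * (tb - τ) / tb) • g (tb / 2) + (1 - 2 * (tb - τ) / tb) • g tb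
        ≤ g ((2 * (tb - τ) / tb) • (tb / 2) + (1 - 2 * (tb - τ) / tb) • tb) :=
      hg.2 hmid (right_mem_Icc.2 htb.le) (by have := hτ.2; apply div_nonneg <;> linarith)
        (by rw [sub_nonneg, div_le_one htb]; linarith) (by ring)
    simp only [smul_eq_mul, hg₁, mul_zero, add_zero] at key
    rw [show 2 * (tb - τ) / tb * (tb / 2) + (1 - 2 * (tb - τ) / tb) * tb = τ by field_simp; ring]
      at key
    rw [min_eq_right (by linarith)]
    calc 2 * g (tb / 2) / tb * (tb - τ) = 2 * (tb - τ) / tb * g (tb / 2) := by ring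
      _ ≤ g τ := key

theorem abs_le_mul_min_of_abs_sub_le {f : ℝ → ℝ} {K tb s : ℝ} (hK : 0 ≤ K)
    (hf : ∀ s ∈ Icc 0 tb, ∀ s' ∈ Icc 0 tb, |f s - f s'| ≤ K * |s - s'|) (h0 : f 0 = 0)
    (htb : f tb = 0) (hs : s ∈ Icc 0 tb) : |f s| ≤ K * min s (tb - s) := by
  have h₀ := hf s hs 0 (left_mem_Icc.2 (hs.1.trans hs.2))
  have h₁ := hf s hs tb (right_mem_Icc.2 (hs.1.trans hs.2))
  rw [h0, sub_zero, sub_zero, abs_of_nonneg hs.1] at h₀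
  rw [htb, sub_zero, abs_sub_comm, abs_of_nonneg (sub_nonneg.2 hs.2)] at h₁
  rw [mul_min_of_nonneg _ _ hK]
  exact le_min h₀ h₁

theorem LipschitzOnWith.abs_sub_le_mul {f : ℝ → ℝ} {K : ℝ≥0} {S : Set ℝ}
    (hf : LipschitzOnWith K f S) {x y : ℝ} (hx : x ∈ S) (hy : y ∈ S) :
    |f x - f y| ≤ K * |x - y| := by
  simpa only [Real.dist_eq] using hf.dist_le_mul x hx y hy

theorem LipschitzOnWith.of_abs_sub_le_add {f : ℝ × ℝ → ℝ} {S : Set (ℝ × ℝ)} {A B : ℝ}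
    (hA : 0 ≤ A) (hB : 0 ≤ B)
    (h : ∀ p ∈ S, ∀ q ∈ S, |f p - f q| ≤ A * |p.1 - q.1| + B * |p.2 - q.2|) :
    LipschitzOnWith (A + B).toNNReal f S := by
  refine LipschitzOnWith.of_dist_le' fun p hp q hq => ?_
  have h₁ : |p.1 - q.1| ≤ dist p q := by rw [← Real.dist_eq, Prod.dist_eq]; exact le_max_left _ _
  have h₂ : |p.2 - q.2| ≤ dist p q := by
    rw [← Real.dist_eq, Prod.dist_eq]; exact le_max_right _ _
  rw [Real.dist_eq, add_mul]
  exact (h p hp q hq).trans (add_le_add (by gcongr) (by gcongr))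

/-- The data of a ruled patch: its segments join `p₁(s) = heisP γ₁ φ₁ s` to `p₂(λ s)`. -/
structure Ruling where
  γ₁ : ℝ → ℝ
  γ₂ : ℝ → ℝ
  φ₁ : ℝ → ℝ
  φ₂ : ℝ → ℝ
  lam : ℝ → ℝ

namespace Ruling

variable (R : Ruling)

def width (s : ℝ) : ℝ := R.γ₂ (R.lam s) - R.γ₁ s

def jump (s : ℝ) : ℝ := R.φ₂ (R.lam s) - R.φ₁ s

/-- `y - γ₁ s` clamped to `[0, width s]`, so that the fiber coordinates below are defined and
Lipschitz on all of `ℝ × [0, t̄]`. -/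
def height (y s : ℝ) : ℝ := max 0 (min (y - R.γ₁ s) (R.width s))

/-- The point of the segment `[p₁(s), p₂(λ s)]` at height `y` is `heisRho (h, s)` with
`h = height / width` (see `heisRho_eq_chart`); `xCoord` and `tCoord` are its coordinates in the
graph chart `(x, y, t) ↦ (x, y, t + 2 y x)`. -/
def xCoord (y s : ℝ) : ℝ := R.φ₁ s + R.height y s / R.width s * R.jump s

def tCoord (y s : ℝ) : ℝ := s - 2 * R.height y s * (R.φ₁ s + R.xCoord y s)

def chart (w : ℝ × ℝ) : ℝ × ℝ × ℝ :=
  (R.xCoord w.1 w.2, w.1, R.tCoord w.1 w.2 + 2 * w.1 * R.xCoord w.1 w.2)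

/-- The segment through the point `(y, t)` of the lens: the inverse of `tCoord y` on `[0, t̄]`. -/
def fiber (tb y t : ℝ) : ℝ := Function.invFunOn (R.tCoord y) (Icc 0 tb) t

def graphFun (tb : ℝ) (w : ℝ × ℝ) : ℝ := R.xCoord w.1 (R.fiber tb w.1 w.2)

structure Admissible (tb : ℝ) (M L m l : ℝ≥0) : Prop where
  tb_pos : 0 < tb
  lip_γ₁ : LipschitzOnWith L R.γ₁ (Icc 0 tb)
  lip_γ₂ : LipschitzOnWith L R.γ₂ (Icc 0 tb)
  lip_φ₁ : LipschitzOnWith l R.φ₁ (Icc 0 tb)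
  lip_φ₂ : LipschitzOnWith l R.φ₂ (Icc 0 tb)
  abs_γ₁_le : ∀ s ∈ Icc 0 tb, |R.γ₁ s| ≤ M
  abs_γ₂_le : ∀ s ∈ Icc 0 tb, |R.γ₂ s| ≤ M
  abs_φ₁_le : ∀ s ∈ Icc 0 tb, |R.φ₁ s| ≤ m
  abs_φ₂_le : ∀ s ∈ Icc 0 tb, |R.φ₂ s| ≤ m
  sign : ∀ t ∈ Ioo 0 tb, R.γ₁ t < 0 ∧ 0 < R.γ₂ t
  γ₁_zero : R.γ₁ 0 = 0
  γ₁_tb : R.γ₁ tb = 0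
  γ₂_zero : R.γ₂ 0 = 0
  γ₂_tb : R.γ₂ tb = 0
  φ_zero : R.φ₁ 0 = R.φ₂ 0
  φ_tb : R.φ₁ tb = R.φ₂ tb
  concaveOn_γ₂ : ConcaveOn ℝ (Icc 0 tb) R.γ₂
  small : 44 * ((L : ℝ) * m + M * l) ≤ 1
  bijOn_lam : BijOn R.lam (Icc 0 tb) (Icc 0 tb)
  lam_zero : R.lam 0 = 0
  lam_tb : R.lam tb = tb
  qphi_lam : ∀ s ∈ Icc 0 tb, Qphi R.γ₁ R.γ₂ R.φ₁ R.φ₂ s (R.lam s) = 0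

theorem height_nonneg (y s : ℝ) : 0 ≤ R.height y s := le_max_left _ _

theorem height_eq_zero {y s : ℝ} (h : y ≤ R.γ₁ s) : R.height y s = 0 :=
  max_eq_left ((min_le_left _ _).trans (sub_nonpos.2 h))

theorem xCoord_of_le {y s : ℝ} (h : y ≤ R.γ₁ s) : R.xCoord y s = R.φ₁ s := by
  simp [xCoord, R.height_eq_zero h]

theorem tCoord_of_le {y s : ℝ} (h : y ≤ R.γ₁ s) : R.tCoord y s = s := by
  simp [tCoord, R.height_eq_zero h]

namespace Admissible

variable {R} {tb : ℝ} {M L m l : ℝ≥0} {s s' y y' t t' : ℝ}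

theorem zero_mem (H : R.Admissible tb M L m l) : (0 : ℝ) ∈ Icc 0 tb :=
  left_mem_Icc.2 H.tb_pos.le

theorem tb_mem (H : R.Admissible tb M L m l) : tb ∈ Icc 0 tb :=
  right_mem_Icc.2 H.tb_pos.le

theorem lam_mem (H : R.Admissible tb M L m l) (hs : s ∈ Icc 0 tb) : R.lam s ∈ Icc 0 tb :=
  H.bijOn_lam.mapsTo hs

theorem γ₁_nonpos (H : R.Admissible tb M L m l) (hs : s ∈ Icc 0 tb) : R.γ₁ s ≤ 0 := by
  rcases hs.1.eq_or_lt with rfl | h0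
  · exact H.γ₁_zero.le
  rcases hs.2.eq_or_lt with rfl | h1
  · exact H.γ₁_tb.le
  exact (H.sign s ⟨h0, h1⟩).1.le

theorem γ₂_nonneg (H : R.Admissible tb M L m l) (hs : s ∈ Icc 0 tb) : 0 ≤ R.γ₂ s := by
  rcases hs.1.eq_or_lt with rfl | h0
  · exact H.γ₂_zero.ge
  rcases hs.2.eq_or_lt with rfl | h1
  · exact H.γ₂_tb.ge
  exact (H.sign s ⟨h0, h1⟩).2.le

theorem lam_sub_self (H : R.Admissible tb M L m l) (hs : s ∈ Icc 0 tb) :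
    R.lam s - s = -2 * (R.width s * (R.φ₂ (R.lam s) + R.φ₁ s)) := by
  have h := H.qphi_lam s hs
  rw [Qphi] at h
  rw [width]
  linarith

theorem abs_width_sub_le_lam (H : R.Admissible tb M L m l) (hs : s ∈ Icc 0 tb)
    (hs' : s' ∈ Icc 0 tb) :
    |R.width s - R.width s'| ≤ L * (|R.lam s - R.lam s'| + |s - s'|) := by
  have h₂ := H.lip_γ₂.abs_sub_le_mul (H.lam_mem hs) (H.lam_mem hs')
  have h₁ := H.lip_γ₁.abs_sub_le_mul hs hs'
  calc |R.width s - R.width s'|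
      = |(R.γ₂ (R.lam s) - R.γ₂ (R.lam s')) - (R.γ₁ s - R.γ₁ s')| := by rw [width, width]; ring_nf
    _ ≤ |R.γ₂ (R.lam s) - R.γ₂ (R.lam s')| + |R.γ₁ s - R.γ₁ s'| := abs_sub _ _
    _ ≤ L * (|R.lam s - R.lam s'| + |s - s'|) := by linarith

theorem abs_width_le (H : R.Admissible tb M L m l) (hs : s ∈ Icc 0 tb) : |R.width s| ≤ 2 * M :=
  (abs_sub _ _).trans (by linarith [H.abs_γ₂_le _ (H.lam_mem hs), H.abs_γ₁_le s hs])

/-- Subtracting the defining equations `Q_φ(s, λ s) = 0` at `s` and `s'`, the smallness of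
`L m + M l` makes `λ` a perturbation of the identity. -/
theorem abs_lam_sub_sub_le (H : R.Admissible tb M L m l) (hs : s ∈ Icc 0 tb)
    (hs' : s' ∈ Icc 0 tb) :
    |(R.lam s - R.lam s') - (s - s')| ≤ (|R.lam s - R.lam s'| + |s - s'|) / 11 := by
  set δ := |R.lam s - R.lam s'| + |s - s'|
  have hsum : |(R.φ₂ (R.lam s) + R.φ₁ s) - (R.φ₂ (R.lam s') + R.φ₁ s')| ≤ l * δ :=
    calc _ = |(R.φ₂ (R.lam s) - R.φ₂ (R.lam s')) + (R.φ₁ s - R.φ₁ s')| := by ring_nf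
      _ ≤ |R.φ₂ (R.lam s) - R.φ₂ (R.lam s')| + |R.φ₁ s - R.φ₁ s'| := abs_add_le _ _
      _ ≤ l * δ := by
          linarith [H.lip_φ₂.abs_sub_le_mul (H.lam_mem hs) (H.lam_mem hs'),
            H.lip_φ₁.abs_sub_le_mul hs hs']
  have hsum' : |R.φ₂ (R.lam s) + R.φ₁ s| ≤ 2 * m :=
    (abs_add_le _ _).trans (by linarith [H.abs_φ₂_le _ (H.lam_mem hs), H.abs_φ₁_le s hs])
  have hprod := abs_mul_sub_mul_le_of_le (H.abs_width_sub_le_lam hs hs') hsum'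
    (H.abs_width_le hs') hsum
  have hsmall := mul_le_mul_of_nonneg_right H.small (by positivity : 0 ≤ δ)
  rw [sub_sub_sub_comm, H.lam_sub_self hs, H.lam_sub_self hs', ← mul_sub, abs_mul, abs_neg,
    abs_two]
  linarith

theorem abs_lam_sub_le (H : R.Admissible tb M L m l) (hs : s ∈ Icc 0 tb) (hs' : s' ∈ Icc 0 tb) :
    |R.lam s - R.lam s'| ≤ 6 / 5 * |s - s'| :=
  abs_le_of_abs_sub_le_div_eleven (H.abs_lam_sub_sub_le hs hs')

theorem abs_sub_le_lam (H : R.Admissible tb M L m l) (hs : s ∈ Icc 0 tb) (hs' : s' ∈ Icc 0 tb) :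
    |s - s'| ≤ 6 / 5 * |R.lam s - R.lam s'| := by
  refine abs_le_of_abs_sub_le_div_eleven ?_
  rw [abs_sub_comm, add_comm]
  exact H.abs_lam_sub_sub_le hs hs'

theorem mul_min_le_min_lam (H : R.Admissible tb M L m l) (hs : s ∈ Icc 0 tb) :
    5 / 6 * min s (tb - s) ≤ min (R.lam s) (tb - R.lam s) := by
  have h₀ := H.abs_sub_le_lam hs H.zero_mem
  have h₁ := H.abs_sub_le_lam hs H.tb_mem
  have hl := H.lam_mem hs
  rw [H.lam_zero, sub_zero, sub_zero, abs_of_nonneg hs.1, abs_of_nonneg hl.1] at h₀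
  rw [H.lam_tb, abs_sub_comm, abs_of_nonneg (sub_nonneg.2 hs.2), abs_sub_comm,
    abs_of_nonneg (sub_nonneg.2 hl.2)] at h₁
  rw [mul_min_of_nonneg _ _ (by norm_num)]
  exact min_le_min (by linarith) (by linarith)

theorem width_nonneg (H : R.Admissible tb M L m l) (hs : s ∈ Icc 0 tb) : 0 ≤ R.width s :=
  sub_nonneg.2 ((H.γ₁_nonpos hs).trans (H.γ₂_nonneg (H.lam_mem hs)))

theorem width_le (H : R.Admissible tb M L m l) (hs : s ∈ Icc 0 tb) : R.width s ≤ 2 * M :=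
  (le_abs_self _).trans (H.abs_width_le hs)

theorem width_zero (H : R.Admissible tb M L m l) : R.width 0 = 0 := by
  rw [width, H.lam_zero, H.γ₂_zero, H.γ₁_zero, sub_zero]

theorem width_tb (H : R.Admissible tb M L m l) : R.width tb = 0 := by
  rw [width, H.lam_tb, H.γ₂_tb, H.γ₁_tb, sub_zero]

theorem abs_width_sub_le (H : R.Admissible tb M L m l) (hs : s ∈ Icc 0 tb)
    (hs' : s' ∈ Icc 0 tb) : |R.width s - R.width s'| ≤ 11 / 5 * L * |s - s'| := by
  have := mul_le_mul_of_nonneg_left (H.abs_lam_sub_le hs hs') L.coe_nonneg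
  linarith [H.abs_width_sub_le_lam hs hs']

theorem exists_mul_min_le_width (H : R.Admissible tb M L m l) :
    ∃ c > 0, ∀ s ∈ Icc 0 tb, c * min s (tb - s) ≤ R.width s := by
  have hmid : 0 < R.γ₂ (tb / 2) := (H.sign _ ⟨by linarith [H.tb_pos], by linarith [H.tb_pos]⟩).2
  refine ⟨5 / 6 * (2 * R.γ₂ (tb / 2) / tb), by have := H.tb_pos; positivity, fun s hs => ?_⟩
  have hγ := H.concaveOn_γ₂.mul_min_le H.tb_pos H.γ₂_zero H.γ₂_tb (H.lam_mem hs)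
  have hc : 0 ≤ 2 * R.γ₂ (tb / 2) / tb := by have := H.tb_pos; positivity
  have := mul_le_mul_of_nonneg_left (H.mul_min_le_min_lam hs) hc
  rw [width]
  linarith [H.γ₁_nonpos hs]

theorem width_pos (H : R.Admissible tb M L m l) (hs : s ∈ Ioo 0 tb) : 0 < R.width s := by
  obtain ⟨c, hc, hcw⟩ := H.exists_mul_min_le_width
  have : 0 < min s (tb - s) := lt_min hs.1 (sub_pos.2 hs.2)
  exact (mul_pos hc this).trans_le (hcw s (Ioo_subset_Icc_self hs))

theorem abs_jump_le (H : R.Admissible tb M L m l) (hs : s ∈ Icc 0 tb) : |R.jump s| ≤ 2 * m :=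
  (abs_sub _ _).trans (by linarith [H.abs_φ₂_le _ (H.lam_mem hs), H.abs_φ₁_le s hs])

theorem abs_jump_sub_le (H : R.Admissible tb M L m l) (hs : s ∈ Icc 0 tb)
    (hs' : s' ∈ Icc 0 tb) : |R.jump s - R.jump s'| ≤ 11 / 5 * l * |s - s'| := by
  have h₂ := H.lip_φ₂.abs_sub_le_mul (H.lam_mem hs) (H.lam_mem hs')
  have h₁ := H.lip_φ₁.abs_sub_le_mul hs hs'
  have := mul_le_mul_of_nonneg_left (H.abs_lam_sub_le hs hs') l.coe_nonneg
  calc |R.jump s - R.jump s'|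
      = |(R.φ₂ (R.lam s) - R.φ₂ (R.lam s')) - (R.φ₁ s - R.φ₁ s')| := by rw [jump, jump]; ring_nf
    _ ≤ |R.φ₂ (R.lam s) - R.φ₂ (R.lam s')| + |R.φ₁ s - R.φ₁ s'| := abs_sub _ _
    _ ≤ 11 / 5 * l * |s - s'| := by linarith

/-- This is what keeps `height / width * jump` Lipschitz up to the tips of the lens. -/
theorem exists_abs_jump_le_mul_width (H : R.Admissible tb M L m l) :
    ∃ K ≥ 0, ∀ s ∈ Icc 0 tb, |R.jump s| ≤ K * R.width s := by
  obtain ⟨c, hc, hcw⟩ := H.exists_mul_min_le_width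
  have hl : (0 : ℝ) ≤ 11 / 5 * l := by positivity
  refine ⟨11 / 5 * l / c, by positivity, fun s hs => ?_⟩
  have hj : R.jump 0 = 0 := by rw [jump, H.lam_zero, H.φ_zero, sub_self]
  have hj' : R.jump tb = 0 := by rw [jump, H.lam_tb, H.φ_tb, sub_self]
  calc |R.jump s| ≤ 11 / 5 * l * min s (tb - s) :=
        abs_le_mul_min_of_abs_sub_le hl (fun _ h _ h' => H.abs_jump_sub_le h h') hj hj' hs
    _ = 11 / 5 * l / c * (c * min s (tb - s)) := by field_simp
    _ ≤ 11 / 5 * l / c * R.width s := by gcongr; exact hcw s hs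

theorem height_le_width (H : R.Admissible tb M L m l) (y : ℝ) (hs : s ∈ Icc 0 tb) :
    R.height y s ≤ R.width s :=
  max_le (H.width_nonneg hs) (min_le_right _ _)

theorem height_eq_width (H : R.Admissible tb M L m l) (hs : s ∈ Icc 0 tb)
    (h : R.width s ≤ y - R.γ₁ s) : R.height y s = R.width s := by
  rw [height, min_eq_right h, max_eq_right (H.width_nonneg hs)]

theorem abs_height_sub_le (H : R.Admissible tb M L m l) (hs : s ∈ Icc 0 tb)
    (hs' : s' ∈ Icc 0 tb) :
    |R.height y s - R.height y' s'| ≤ |y - y'| + 11 / 5 * L * |s - s'| := by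
  have hγ : |(y - R.γ₁ s) - (y' - R.γ₁ s')| ≤ |y - y'| + L * |s - s'| :=
    calc _ = |(y - y') - (R.γ₁ s - R.γ₁ s')| := by ring_nf
      _ ≤ |y - y'| + |R.γ₁ s - R.γ₁ s'| := abs_sub _ _
      _ ≤ |y - y'| + L * |s - s'| := by linarith [H.lip_γ₁.abs_sub_le_mul hs hs']
  have : (L : ℝ) * |s - s'| ≤ 11 / 5 * L * |s - s'| := by
    have := mul_nonneg L.coe_nonneg (abs_nonneg (s - s')); linarith
  refine (abs_max_zero_min_sub_le _ _ _ _).trans (max_le ?_ ?_)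
  · linarith
  · linarith [H.abs_width_sub_le hs hs', abs_nonneg (y - y')]

theorem div_width_self_mul_jump (H : R.Admissible tb M L m l) (hs : s ∈ Icc 0 tb) :
    R.width s / R.width s * R.jump s = R.jump s := by
  obtain ⟨K, -, hK⟩ := H.exists_abs_jump_le_mul_width
  by_cases hw : R.width s = 0
  · have := hK s hs
    rw [hw, mul_zero, abs_nonpos_iff] at this
    rw [this, mul_zero]
  · rw [div_self hw, one_mul]

theorem xCoord_of_width_le (H : R.Admissible tb M L m l) (hs : s ∈ Icc 0 tb)
    (h : R.width s ≤ y - R.γ₁ s) : R.xCoord y s = R.φ₂ (R.lam s) := by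
  rw [xCoord, H.height_eq_width hs h, H.div_width_self_mul_jump hs, jump, add_sub_cancel]

theorem tCoord_of_width_le (H : R.Admissible tb M L m l) (hs : s ∈ Icc 0 tb)
    (h : R.width s ≤ y - R.γ₁ s) : R.tCoord y s = R.lam s := by
  rw [tCoord, H.xCoord_of_width_le hs h, H.height_eq_width hs h]
  linarith [H.lam_sub_self hs]

theorem tCoord_zero (H : R.Admissible tb M L m l) (y : ℝ) : R.tCoord y 0 = 0 := by
  have : R.height y 0 = 0 :=
    le_antisymm ((H.height_le_width y H.zero_mem).trans_eq H.width_zero) (R.height_nonneg y 0)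
  rw [tCoord, this, mul_zero, zero_mul, sub_zero]

theorem tCoord_tb (H : R.Admissible tb M L m l) (y : ℝ) : R.tCoord y tb = tb := by
  have : R.height y tb = 0 :=
    le_antisymm ((H.height_le_width y H.tb_mem).trans_eq H.width_tb) (R.height_nonneg y tb)
  rw [tCoord, this, mul_zero, zero_mul, sub_zero]

theorem abs_tCoord_sub_sub_le (H : R.Admissible tb M L m l) (hs : s ∈ Icc 0 tb)
    (hs' : s' ∈ Icc 0 tb) :
    |(R.tCoord y s - s) - (R.tCoord y' s' - s')| ≤ 12 * m * |y - y'| + 4 / 5 * |s - s'| := by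
  set W := R.height y s
  set W' := R.height y' s'
  have hW := H.abs_height_sub_le (y := y) (y' := y') hs hs'
  have hd := H.abs_width_sub_le hs hs'
  have hW'd := H.height_le_width y' hs'
  have hW'0 : 0 ≤ W' := R.height_nonneg y' s'
  have hW' : |W'| ≤ 2 * M := by rw [abs_of_nonneg hW'0]; exact hW'd.trans (H.width_le hs')
  have hq' : |W' * (W' / R.width s')| ≤ 2 * M := by
    rw [abs_of_nonneg (mul_nonneg hW'0 (div_nonneg hW'0 (H.width_nonneg hs')))]
    refine le_trans ?_ (hW'd.trans (H.width_le hs'))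
    exact mul_le_of_le_one_right hW'0 (div_le_one_of_le₀ hW'd (H.width_nonneg hs'))
  have h₁ := abs_mul_sub_mul_le_of_le (le_refl |W - W'|) (H.abs_φ₁_le s hs) hW'
    (H.lip_φ₁.abs_sub_le_mul hs hs')
  have h₂ := abs_mul_sub_mul_le_of_le (abs_mul_div_sub_mul_div_le (R.height_nonneg y s)
    (H.height_le_width y hs) hW'0 hW'd) (H.abs_jump_le hs) hq' (H.abs_jump_sub_le hs hs')
  have hexp : (R.tCoord y s - s) - (R.tCoord y' s' - s')
      = -(4 * (W * R.φ₁ s - W' * R.φ₁ s')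
        + 2 * (W * (W / R.width s) * R.jump s - W' * (W' / R.width s') * R.jump s')) := by
    simp only [tCoord, xCoord, W, W']; ring
  rw [hexp, abs_neg]
  refine (abs_add_le _ _).trans ?_
  rw [abs_mul, abs_mul, abs_two, abs_of_pos (by norm_num : (0 : ℝ) < 4)]
  have hWm := mul_le_mul_of_nonneg_right hW m.coe_nonneg
  have hdm := mul_le_mul_of_nonneg_right hd m.coe_nonneg
  have hsmall := mul_le_mul_of_nonneg_right H.small (abs_nonneg (s - s'))
  have hMl : (0 : ℝ) ≤ M * l * |s - s'| := by positivity
  -- the coefficient of `|s - s'|` comes out as `176/5 L m + 84/5 M l ≤ 4/5`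
  linarith

theorem abs_sub_le_five_mul_abs_tCoord_sub (H : R.Admissible tb M L m l) (y : ℝ)
    (hs : s ∈ Icc 0 tb) (hs' : s' ∈ Icc 0 tb) :
    |s - s'| ≤ 5 * |R.tCoord y s - R.tCoord y s'| := by
  have h := H.abs_tCoord_sub_sub_le (y := y) (y' := y) hs hs'
  rw [sub_self, abs_zero, mul_zero, zero_add] at h
  have e : |(s - s') - (R.tCoord y s - R.tCoord y s')|
      = |(R.tCoord y s - s) - (R.tCoord y s' - s')| := by rw [abs_sub_comm]; congr 1; ring
  linarith [abs_sub_abs_le_abs_sub (s - s') (R.tCoord y s - R.tCoord y s')]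

theorem strictMonoOn_tCoord (H : R.Admissible tb M L m l) (y : ℝ) :
    StrictMonoOn (R.tCoord y) (Icc 0 tb) := by
  intro s hs s' hs' hss
  have h := (abs_le.1 (H.abs_tCoord_sub_sub_le (y := y) (y' := y) hs hs')).2
  rw [sub_self, abs_zero, mul_zero, zero_add, abs_of_neg (sub_neg.2 hss)] at h
  linarith

theorem continuousOn_tCoord (H : R.Admissible tb M L m l) (y : ℝ) :
    ContinuousOn (R.tCoord y) (Icc 0 tb) := by
  refine (LipschitzOnWith.of_dist_le' (K := 9 / 5) fun s hs s' hs' => ?_).continuousOn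
  have h := H.abs_tCoord_sub_sub_le (y := y) (y' := y) hs hs'
  rw [sub_self, abs_zero, mul_zero, zero_add] at h
  rw [Real.dist_eq, Real.dist_eq]
  have e : |(R.tCoord y s - R.tCoord y s') - (s - s')|
      = |(R.tCoord y s - s) - (R.tCoord y s' - s')| := by congr 1; ring
  linarith [abs_sub_abs_le_abs_sub (R.tCoord y s - R.tCoord y s') (s - s')]

theorem abs_tCoord_sub_tCoord_le (H : R.Admissible tb M L m l) (hs : s ∈ Icc 0 tb) :
    |R.tCoord y s - R.tCoord y' s| ≤ 12 * m * |y - y'| := by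
  have h := H.abs_tCoord_sub_sub_le (y := y) (y' := y') hs hs
  rwa [sub_self, abs_zero, mul_zero, add_zero, sub_sub_sub_cancel_right] at h

theorem bijOn_tCoord (H : R.Admissible tb M L m l) (y : ℝ) :
    BijOn (R.tCoord y) (Icc 0 tb) (Icc 0 tb) := by
  have hmono := (H.strictMonoOn_tCoord y).monotoneOn
  refine ⟨fun s hs => ?_, (H.strictMonoOn_tCoord y).injOn, ?_⟩
  · rw [← H.tCoord_zero y, ← H.tCoord_tb y]
    exact ⟨hmono H.zero_mem hs hs.1, hmono hs H.tb_mem hs.2⟩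
  · simpa only [H.tCoord_zero, H.tCoord_tb] using
      (H.continuousOn_tCoord y).surjOn_Icc H.zero_mem H.tb_mem

theorem fiber_mem (H : R.Admissible tb M L m l) (ht : t ∈ Icc 0 tb) :
    R.fiber tb y t ∈ Icc 0 tb :=
  (H.bijOn_tCoord y).surjOn.mapsTo_invFunOn ht

theorem tCoord_fiber (H : R.Admissible tb M L m l) (ht : t ∈ Icc 0 tb) :
    R.tCoord y (R.fiber tb y t) = t :=
  (H.bijOn_tCoord y).invOn_invFunOn.2 ht

theorem fiber_tCoord (H : R.Admissible tb M L m l) (hs : s ∈ Icc 0 tb) :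
    R.fiber tb y (R.tCoord y s) = s :=
  (H.bijOn_tCoord y).invOn_invFunOn.1 hs

theorem abs_fiber_sub_le (H : R.Admissible tb M L m l) (ht : t ∈ Icc 0 tb)
    (ht' : t' ∈ Icc 0 tb) :
    |R.fiber tb y t - R.fiber tb y' t'| ≤ 60 * m * |y - y'| + 5 * |t - t'| := by
  have hs := H.fiber_mem (y := y) ht
  have hs' := H.fiber_mem (y := y') ht'
  calc |R.fiber tb y t - R.fiber tb y' t'|
      ≤ 5 * |R.tCoord y' (R.fiber tb y t) - R.tCoord y' (R.fiber tb y' t')| :=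
        H.abs_sub_le_five_mul_abs_tCoord_sub y' hs hs'
    _ = 5 * |(R.tCoord y' (R.fiber tb y t) - R.tCoord y (R.fiber tb y t)) + (t - t')| := by
        rw [H.tCoord_fiber ht, H.tCoord_fiber ht']; ring_nf
    _ ≤ 5 * (12 * m * |y' - y| + |t - t'|) := by
        gcongr; exact (abs_add_le _ _).trans (by gcongr; exact H.abs_tCoord_sub_tCoord_le hs)
    _ = 60 * m * |y - y'| + 5 * |t - t'| := by rw [abs_sub_comm]; ring

theorem exists_abs_xCoord_sub_le (H : R.Admissible tb M L m l) :
    ∃ A ≥ 0, ∃ B ≥ 0, ∀ y y' s s', s ∈ Icc 0 tb → s' ∈ Icc 0 tb →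
      |R.xCoord y s - R.xCoord y' s'| ≤ A * |y - y'| + B * |s - s'| := by
  obtain ⟨K, hK, hjump⟩ := H.exists_abs_jump_le_mul_width
  refine ⟨K, hK, l + 22 / 5 * K * L + 11 / 5 * l, by positivity, fun y y' s s' hs hs' => ?_⟩
  set q := R.height y s / R.width s
  set q' := R.height y' s' / R.width s'
  have hq' : |q'| ≤ 1 := by
    rw [abs_of_nonneg (div_nonneg (R.height_nonneg y' s') (H.width_nonneg hs'))]
    exact div_le_one_of_le₀ (H.height_le_width y' hs') (H.width_nonneg hs')
  have hq : |q - q'| * |R.jump s| ≤ K * (|y - y'| + 22 / 5 * L * |s - s'|) :=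
    calc |q - q'| * |R.jump s| ≤ |q - q'| * (K * R.width s) := by gcongr; exact hjump s hs
      _ = K * (|q - q'| * R.width s) := by ring
      _ ≤ K * (|y - y'| + 22 / 5 * L * |s - s'|) := by
          gcongr
          refine (abs_div_sub_div_mul_le (R.height_nonneg y s) (H.height_le_width y hs)
            (R.height_nonneg y' s') (H.height_le_width y' hs')).trans ?_
          linarith [H.abs_height_sub_le (y := y) (y' := y') hs hs', H.abs_width_sub_le hs hs']
  have hJ := abs_mul_sub_mul_le_of_le (le_refl |q - q'|) (le_refl |R.jump s|) hq'
    (H.abs_jump_sub_le hs hs')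
  have hφ := H.lip_φ₁.abs_sub_le_mul hs hs'
  calc |R.xCoord y s - R.xCoord y' s'|
      = |(R.φ₁ s - R.φ₁ s') + (q * R.jump s - q' * R.jump s')| := by
        simp only [xCoord, q, q']; ring_nf
    _ ≤ |R.φ₁ s - R.φ₁ s'| + |q * R.jump s - q' * R.jump s'| := abs_add_le _ _
    _ ≤ K * |y - y'| + (l + 22 / 5 * K * L + 11 / 5 * l) * |s - s'| := by linarith

theorem exists_lipschitzOnWith_graphFun (H : R.Admissible tb M L m l) :
    ∃ K, LipschitzOnWith K (R.graphFun tb) (closure (lensD R.γ₁ R.γ₂ tb)) := by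
  obtain ⟨A, hA, B, hB, hx⟩ := H.exists_abs_xCoord_sub_le
  have hsub : closure (lensD R.γ₁ R.γ₂ tb) ⊆ univ ×ˢ Icc 0 tb :=
    closure_minimal (fun w hw => ⟨trivial, Ioo_subset_Icc_self hw.1⟩)
      (isClosed_univ.prod isClosed_Icc)
  refine ⟨_, (LipschitzOnWith.of_abs_sub_le_add (A := A + B * (60 * m)) (B := B * 5)
    (by positivity) (by positivity) fun p hp q hq => ?_).mono hsub⟩
  have hσ := H.abs_fiber_sub_le (y := p.1) (y' := q.1) hp.2 hq.2
  have := mul_le_mul_of_nonneg_left hσ hB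
  refine (hx _ _ _ _ (H.fiber_mem hp.2) (H.fiber_mem hq.2)).trans ?_
  linarith

theorem graphFun_γ₁ (H : R.Admissible tb M L m l) (hs : s ∈ Icc 0 tb) :
    R.graphFun tb (R.γ₁ s, s) = R.φ₁ s := by
  have hσ : R.fiber tb (R.γ₁ s) s = s := by
    simpa only [R.tCoord_of_le le_rfl] using H.fiber_tCoord (y := R.γ₁ s) hs
  rw [graphFun, hσ, R.xCoord_of_le le_rfl]

theorem graphFun_γ₂ (H : R.Admissible tb M L m l) (hs : s ∈ Icc 0 tb) :
    R.graphFun tb (R.γ₂ s, s) = R.φ₂ s := by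
  obtain ⟨r, hr, rfl⟩ := H.bijOn_lam.surjOn hs
  have hσ : R.fiber tb (R.γ₂ (R.lam r)) (R.lam r) = r := by
    simpa only [H.tCoord_of_width_le hr le_rfl] using H.fiber_tCoord (y := R.γ₂ (R.lam r)) hr
  rw [graphFun, hσ, H.xCoord_of_width_le hr le_rfl]

theorem heisRho_eq_chart (H : R.Admissible tb M L m l) (hs : s ∈ Icc 0 tb) (hw : 0 < R.width s)
    {h : ℝ} (h₀ : 0 ≤ h) (h₁ : h ≤ 1) :
    heisRho R.γ₁ R.γ₂ R.φ₁ R.φ₂ R.lam (h, s) = R.chart (R.γ₁ s + h * R.width s, s) := by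
  have hheight : R.height (R.γ₁ s + h * R.width s) s = h * R.width s := by
    rw [height, add_sub_cancel_left, min_eq_left (mul_le_of_le_one_left hw.le h₁),
      max_eq_right (mul_nonneg h₀ hw.le)]
  have hQ := H.lam_sub_self hs
  simp only [heisRho, heisP, chart, tCoord, xCoord, hheight, mul_div_cancel_right₀ _ hw.ne',
    Prod.smul_mk, Prod.mk_add_mk, smul_eq_mul, Prod.mk.injEq]
  simp only [width, jump] at hQ ⊢
  refine ⟨by ring, by ring, by linear_combination h * hQ⟩

theorem image_heisRho (H : R.Admissible tb M L m l) :
    heisRho R.γ₁ R.γ₂ R.φ₁ R.φ₂ R.lam '' (Ioo 0 1 ×ˢ Ioo 0 tb)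
      = R.chart '' lensD R.γ₁ (R.γ₂ ∘ R.lam) tb := by
  ext p
  constructor
  · rintro ⟨⟨h, s⟩, ⟨hh, hs⟩, rfl⟩
    have hw := H.width_pos hs
    refine ⟨(R.γ₁ s + h * R.width s, s), ⟨hs, ?_, ?_⟩,
      (H.heisRho_eq_chart (Ioo_subset_Icc_self hs) hw hh.1.le hh.2.le).symm⟩
    · exact lt_add_of_pos_right _ (mul_pos hh.1 hw)
    · have := mul_lt_of_lt_one_left hw hh.2
      simp only [width, Function.comp_apply] at this ⊢
      linarith
  · rintro ⟨⟨y, s⟩, ⟨hs, hy₁, hy₂⟩, rfl⟩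
    have hw := H.width_pos hs
    have hy : y - R.γ₁ s < R.width s := by rw [width]; exact sub_lt_sub_right hy₂ _
    refine ⟨((y - R.γ₁ s) / R.width s, s),
      ⟨⟨div_pos (sub_pos.2 hy₁) hw, (div_lt_one hw).2 hy⟩, hs⟩, ?_⟩
    rw [H.heisRho_eq_chart (Ioo_subset_Icc_self hs) hw (div_pos (sub_pos.2 hy₁) hw).le
      ((div_lt_one hw).2 hy).le, div_mul_cancel₀ _ hw.ne', add_sub_cancel]

theorem twelve_mul_lt_one (H : R.Admissible tb M L m l) : 12 * ((L : ℝ) * m) < 1 := by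
  have := H.small
  have : (0 : ℝ) ≤ M * l := by positivity
  linarith

theorem tCoord_mem_Ioo (H : R.Admissible tb M L m l) (y : ℝ) (hs : s ∈ Ioo 0 tb) :
    R.tCoord y s ∈ Ioo 0 tb := by
  have hmono := H.strictMonoOn_tCoord y
  rw [← H.tCoord_zero y, ← H.tCoord_tb y]
  exact ⟨hmono H.zero_mem (Ioo_subset_Icc_self hs) hs.1,
    hmono (Ioo_subset_Icc_self hs) H.tb_mem hs.2⟩

/-- Along a fiber, `t` moves by at most `12 m` per unit of height, too slowly for the boundary
curves (of slope at most `L`, with `12 L m < 1`) to catch up. -/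
theorem γ₁_tCoord_lt (H : R.Admissible tb M L m l) (hs : s ∈ Icc 0 tb) (hy : R.γ₁ s < y) :
    R.γ₁ (R.tCoord y s) < y := by
  have ht := H.abs_tCoord_sub_tCoord_le (y := y) (y' := R.γ₁ s) hs
  rw [R.tCoord_of_le le_rfl, abs_of_pos (sub_pos.2 hy)] at ht
  have hγ := H.lip_γ₁.abs_sub_le_mul ((H.bijOn_tCoord y).mapsTo hs) hs
  have := mul_le_mul_of_nonneg_left ht L.coe_nonneg
  have := mul_lt_mul_of_pos_right H.twelve_mul_lt_one (sub_pos.2 hy)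
  linarith [le_abs_self (R.γ₁ (R.tCoord y s) - R.γ₁ s)]

theorem lt_γ₂_tCoord (H : R.Admissible tb M L m l) (hs : s ∈ Icc 0 tb)
    (hy : y < R.γ₂ (R.lam s)) : y < R.γ₂ (R.tCoord y s) := by
  have ht := H.abs_tCoord_sub_tCoord_le (y := y) (y' := R.γ₂ (R.lam s)) hs
  rw [H.tCoord_of_width_le hs le_rfl, abs_sub_comm y, abs_of_pos (sub_pos.2 hy)] at ht
  have hγ := H.lip_γ₂.abs_sub_le_mul ((H.bijOn_tCoord y).mapsTo hs) (H.lam_mem hs)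
  have := mul_le_mul_of_nonneg_left ht L.coe_nonneg
  have := mul_lt_mul_of_pos_right H.twelve_mul_lt_one (sub_pos.2 hy)
  linarith [neg_abs_le (R.γ₂ (R.tCoord y s) - R.γ₂ (R.lam s))]

theorem mk_fiber_mem (H : R.Admissible tb M L m l) (hyt : (y, t) ∈ lensD R.γ₁ R.γ₂ tb) :
    (y, R.fiber tb y t) ∈ lensD R.γ₁ (R.γ₂ ∘ R.lam) tb := by
  obtain ⟨ht, hy₁, hy₂⟩ := hyt
  have hs := H.fiber_mem (y := y) (Ioo_subset_Icc_self ht)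
  have hT := H.tCoord_fiber (y := y) (Ioo_subset_Icc_self ht)
  set s := R.fiber tb y t
  refine ⟨⟨hs.1.lt_of_ne ?_, hs.2.lt_of_ne ?_⟩, ?_, ?_⟩
  · rintro h0
    rw [← h0, H.tCoord_zero] at hT
    exact ht.1.ne hT
  · rintro htb
    rw [htb, H.tCoord_tb] at hT
    exact ht.2.ne hT.symm
  · by_contra! hle
    rw [R.tCoord_of_le hle] at hT
    exact (hT ▸ hy₁).not_ge hle
  · by_contra! hle
    change R.γ₂ (R.lam s) ≤ y at hle
    rw [H.tCoord_of_width_le hs (by rw [width]; linarith)] at hT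
    exact (hT ▸ hy₂).not_ge hle

theorem image_fiber_lensD (H : R.Admissible tb M L m l) :
    (fun w : ℝ × ℝ => (w.1, R.fiber tb w.1 w.2)) '' lensD R.γ₁ R.γ₂ tb
      = lensD R.γ₁ (R.γ₂ ∘ R.lam) tb := by
  refine Subset.antisymm (image_subset_iff.2 fun w hw => H.mk_fiber_mem hw) ?_
  rintro ⟨y, s⟩ ⟨hs, hy₁, hy₂⟩
  exact ⟨(y, R.tCoord y s), ⟨H.tCoord_mem_Ioo y hs, H.γ₁_tCoord_lt (Ioo_subset_Icc_self hs) hy₁,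
    H.lt_γ₂_tCoord (Ioo_subset_Icc_self hs) hy₂⟩,
    by simp only [H.fiber_tCoord (Ioo_subset_Icc_self hs)]⟩

theorem image_graph (H : R.Admissible tb M L m l) :
    (fun w : ℝ × ℝ => (R.graphFun tb w, w.1, w.2 + 2 * w.1 * R.graphFun tb w))
        '' lensD R.γ₁ R.γ₂ tb
      = R.chart '' lensD R.γ₁ (R.γ₂ ∘ R.lam) tb := by
  rw [← H.image_fiber_lensD, ← image_comp]
  refine image_congr fun w hw => ?_
  simp only [Function.comp_apply, chart, graphFun, H.tCoord_fiber (Ioo_subset_Icc_self hw.1)]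

end Admissible

end Ruling

theorem stmt_6_general (tb : ℝ) (htb : 0 < tb)
    (γ₁ γ₂ φ₁ φ₂ : ℝ → ℝ) (Mγ Lγ Mφ Lφ : NNReal)
    (hγ₁lip : LipschitzOnWith Lγ γ₁ (Set.Icc 0 tb))
    (hγ₂lip : LipschitzOnWith Lγ γ₂ (Set.Icc 0 tb))
    (hγ₁bd : ∀ s ∈ Set.Icc 0 tb, |γ₁ s| ≤ (Mγ : ℝ))
    (hγ₂bd : ∀ s ∈ Set.Icc 0 tb, |γ₂ s| ≤ (Mγ : ℝ))
    (hφ₁lip : LipschitzOnWith Lφ φ₁ (Set.Icc 0 tb))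
    (hφ₂lip : LipschitzOnWith Lφ φ₂ (Set.Icc 0 tb))
    (hφ₁bd : ∀ s ∈ Set.Icc 0 tb, |φ₁ s| ≤ (Mφ : ℝ))
    (hφ₂bd : ∀ s ∈ Set.Icc 0 tb, |φ₂ s| ≤ (Mφ : ℝ))
    (hsign : ∀ t ∈ Set.Ioo 0 tb, γ₁ t < 0 ∧ 0 < γ₂ t)
    (hγ₁0 : γ₁ 0 = 0) (hγ₁t : γ₁ tb = 0) (hγ₂0 : γ₂ 0 = 0) (hγ₂t : γ₂ tb = 0)
    (hφ0 : φ₁ 0 = φ₂ 0) (hφt : φ₁ tb = φ₂ tb)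
    (hconc : ConcaveOn ℝ (Set.Icc 0 tb) γ₂)
    (zeta : ℝ) (hzdef : zeta = 4 * ((Mγ : ℝ) + (Lγ : ℝ)) * ((Mφ : ℝ) + (Lφ : ℝ)))
    (hzeta : zeta < (Real.sqrt 129 - 11) / 4)
    (lam : ℝ → ℝ)
    (hlam_bij : Set.BijOn lam (Set.Icc 0 tb) (Set.Icc 0 tb))
    (hlam_sol : ∀ s ∈ Set.Icc 0 tb, Qphi γ₁ γ₂ φ₁ φ₂ s (lam s) = 0)
    (hlam0 : lam 0 = 0) (hlamt : lam tb = tb)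
    :
    ∃ u : ℝ × ℝ → ℝ,
      -- (ii) u is Lipschitz continuous on D̄
      (∃ K : NNReal, LipschitzOnWith K u (closure (lensD γ₁ γ₂ tb))) ∧
      -- (i) R_φ = S_u
      (heisRho γ₁ γ₂ φ₁ φ₂ lam '' (Set.Ioo (0:ℝ) 1 ×ˢ Set.Ioo (0:ℝ) tb)
        = (fun w : ℝ × ℝ => (u w, w.1, w.2 + 2 * w.1 * u w)) '' lensD γ₁ γ₂ tb) ∧
      -- (iii) u = φ on ∂D
      (∀ s ∈ Set.Icc 0 tb, u (γ₁ s, s) = φ₁ s ∧ u (γ₂ s, s) = φ₂ s) := by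
  have hsmall : 44 * ((Lγ : ℝ) * Mφ + Mγ * Lφ) ≤ 1 := by
    -- `4 (L m + M l) ≤ ζ < (√129 - 11) / 4 ≤ 1 / 11`
    have h129 : Real.sqrt 129 ≤ 125 / 11 := Real.sqrt_le_iff.2 ⟨by norm_num, by norm_num⟩
    have : (0 : ℝ) ≤ Mγ * Mφ + Lγ * Lφ := by positivity
    nlinarith
  let R : Ruling := ⟨γ₁, γ₂, φ₁, φ₂, lam⟩
  have H : R.Admissible tb Mγ Lγ Mφ Lφ :=
    ⟨htb, hγ₁lip, hγ₂lip, hφ₁lip, hφ₂lip, hγ₁bd, hγ₂bd, hφ₁bd, hφ₂bd, hsign, hγ₁0, hγ₁t, hγ₂0,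
      hγ₂t, hφ0, hφt, hconc, hsmall, hlam_bij, hlam0, hlamt, hlam_sol⟩
  refine ⟨R.graphFun tb, H.exists_lipschitzOnWith_graphFun, ?_,
    fun s hs => ⟨H.graphFun_γ₁ hs, H.graphFun_γ₂ hs⟩⟩
  rw [H.image_heisRho, H.image_graph]

/-- the ruled surface `R_φ` is the left intrinsic graph of a Lipschitz
function `u` on `D` with boundary value `φ`. -/
theorem stmt_6 (tb : ℝ) (htb : 0 < tb)
    (γ₁ γ₂ φ₁ φ₂ : ℝ → ℝ) (Mγ Lγ Mφ Lφ : NNReal)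
    (hγ₁lip : LipschitzOnWith Lγ γ₁ (Set.Icc 0 tb))
    (hγ₂lip : LipschitzOnWith Lγ γ₂ (Set.Icc 0 tb))
    (hγ₁bd : ∀ s ∈ Set.Icc 0 tb, |γ₁ s| ≤ (Mγ : ℝ))
    (hγ₂bd : ∀ s ∈ Set.Icc 0 tb, |γ₂ s| ≤ (Mγ : ℝ))
    (hφ₁lip : LipschitzOnWith Lφ φ₁ (Set.Icc 0 tb))
    (hφ₂lip : LipschitzOnWith Lφ φ₂ (Set.Icc 0 tb))
    (hφ₁bd : ∀ s ∈ Set.Icc 0 tb, |φ₁ s| ≤ (Mφ : ℝ))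
    (hφ₂bd : ∀ s ∈ Set.Icc 0 tb, |φ₂ s| ≤ (Mφ : ℝ))
    (hsign : ∀ t ∈ Set.Ioo 0 tb, γ₁ t < 0 ∧ 0 < γ₂ t)
    (hγ₁0 : γ₁ 0 = 0) (hγ₁t : γ₁ tb = 0) (hγ₂0 : γ₂ 0 = 0) (hγ₂t : γ₂ tb = 0)
    (hφ0 : φ₁ 0 = φ₂ 0) (hφt : φ₁ tb = φ₂ tb)
    (hconv : ConvexOn ℝ (Set.Icc 0 tb) γ₁)
    (hconc : ConcaveOn ℝ (Set.Icc 0 tb) γ₂)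
    (zeta : ℝ) (hzdef : zeta = 4 * ((Mγ : ℝ) + (Lγ : ℝ)) * ((Mφ : ℝ) + (Lφ : ℝ)))
    (hzeta : zeta < (Real.sqrt 129 - 11) / 4)
    (lam : ℝ → ℝ)
    (hlam_bij : Set.BijOn lam (Set.Icc 0 tb) (Set.Icc 0 tb))
    (hlam_mono : StrictMonoOn lam (Set.Icc 0 tb))
    (hlam_sol : ∀ s ∈ Set.Icc 0 tb, Qphi γ₁ γ₂ φ₁ φ₂ s (lam s) = 0)
    (hlam0 : lam 0 = 0) (hlamt : lam tb = tb)
    :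
    ∃ u : ℝ × ℝ → ℝ,
      -- (ii) u is Lipschitz continuous on D̄
      (∃ K : NNReal, LipschitzOnWith K u (closure (lensD γ₁ γ₂ tb))) ∧
      -- (i) R_φ = S_u
      (heisRho γ₁ γ₂ φ₁ φ₂ lam '' (Set.Ioo (0:ℝ) 1 ×ˢ Set.Ioo (0:ℝ) tb)
        = (fun w : ℝ × ℝ => (u w, w.1, w.2 + 2 * w.1 * u w)) '' lensD γ₁ γ₂ tb) ∧
      -- (iii) u = φ on ∂D
      (∀ s ∈ Set.Icc 0 tb, u (γ₁ s, s) = φ₁ s ∧ u (γ₂ s, s) = φ₂ s) :=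
  stmt_6_general tb htb γ₁ γ₂ φ₁ φ₂ Mγ Lγ Mφ Lφ hγ₁lip hγ₂lip hγ₁bd hγ₂bd hφ₁lip hφ₂lip hφ₁bd hφ₂bd
    hsign hγ₁0 hγ₁t hγ₂0 hγ₂t hφ0 hφt hconc zeta hzdef hzeta lam hlam_bij hlam_sol hlam0 hlamt
end
end

section
/- Let t̄ > 0, let g : [0,t̄] → [0,∞) be concave with g(0) = g(t̄) = 0, and let λ : [0,t̄] → [0,t̄] be an increasing bijection with λ(0) = 0, λ(t̄) = t̄ whose inverse is Lipschitz with constant L ≥ 1 (i.e. |λ⁻¹(a) − λ⁻¹(b)| ≤ L|a−b| for all a,b). Then g(s) ≤ L·g(λ(s)) for every s ∈ [0,t̄]. -/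
/-!
If a concave `f` vanishes at an endpoint `a`, then `f(y)/(y - a)` is nonincreasing in `y`; so for
nonnegative `f`, stretching the distance to `a` by a factor at most `L` multiplies `f` by at most
`L`. The Lipschitz bound on `λ⁻¹`, applied at `0` and at `t̄`, says that `λ` shrinks the distance of
`s` to either endpoint by a factor at most `L`; use the endpoint on the side towards which `λ`
moves `s`.
-/

open Set

section

variable {𝕜 : Type*} [Field 𝕜] [LinearOrder 𝕜] [IsStrictOrderedRing 𝕜] {s : Set 𝕜} {f : 𝕜 → 𝕜}

theorem ConcaveOn.sub_mul_add_sub_mul_le (hf : ConcaveOn 𝕜 s f) {x y z : 𝕜} (hx : x ∈ s)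
    (hz : z ∈ s) (hxy : x < y) (hyz : y < z) :
    (z - y) * f x + (y - x) * f z ≤ (z - x) * f y := by
  have h := hf.neg.secant_mono_aux1 hx hz hxy hyz
  simp only [Pi.neg_apply] at h
  linarith

theorem ConcaveOn.le_mul_of_sub_le_mul_sub_left (hf : ConcaveOn 𝕜 s f) {a x y L : 𝕜}
    (ha : a ∈ s) (hy : y ∈ s) (hfa : f a = 0) (hfx : 0 ≤ f x) (hax : a ≤ x) (hxy : x ≤ y)
    (hL : y - a ≤ L * (x - a)) : f y ≤ L * f x := by
  rcases hax.eq_or_lt with rfl | hax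
  · obtain rfl : y = a := le_antisymm (by linarith) hxy
    simp [hfa]
  rcases hxy.eq_or_lt with rfl | hxy
  · nlinarith
  have hchord := hf.sub_mul_add_sub_mul_le ha hy hax hxy
  rw [hfa, mul_zero, zero_add] at hchord
  refine le_of_mul_le_mul_left ?_ (sub_pos.2 hax)
  calc (x - a) * f y ≤ (y - a) * f x := hchord
    _ ≤ L * (x - a) * f x := mul_le_mul_of_nonneg_right hL hfx
    _ = (x - a) * (L * f x) := by ring

theorem ConcaveOn.le_mul_of_sub_le_mul_sub_right (hf : ConcaveOn 𝕜 s f) {b x y L : 𝕜}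
    (hb : b ∈ s) (hx : x ∈ s) (hfb : f b = 0) (hfy : 0 ≤ f y) (hyb : y ≤ b) (hxy : x ≤ y)
    (hL : b - x ≤ L * (b - y)) : f x ≤ L * f y := by
  rcases hyb.eq_or_lt with rfl | hyb
  · obtain rfl : x = y := le_antisymm hxy (by linarith)
    simp [hfb]
  rcases hxy.eq_or_lt with rfl | hxy
  · nlinarith
  have hchord := hf.sub_mul_add_sub_mul_le hx hb hxy hyb
  rw [hfb, mul_zero, add_zero] at hchord
  refine le_of_mul_le_mul_left ?_ (sub_pos.2 hyb)
  calc (b - y) * f x ≤ (b - x) * f y := hchord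
    _ ≤ L * (b - y) * f y := mul_le_mul_of_nonneg_right hL hfy
    _ = (b - y) * (L * f y) := by ring

end

theorem stmt_8_general (tb : ℝ) (g : ℝ → ℝ)
    (hg_conc : ConcaveOn ℝ (Set.Icc 0 tb) g)
    (hg_nonneg : ∀ s ∈ Set.Icc 0 tb, 0 ≤ g s)
    (hg0 : g 0 = 0) (hgt : g tb = 0)
    (lam : ℝ → ℝ) (L : ℝ)
    (hlam_bij : Set.BijOn lam (Set.Icc 0 tb) (Set.Icc 0 tb))
    (hlam0 : lam 0 = 0) (hlamt : lam tb = tb)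
    (hinv : ∀ a ∈ Set.Icc 0 tb, ∀ b ∈ Set.Icc 0 tb, |a - b| ≤ L * |lam a - lam b|) :
    ∀ s ∈ Set.Icc 0 tb, g s ≤ L * g (lam s) := by
  intro s hs
  have hlam_s : lam s ∈ Icc 0 tb := hlam_bij.mapsTo hs
  have h0 : (0 : ℝ) ∈ Icc 0 tb := ⟨le_rfl, hs.1.trans hs.2⟩
  have htb : tb ∈ Icc 0 tb := ⟨hs.1.trans hs.2, le_rfl⟩
  rcases le_total s (lam s) with hle | hle
  · have hdist : tb - s ≤ L * (tb - lam s) := by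
      simpa [hlamt, abs_of_nonneg, sub_nonneg.2 hs.2, sub_nonneg.2 hlam_s.2] using hinv tb htb s hs
    exact hg_conc.le_mul_of_sub_le_mul_sub_right htb hs hgt (hg_nonneg _ hlam_s) hlam_s.2 hle hdist
  · have hdist : s - 0 ≤ L * (lam s - 0) := by
      simpa [hlam0, abs_of_nonneg, hs.1, hlam_s.1] using hinv s hs 0 h0
    exact hg_conc.le_mul_of_sub_le_mul_sub_left h0 hs hg0 (hg_nonneg _ hlam_s) hlam_s.1 hle hdist

/-- if `g ≥ 0` is concave on `[0,t̄]` with `g(0) = g(t̄) = 0` and `λ` is an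
increasing bijection of `[0,t̄]` fixing the endpoints whose inverse is `L`-Lipschitz
(`L ≥ 1`), then `g(s) ≤ L·g(λ(s))`. -/
theorem stmt_8 (tb : ℝ) (htb : 0 < tb) (g : ℝ → ℝ)
    (hg_conc : ConcaveOn ℝ (Set.Icc 0 tb) g)
    (hg_nonneg : ∀ s ∈ Set.Icc 0 tb, 0 ≤ g s)
    (hg0 : g 0 = 0) (hgt : g tb = 0)
    (lam : ℝ → ℝ) (L : ℝ) (hL : 1 ≤ L)
    (hlam_bij : Set.BijOn lam (Set.Icc 0 tb) (Set.Icc 0 tb))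
    (hlam_mono : StrictMonoOn lam (Set.Icc 0 tb))
    (hlam0 : lam 0 = 0) (hlamt : lam tb = tb)
    (hinv : ∀ a ∈ Set.Icc 0 tb, ∀ b ∈ Set.Icc 0 tb, |a - b| ≤ L * |lam a - lam b|) :
    ∀ s ∈ Set.Icc 0 tb, g s ≤ L * g (lam s) :=
  stmt_8_general tb g hg_conc hg_nonneg hg0 hgt lam L hlam_bij hlam0 hlamt hinv
end

section
/- Assume D is lenticular (γ₁ convex and γ₂ concave on I) and ζ < (√721 − 25)/48. Then, setting D^r = π^r(R_φ), D^r is an open subset of W ≅ ℝ² and there exists a locally Lipschitz function u^r : D^r → ℝ such that R_φ coincides with the right intrinsic graph S^r_{u^r} = {(u^r(y,t), y, t − 2y·u^r(y,t)) : (y,t) ∈ D^r}. In particular, the left intrinsic graph S_u = R_φ is also a right intrinsic graph. -/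
open Set

noncomputable section

/-- Projection onto `W = {x = 0}` along the integral curves of the right-invariant
field `X^r = ∂_x - 2y∂_t`: `π^r(x,y,t) = (y, t + 2xy)`. -/
def piR (p : ℝ × ℝ × ℝ) : ℝ × ℝ := (p.2.1, p.2.2 + 2 * p.1 * p.2.1)

/-! In the coordinates `(h, s)` of the ruling, `Q_φ(s, λ(s)) = 0` turns `π^r ∘ ρ` into `(y, τ)` with
`y = γ₁(s) + h (γ₂(λ(s)) - γ₁(s))` and `τ = s + 4 γ₁ φ₁ + 2 (φ₂(λ(s)) - φ₁(s)) h (γ₁(s) + y)`.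
The smallness of `ζ` makes `λ` 2-Lipschitz and then gives `|Δτ - Δs| ≤ (2/3) |Δs| + 12 Mφ |Δy|`,
so `τ` increases with `s` along every line `y = const`. Hence `π^r` is injective on `R_φ`, its image
is open by the intermediate value theorem, and `Δs`, then `Δh` where the strip has positive width,
and finally the `x`-coordinate `u^r` are locally controlled by the distance in `W`. -/

open Filter Topology
open scoped NNReal

theorem abs_mul_sub_mul_le_s12 {x x' y y' A B δ ε : ℝ} (hx : |x| ≤ A) (hy' : |y'| ≤ B)
    (hδ : |x' - x| ≤ δ) (hε : |y' - y| ≤ ε) : |x' * y' - x * y| ≤ δ * B + A * ε :=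
  calc |x' * y' - x * y| = |(x' - x) * y' + x * (y' - y)| := by ring_nf
    _ ≤ |x' - x| * |y'| + |x| * |y' - y| := by rw [← abs_mul, ← abs_mul]; exact abs_add_le _ _
    _ ≤ δ * B + A * ε :=
      add_le_add (mul_le_mul hδ hy' (abs_nonneg _) ((abs_nonneg _).trans hδ))
        (mul_le_mul hx hε (abs_nonneg _) ((abs_nonneg _).trans hx))

theorem abs_mul_le_abs_of_mem_Icc {h : ℝ} (hh : h ∈ Icc (0 : ℝ) 1) (z : ℝ) : |h * z| ≤ |z| := by
  rw [abs_mul, abs_of_nonneg hh.1]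
  exact mul_le_of_le_one_left (abs_nonneg z) hh.2

theorem LipschitzOnWith.abs_sub_le {φ : ℝ → ℝ} {K : ℝ≥0} {J : Set ℝ} (hφ : LipschitzOnWith K φ J)
    {s s' : ℝ} (hs : s ∈ J) (hs' : s' ∈ J) : |φ s' - φ s| ≤ K * |s' - s| := by
  simpa only [Real.dist_eq] using hφ.dist_le_mul s' hs' s hs

theorem abs_sub_le_two_mul_of_eq_add {s s' l l' e e' κ : ℝ} (hl : l = s + e) (hl' : l' = s' + e')
    (he : |e' - e| ≤ κ * (|s' - s| + |l' - l|)) (hκ : κ ≤ 1 / 3) : |l' - l| ≤ 2 * |s' - s| := by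
  have hsplit : |l' - l| ≤ |s' - s| + |e' - e| := by
    rw [hl, hl', show s' + e' - (s + e) = (s' - s) + (e' - e) by ring]
    exact abs_add_le _ _
  nlinarith [mul_le_mul_of_nonneg_right hκ (add_nonneg (abs_nonneg (s' - s)) (abs_nonneg (l' - l)))]

theorem abs_fst_sub_le_dist (p p' : ℝ × ℝ) : |p'.1 - p.1| ≤ dist p p' := by
  rw [Prod.dist_eq, Real.dist_eq, abs_sub_comm]
  exact le_max_left _ _

theorem abs_snd_sub_le_dist (p p' : ℝ × ℝ) : |p'.2 - p.2| ≤ dist p p' := by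
  rw [Prod.dist_eq, Real.dist_eq, abs_sub_comm]
  exact le_max_right _ _

theorem isOpen_regionBetween {a b : ℝ → ℝ} {J : Set ℝ} (hJ : IsOpen J) (ha : ContinuousOn a J)
    (hb : ContinuousOn b J) : IsOpen (regionBetween a b J) := by
  rw [isOpen_iff_mem_nhds]
  rintro ⟨s, y⟩ ⟨hs, hya, hyb⟩
  have hfst : Tendsto Prod.fst (𝓝 (s, y)) (𝓝 s) := continuous_fst.continuousAt
  have hsnd : Tendsto Prod.snd (𝓝 (s, y)) (𝓝 y) := continuous_snd.continuousAt
  have ha' := (ha.continuousAt (hJ.mem_nhds hs)).tendsto.comp hfst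
  have hb' := (hb.continuousAt (hJ.mem_nhds hs)).tendsto.comp hfst
  filter_upwards [hfst (hJ.mem_nhds hs), ha'.eventually_lt hsnd hya, hsnd.eventually_lt hb' hyb]
    with p h₁ h₂ h₃ using ⟨h₁, h₂, h₃⟩

/-- The intermediate value theorem on segments `[s₀ - δ, s₀ + δ] × {y}`: by continuity the
strict inequalities `G (s₀ - δ, y₀) < G (s₀, y₀) < G (s₀ + δ, y₀)` persist for `(y, τ)` near
`(y₀, G (s₀, y₀))`. -/
theorem isOpen_image_of_strictMonoOn {Ω : Set (ℝ × ℝ)} (hΩ : IsOpen Ω) {G : ℝ × ℝ → ℝ}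
    (hG : ContinuousOn G Ω) (hmono : ∀ y, StrictMonoOn (fun s => G (s, y)) {s | (s, y) ∈ Ω}) :
    IsOpen ((fun p => (p.2, G p)) '' Ω) := by
  rw [isOpen_iff_mem_nhds]
  rintro _ ⟨⟨s₀, y₀⟩, hp, rfl⟩
  obtain ⟨ε, hε, hball⟩ := Metric.isOpen_iff.1 hΩ _ hp
  obtain ⟨δ, hδ, hδε⟩ : ∃ δ, 0 < δ ∧ δ < ε := ⟨ε / 2, half_pos hε, half_lt_self hε⟩
  have hseg : ∀ σ ∈ Icc (s₀ - δ) (s₀ + δ), ∀ y, dist y y₀ < δ → (σ, y) ∈ Ω := by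
    intro σ hσ y hy
    refine hball (max_lt ?_ (hy.trans hδε))
    rw [Real.dist_eq, abs_lt]
    constructor <;> linarith [hσ.1, hσ.2]
  have hy₀ : dist y₀ y₀ < δ := by simpa using hδ
  have hlo : s₀ - δ ∈ Icc (s₀ - δ) (s₀ + δ) := ⟨le_rfl, by linarith⟩
  have hhi : s₀ + δ ∈ Icc (s₀ - δ) (s₀ + δ) := ⟨by linarith, le_rfl⟩
  have hend : ∀ σ ∈ Icc (s₀ - δ) (s₀ + δ),
      Tendsto (fun w : ℝ × ℝ => G (σ, w.1)) (𝓝 (y₀, G (s₀, y₀))) (𝓝 (G (σ, y₀))) := fun σ hσ =>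
    (hG.continuousAt (hΩ.mem_nhds (hseg σ hσ y₀ hy₀))).tendsto.comp
      ((continuous_const.prodMk continuous_fst).tendsto' _ _ rfl)
  have hsnd : Tendsto Prod.snd (𝓝 (y₀, G (s₀, y₀))) (𝓝 (G (s₀, y₀))) :=
    continuous_snd.continuousAt
  have hfst : ∀ᶠ w : ℝ × ℝ in 𝓝 (y₀, G (s₀, y₀)), dist w.1 y₀ < δ :=
    continuous_fst.continuousAt.eventually (Metric.ball_mem_nhds _ hδ)
  filter_upwards [hfst, (hend _ hlo).eventually_lt hsnd
    (hmono y₀ (hseg _ hlo y₀ hy₀) hp (by linarith)),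
    hsnd.eventually_lt (hend _ hhi) (hmono y₀ hp (hseg _ hhi y₀ hy₀) (by linarith))]
    with ⟨y, τ⟩ hy hτlo hτhi
  have hcont : ContinuousOn (fun σ => G (σ, y)) (Icc (s₀ - δ) (s₀ + δ)) :=
    hG.comp (continuous_id.prodMk continuous_const).continuousOn fun σ hσ => hseg σ hσ y hy
  obtain ⟨σ, hσ, hGσ⟩ := intermediate_value_Icc (by linarith) hcont
    ⟨hτlo.le, hτhi.le⟩
  exact ⟨(σ, y), hseg σ hσ y hy, Prod.ext rfl hGσ⟩

/-- `λ(s) - s = -2 (γ₂(λ(s)) - γ₁(s)) (φ₂(λ(s)) + φ₁(s))` has Lipschitz constant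
`4 Lγ Mφ + 4 Mγ Lφ` in the pair `(s, λ(s))`, which is small. -/
theorem lipschitzOnWith_two_of_Qphi_eq_zero {J : Set ℝ} {γ₁ γ₂ φ₁ φ₂ lam : ℝ → ℝ}
    {Mγ Mφ : ℝ} {Lγ Lφ : ℝ≥0}
    (hγ₁lip : LipschitzOnWith Lγ γ₁ J) (hγ₂lip : LipschitzOnWith Lγ γ₂ J)
    (hφ₁lip : LipschitzOnWith Lφ φ₁ J) (hφ₂lip : LipschitzOnWith Lφ φ₂ J)
    (hγ₁bd : ∀ s ∈ J, |γ₁ s| ≤ Mγ) (hγ₂bd : ∀ s ∈ J, |γ₂ s| ≤ Mγ)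
    (hφ₁bd : ∀ s ∈ J, |φ₁ s| ≤ Mφ) (hφ₂bd : ∀ s ∈ J, |φ₂ s| ≤ Mφ)
    (hsmall : 4 * Lγ * Mφ + 4 * Mγ * Lφ ≤ (1 / 3 : ℝ)) (hlam : MapsTo lam J J)
    (hsol : ∀ s ∈ J, Qphi γ₁ γ₂ φ₁ φ₂ s (lam s) = 0) : LipschitzOnWith 2 lam J := by
  refine LipschitzOnWith.of_dist_le_mul fun s' hs' s hs => ?_
  simp only [Real.dist_eq, NNReal.coe_ofNat]
  have hl : ∀ s ∈ J, lam s = s + -2 * ((γ₂ (lam s) - γ₁ s) * (φ₂ (lam s) + φ₁ s)) :=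
    fun s hs => by have := hsol s hs; unfold Qphi at this; linarith
  refine abs_sub_le_two_mul_of_eq_add (hl s hs) (hl s' hs') ?_ hsmall
  set ds := |s' - s|
  set dl := |lam s' - lam s|
  have hw : |(γ₂ (lam s') - γ₁ s') - (γ₂ (lam s) - γ₁ s)| ≤ Lγ * (ds + dl) := by
    have h₁ := hγ₁lip.abs_sub_le hs hs'
    have h₂ := hγ₂lip.abs_sub_le (hlam hs) (hlam hs')
    rw [show (γ₂ (lam s') - γ₁ s') - (γ₂ (lam s) - γ₁ s)
      = (γ₂ (lam s') - γ₂ (lam s)) - (γ₁ s' - γ₁ s) by ring]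
    linarith [abs_sub (γ₂ (lam s') - γ₂ (lam s)) (γ₁ s' - γ₁ s)]
  have hv : |(φ₂ (lam s') + φ₁ s') - (φ₂ (lam s) + φ₁ s)| ≤ Lφ * (ds + dl) := by
    have h₁ := hφ₁lip.abs_sub_le hs hs'
    have h₂ := hφ₂lip.abs_sub_le (hlam hs) (hlam hs')
    rw [show (φ₂ (lam s') + φ₁ s') - (φ₂ (lam s) + φ₁ s)
      = (φ₂ (lam s') - φ₂ (lam s)) + (φ₁ s' - φ₁ s) by ring]
    linarith [abs_add_le (φ₂ (lam s') - φ₂ (lam s)) (φ₁ s' - φ₁ s)]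
  have hw₀ : |γ₂ (lam s) - γ₁ s| ≤ 2 * Mγ := by
    linarith [abs_sub (γ₂ (lam s)) (γ₁ s), hγ₂bd _ (hlam hs), hγ₁bd s hs]
  have hv₀ : |φ₂ (lam s') + φ₁ s'| ≤ 2 * Mφ := by
    linarith [abs_add_le (φ₂ (lam s')) (φ₁ s'), hφ₂bd _ (hlam hs'), hφ₁bd s' hs']
  have hprod := abs_mul_sub_mul_le_s12 hw₀ hv₀ hw hv
  rw [← mul_sub, abs_mul, abs_neg, abs_two]
  nlinarith [abs_nonneg (s' - s), abs_nonneg (lam s' - lam s)]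

section Ruling

variable {a b f g : ℝ → ℝ}

/-- With `a, b, f, g = γ₁, γ₂ ∘ λ, φ₁, φ₂ ∘ λ`, `rulingX` is the `x`-coordinate of `ρ` and
`rulingMap = (rulingY, rulingT)` is `π^r ∘ ρ`, see `heisRho_fst` and `piR_heisRho`. -/
def rulingX (f g : ℝ → ℝ) (q : ℝ × ℝ) : ℝ := f q.2 + q.1 * (g q.2 - f q.2)

def rulingY (a b : ℝ → ℝ) (q : ℝ × ℝ) : ℝ := a q.2 + q.1 * (b q.2 - a q.2)

/-- The time coordinate of `π^r ∘ ρ` after eliminating `λ(s)` with `Q_φ(s, λ(s)) = 0`. -/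
def rulingT (a b f g : ℝ → ℝ) (q : ℝ × ℝ) : ℝ :=
  q.2 + 4 * a q.2 * f q.2 + 2 * (g q.2 - f q.2) * (q.1 * (a q.2 + rulingY a b q))

def rulingMap (a b f g : ℝ → ℝ) (q : ℝ × ℝ) : ℝ × ℝ := (rulingY a b q, rulingT a b f g q)

theorem heisRho_fst (γ₁ γ₂ φ₁ φ₂ lam : ℝ → ℝ) (q : ℝ × ℝ) :
    (heisRho γ₁ γ₂ φ₁ φ₂ lam q).1 = rulingX φ₁ (φ₂ ∘ lam) q := by
  simp only [heisRho, heisP, rulingX, Prod.fst_add, Prod.smul_fst, smul_eq_mul, Function.comp]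
  ring

theorem piR_heisRho {γ₁ γ₂ φ₁ φ₂ lam : ℝ → ℝ} {q : ℝ × ℝ}
    (hq : Qphi γ₁ γ₂ φ₁ φ₂ q.2 (lam q.2) = 0) :
    piR (heisRho γ₁ γ₂ φ₁ φ₂ lam q) = rulingMap γ₁ (γ₂ ∘ lam) φ₁ (φ₂ ∘ lam) q := by
  obtain ⟨h, s⟩ := q
  simp only [Qphi] at hq
  simp only [piR, heisRho, heisP, rulingMap, rulingY, rulingT, Function.comp, Prod.smul_mk,
    smul_eq_mul, Prod.mk_add_mk, Prod.mk.injEq]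
  constructor
  · ring
  · linear_combination h * hq

theorem rulingY_mem_Icc {s h : ℝ} (hab : a s ≤ b s) (hh : h ∈ Icc (0 : ℝ) 1) :
    rulingY a b (h, s) ∈ Icc (a s) (b s) := by
  simp only [rulingY, mem_Icc]
  constructor <;> nlinarith [hh.1, hh.2]

theorem rulingY_mem_Ioo {s h : ℝ} (hab : a s < b s) (hh : h ∈ Ioo (0 : ℝ) 1) :
    rulingY a b (h, s) ∈ Ioo (a s) (b s) := by
  simp only [rulingY, mem_Ioo]
  constructor <;> nlinarith [hh.1, hh.2]

/-- The parameter `h` of the ruling through `p = (s, y)` (the coordinate order of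
`regionBetween`). -/
def rulingH (a b : ℝ → ℝ) (p : ℝ × ℝ) : ℝ := (p.2 - a p.1) / (b p.1 - a p.1)

theorem rulingY_rulingH {p : ℝ × ℝ} (hab : a p.1 < b p.1) :
    rulingY a b (rulingH a b p, p.1) = p.2 := by
  simp only [rulingY, rulingH]
  rw [div_mul_cancel₀ _ (sub_pos.2 hab).ne']
  ring

theorem rulingH_rulingY {s h : ℝ} (hab : a s < b s) : rulingH a b (s, rulingY a b (h, s)) = h := by
  simp only [rulingY, rulingH]
  rw [add_sub_cancel_left, mul_div_cancel_right₀ _ (sub_pos.2 hab).ne']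

theorem rulingH_mem_Ioo {p : ℝ × ℝ} (hp : p.2 ∈ Ioo (a p.1) (b p.1)) :
    rulingH a b p ∈ Ioo (0 : ℝ) 1 := by
  have hw : 0 < b p.1 - a p.1 := by linarith [hp.1, hp.2]
  exact ⟨div_pos (by linarith [hp.1]) hw, (div_lt_one hw).2 (by linarith [hp.2])⟩

end Ruling

/-- `R = S^r_u` for some `u` that is locally Lipschitz on the open set `π^r(R) ⊆ W`. -/
def IsRightLipschitzGraph (R : Set (ℝ × ℝ × ℝ)) : Prop :=
  IsOpen (piR '' R) ∧ ∃ u : ℝ × ℝ → ℝ,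
    (∀ w ∈ piR '' R, ∃ ε > (0 : ℝ), ∃ K : ℝ≥0, LipschitzOnWith K u (Metric.ball w ε ∩ piR '' R)) ∧
    R = (fun w : ℝ × ℝ => (u w, w.1, w.2 - 2 * w.1 * u w)) '' (piR '' R)

theorem eq_image_of_injOn_piR {R : Set (ℝ × ℝ × ℝ)} (hR : InjOn piR R) :
    R = (fun w : ℝ × ℝ => ((Function.invFunOn piR R w).1, w.1,
      w.2 - 2 * w.1 * (Function.invFunOn piR R w).1)) '' (piR '' R) := by
  rw [image_image]
  conv_lhs => rw [← image_id R]
  refine image_congr fun p hp => ?_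
  rw [hR.leftInvOn_invFunOn hp]
  obtain ⟨x, y, t⟩ := p
  simp only [piR, id, Prod.mk.injEq, true_and]
  ring

/-- `32 L N + 12 M K` bounds the Lipschitz constant in `s` of `rulingT - s` along the lines
`y = const`, see `abs_rulingT_sub_sub_le`. -/
structure RulingBounds (a b f g : ℝ → ℝ) (J : Set ℝ) (M N : ℝ) (L K : ℝ≥0) (c : ℝ) : Prop where
  a_neg : ∀ s ∈ J, a s < 0
  b_pos : ∀ s ∈ J, 0 < b s
  abs_a_le : ∀ s ∈ J, |a s| ≤ M
  abs_b_le : ∀ s ∈ J, |b s| ≤ M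
  abs_f_le : ∀ s ∈ J, |f s| ≤ N
  abs_g_le : ∀ s ∈ J, |g s| ≤ N
  lipschitzOnWith_a : LipschitzOnWith L a J
  lipschitzOnWith_b : LipschitzOnWith L b J
  lipschitzOnWith_f : LipschitzOnWith K f J
  lipschitzOnWith_g : LipschitzOnWith K g J
  const_le : 32 * L * N + 12 * M * K ≤ c

namespace RulingBounds

variable {a b f g : ℝ → ℝ} {J : Set ℝ} {M N : ℝ} {L K : ℝ≥0} {c : ℝ}
  {s s' h h' : ℝ}

theorem of_lipschitzOnWith {I J : Set ℝ} {γ₁ γ₂ φ₁ φ₂ lam : ℝ → ℝ} {Mγ Lγ Mφ Lφ : ℝ≥0}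
    (hγ₁lip : LipschitzOnWith Lγ γ₁ I) (hγ₂lip : LipschitzOnWith Lγ γ₂ I)
    (hγ₁bd : ∀ s ∈ I, |γ₁ s| ≤ (Mγ : ℝ)) (hγ₂bd : ∀ s ∈ I, |γ₂ s| ≤ (Mγ : ℝ))
    (hφ₁lip : LipschitzOnWith Lφ φ₁ I) (hφ₂lip : LipschitzOnWith Lφ φ₂ I)
    (hφ₁bd : ∀ s ∈ I, |φ₁ s| ≤ (Mφ : ℝ)) (hφ₂bd : ∀ s ∈ I, |φ₂ s| ≤ (Mφ : ℝ))
    (hsign : ∀ s ∈ J, γ₁ s < 0 ∧ 0 < γ₂ s) (hκ : 4 * Lγ * Mφ + 4 * Mγ * Lφ ≤ (1 / 24 : ℝ))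
    (hJI : J ⊆ I) (hlam : LipschitzOnWith 2 lam I) (hlamI : MapsTo lam I I)
    (hlamJ : MapsTo lam J J) :
    RulingBounds γ₁ (γ₂ ∘ lam) φ₁ (φ₂ ∘ lam) J Mγ Mφ (Lγ * 2) (Lφ * 2) (2 / 3) where
  a_neg s hs := (hsign s hs).1
  b_pos s hs := (hsign _ (hlamJ hs)).2
  abs_a_le s hs := hγ₁bd s (hJI hs)
  abs_b_le s hs := hγ₂bd _ (hlamI (hJI hs))
  abs_f_le s hs := hφ₁bd s (hJI hs)
  abs_g_le s hs := hφ₂bd _ (hlamI (hJI hs))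
  lipschitzOnWith_a := (hγ₁lip.mono hJI).weaken (le_mul_of_one_le_right' one_le_two)
  lipschitzOnWith_b := (hγ₂lip.comp hlam hlamI).mono hJI
  lipschitzOnWith_f := (hφ₁lip.mono hJI).weaken (le_mul_of_one_le_right' one_le_two)
  lipschitzOnWith_g := (hφ₂lip.comp hlam hlamI).mono hJI
  const_le := by push_cast; nlinarith [mul_nonneg Mγ.coe_nonneg Lφ.coe_nonneg]

theorem a_lt_b (hD : RulingBounds a b f g J M N L K c) (hs : s ∈ J) : a s < b s :=
  (hD.a_neg s hs).trans (hD.b_pos s hs)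

theorem abs_add_rulingY_le (hD : RulingBounds a b f g J M N L K c) (hs : s ∈ J)
    (hh : h ∈ Icc (0 : ℝ) 1) :
    |a s + rulingY a b (h, s)| ≤ 2 * (b s - a s) ∧ |a s + rulingY a b (h, s)| ≤ 2 * M := by
  obtain ⟨hya, hyb⟩ := rulingY_mem_Icc (hD.a_lt_b hs).le hh
  have ha := hD.a_neg s hs
  have hb := hD.b_pos s hs
  have hM := abs_le.1 (hD.abs_a_le s hs)
  have hM' := abs_le.1 (hD.abs_b_le s hs)
  constructor <;> rw [abs_le] <;> constructor <;> linarith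

theorem abs_sub_mul_sub_le (hD : RulingBounds a b f g J M N L K c) (hs : s ∈ J) (hs' : s' ∈ J)
    (hh' : h' ∈ Icc (0 : ℝ) 1) :
    |(h' - h) * (b s - a s)| ≤ |rulingY a b (h', s') - rulingY a b (h, s)| + 3 * L * |s' - s| := by
  have ha := hD.lipschitzOnWith_a.abs_sub_le hs hs'
  have hb := hD.lipschitzOnWith_b.abs_sub_le hs hs'
  have hw : |h' * ((b s' - b s) - (a s' - a s))| ≤ 2 * L * |s' - s| :=
    (abs_mul_le_abs_of_mem_Icc hh' _).trans (by linarith [abs_sub (b s' - b s) (a s' - a s)])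
  have e : (h' - h) * (b s - a s) = (rulingY a b (h', s') - rulingY a b (h, s)) - (a s' - a s)
      - h' * ((b s' - b s) - (a s' - a s)) := by
    simp only [rulingY]; ring
  rw [e]
  linarith [abs_sub ((rulingY a b (h', s') - rulingY a b (h, s)) - (a s' - a s))
    (h' * ((b s' - b s) - (a s' - a s))), abs_sub (rulingY a b (h', s') - rulingY a b (h, s))
    (a s' - a s)]

theorem abs_mul_add_rulingY_sub_le (hD : RulingBounds a b f g J M N L K c) (hs : s ∈ J)
    (hs' : s' ∈ J) (hh : h ∈ Icc (0 : ℝ) 1) (hh' : h' ∈ Icc (0 : ℝ) 1) :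
    |h' * (a s' + rulingY a b (h', s')) - h * (a s + rulingY a b (h, s))|
      ≤ 3 * |rulingY a b (h', s') - rulingY a b (h, s)| + 7 * L * |s' - s| := by
  set dY := rulingY a b (h', s') - rulingY a b (h, s)
  have ha := hD.lipschitzOnWith_a.abs_sub_le hs hs'
  have h₁ : |h' * ((a s' - a s) + dY)| ≤ L * |s' - s| + |dY| :=
    (abs_mul_le_abs_of_mem_Icc hh' _).trans (by linarith [abs_add_le (a s' - a s) dY])
  -- `a s ≤ 0 ≤ b s` gives `|a + y| ≤ 2 (b - a)`, trading the factor `a + y` for the width.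
  have h₂ : |(h' - h) * (a s + rulingY a b (h, s))| ≤ 2 * |(h' - h) * (b s - a s)| := by
    rw [abs_mul, abs_mul, abs_of_pos (sub_pos.2 (hD.a_lt_b hs))]
    nlinarith [(hD.abs_add_rulingY_le hs hh).1, abs_nonneg (h' - h)]
  have h₃ := hD.abs_sub_mul_sub_le (h := h) hs hs' hh'
  have e : h' * (a s' + rulingY a b (h', s')) - h * (a s + rulingY a b (h, s))
      = h' * ((a s' - a s) + dY) + (h' - h) * (a s + rulingY a b (h, s)) := by ring
  rw [e]
  linarith [abs_add_le (h' * ((a s' - a s) + dY)) ((h' - h) * (a s + rulingY a b (h, s)))]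

theorem abs_rulingT_sub_sub_le (hD : RulingBounds a b f g J M N L K c) (hs : s ∈ J)
    (hs' : s' ∈ J) (hh : h ∈ Icc (0 : ℝ) 1) (hh' : h' ∈ Icc (0 : ℝ) 1) :
    |rulingT a b f g (h', s') - rulingT a b f g (h, s) - (s' - s)|
      ≤ c * |s' - s| + 12 * N * |rulingY a b (h', s') - rulingY a b (h, s)| := by
  set ds := |s' - s|
  set dy := |rulingY a b (h', s') - rulingY a b (h, s)|
  have hf := hD.lipschitzOnWith_f.abs_sub_le hs hs'
  have hg := hD.lipschitzOnWith_g.abs_sub_le hs hs'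
  have haf : |a s' * f s' - a s * f s| ≤ L * ds * N + M * (K * ds) :=
    abs_mul_sub_mul_le_s12 (hD.abs_a_le s hs) (hD.abs_f_le s' hs')
      (hD.lipschitzOnWith_a.abs_sub_le hs hs') hf
  have hgf : |(g s' - f s') - (g s - f s)| ≤ 2 * K * ds := by
    rw [show (g s' - f s') - (g s - f s) = (g s' - g s) - (f s' - f s) by ring]
    linarith [abs_sub (g s' - g s) (f s' - f s)]
  have hgf₀ : |g s - f s| ≤ 2 * N := by
    linarith [abs_sub (g s) (f s), hD.abs_g_le s hs, hD.abs_f_le s hs]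
  have hP : |h' * (a s' + rulingY a b (h', s'))| ≤ 2 * M :=
    (abs_mul_le_abs_of_mem_Icc hh' _).trans (hD.abs_add_rulingY_le hs' hh').2
  have hgfP := abs_mul_sub_mul_le_s12 hgf₀ hP hgf (hD.abs_mul_add_rulingY_sub_le hs hs' hh hh')
  have e : rulingT a b f g (h', s') - rulingT a b f g (h, s) - (s' - s)
      = 4 * (a s' * f s' - a s * f s) + 2 * ((g s' - f s') * (h' * (a s' + rulingY a b (h', s')))
        - (g s - f s) * (h * (a s + rulingY a b (h, s)))) := by
    simp only [rulingT]; ring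
  rw [e]
  have hc := hD.const_le
  calc _ ≤ 4 * |a s' * f s' - a s * f s| + 2 * |(g s' - f s') * (h' * (a s' + rulingY a b (h', s')))
        - (g s - f s) * (h * (a s + rulingY a b (h, s)))| := by
          refine (abs_add_le _ _).trans_eq ?_
          rw [abs_mul, abs_mul, abs_two, abs_of_pos (by norm_num : (0 : ℝ) < 4)]
    _ ≤ (32 * L * N + 12 * M * K) * ds + 12 * N * dy := by nlinarith
    _ ≤ c * ds + 12 * N * dy := by gcongr

theorem one_sub_mul_abs_sub_le (hD : RulingBounds a b f g J M N L K c) (hs : s ∈ J)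
    (hs' : s' ∈ J) (hh : h ∈ Icc (0 : ℝ) 1) (hh' : h' ∈ Icc (0 : ℝ) 1) :
    (1 - c) * |s' - s| ≤ |rulingT a b f g (h', s') - rulingT a b f g (h, s)|
      + 12 * N * |rulingY a b (h', s') - rulingY a b (h, s)| := by
  have hkey := hD.abs_rulingT_sub_sub_le hs hs' hh hh'
  have := abs_sub (rulingT a b f g (h', s') - rulingT a b f g (h, s))
    (rulingT a b f g (h', s') - rulingT a b f g (h, s) - (s' - s))
  rw [sub_sub_cancel] at this
  linarith

theorem abs_rulingX_sub_le (hD : RulingBounds a b f g J M N L K c) (hs : s ∈ J) (hs' : s' ∈ J)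
    (hh' : h' ∈ Icc (0 : ℝ) 1) {ω : ℝ} (hω : 0 < ω) (hωs : ω ≤ b s - a s) :
    |rulingX f g (h', s') - rulingX f g (h, s)| ≤ 3 * K * |s' - s|
      + 2 * N * ((|rulingY a b (h', s') - rulingY a b (h, s)| + 3 * L * |s' - s|) / ω) := by
  have hf := hD.lipschitzOnWith_f.abs_sub_le hs hs'
  have hg := hD.lipschitzOnWith_g.abs_sub_le hs hs'
  have hgf : |h' * ((g s' - f s') - (g s - f s))| ≤ 2 * K * |s' - s| :=
    (abs_mul_le_abs_of_mem_Icc hh' _).trans (by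
      rw [show (g s' - f s') - (g s - f s) = (g s' - g s) - (f s' - f s) by ring]
      linarith [abs_sub (g s' - g s) (f s' - f s)])
  have hdh : |h' - h| ≤ (|rulingY a b (h', s') - rulingY a b (h, s)| + 3 * L * |s' - s|) / ω := by
    rw [le_div_iff₀ hω]
    refine le_trans ?_ (hD.abs_sub_mul_sub_le hs hs' hh')
    rw [abs_mul, abs_of_pos (sub_pos.2 (hD.a_lt_b hs))]
    exact mul_le_mul_of_nonneg_left hωs (abs_nonneg _)
  have hgf₀ : |g s - f s| ≤ 2 * N := by
    linarith [abs_sub (g s) (f s), hD.abs_g_le s hs, hD.abs_f_le s hs]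
  have hdhgf : |(h' - h) * (g s - f s)| ≤ _ * (2 * N) :=
    (abs_mul _ _).trans_le (mul_le_mul hdh hgf₀ (abs_nonneg _) ((abs_nonneg _).trans hdh))
  have e : rulingX f g (h', s') - rulingX f g (h, s)
      = (f s' - f s) + h' * ((g s' - f s') - (g s - f s)) + (h' - h) * (g s - f s) := by
    simp only [rulingX]; ring
  rw [e]
  linarith [abs_add_le (f s' - f s + h' * ((g s' - f s') - (g s - f s))) ((h' - h) * (g s - f s)),
    abs_add_le (f s' - f s) (h' * ((g s' - f s') - (g s - f s)))]

theorem injOn_rulingMap (hD : RulingBounds a b f g J M N L K c) (hc : c < 1) :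
    InjOn (rulingMap a b f g) (Icc 0 1 ×ˢ J) := by
  rintro ⟨h, s⟩ ⟨hh, hs⟩ ⟨h', s'⟩ ⟨hh', hs'⟩ heq
  obtain ⟨hY, hT⟩ := Prod.mk.inj heq
  have hest := hD.one_sub_mul_abs_sub_le hs hs' hh hh'
  simp only [hY, hT, sub_self, abs_zero, mul_zero, add_zero] at hest
  have hss : s = s' := by
    have : |s' - s| = 0 := by nlinarith [abs_nonneg (s' - s)]
    linarith [abs_eq_zero.1 this]
  subst hss
  rw [← rulingH_rulingY (h := h) (hD.a_lt_b hs), hY, rulingH_rulingY (hD.a_lt_b hs)]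

theorem image_rulingMap_eq (hD : RulingBounds a b f g J M N L K c) :
    rulingMap a b f g '' (Ioo 0 1 ×ˢ J)
      = (fun p => (p.2, rulingT a b f g (rulingH a b p, p.1))) '' regionBetween a b J := by
  ext w
  constructor
  · rintro ⟨⟨h, s⟩, ⟨hh, hs⟩, rfl⟩
    refine ⟨(s, rulingY a b (h, s)), ⟨hs, rulingY_mem_Ioo (hD.a_lt_b hs) hh⟩, ?_⟩
    simp only [rulingMap, rulingH_rulingY (hD.a_lt_b hs)]
  · rintro ⟨p, ⟨hs, hp⟩, rfl⟩
    refine ⟨(rulingH a b p, p.1), ⟨rulingH_mem_Ioo hp, hs⟩, ?_⟩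
    simp only [rulingMap, rulingY_rulingH (hD.a_lt_b hs)]

theorem isOpen_image_rulingMap (hD : RulingBounds a b f g J M N L K c) (hJ : IsOpen J)
    (hc : c < 1) : IsOpen (rulingMap a b f g '' (Ioo 0 1 ×ˢ J)) := by
  rw [hD.image_rulingMap_eq]
  refine isOpen_image_of_strictMonoOn (isOpen_regionBetween hJ
    hD.lipschitzOnWith_a.continuousOn hD.lipschitzOnWith_b.continuousOn) ?_ ?_
  · have hcomp : ∀ {φ : ℝ → ℝ} {K : ℝ≥0}, LipschitzOnWith K φ J →
        ContinuousOn (fun p : ℝ × ℝ => φ p.1) (regionBetween a b J) := fun hφ =>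
      hφ.continuousOn.comp continuousOn_fst fun p hp => hp.1
    have ha := hcomp hD.lipschitzOnWith_a
    have hb := hcomp hD.lipschitzOnWith_b
    have hf := hcomp hD.lipschitzOnWith_f
    have hg := hcomp hD.lipschitzOnWith_g
    have hH : ContinuousOn (rulingH a b) (regionBetween a b J) :=
      (continuousOn_snd.sub ha).div (hb.sub ha) fun p hp => (sub_pos.2 (hD.a_lt_b hp.1)).ne'
    simp only [rulingT, rulingY]
    exact (continuousOn_fst.add ((continuousOn_const.mul ha).mul hf)).add
      ((continuousOn_const.mul (hg.sub hf)).mul (hH.mul (ha.add (ha.add (hH.mul (hb.sub ha))))))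
  · intro y s hs s' hs' hss'
    have hkey := hD.abs_rulingT_sub_sub_le hs.1 hs'.1 (Ioo_subset_Icc_self (rulingH_mem_Ioo hs.2))
      (Ioo_subset_Icc_self (rulingH_mem_Ioo hs'.2))
    simp only [rulingY_rulingH (hD.a_lt_b hs.1), rulingY_rulingH (hD.a_lt_b hs'.1), sub_self,
      abs_zero, mul_zero, add_zero, abs_of_pos (sub_pos.2 hss')] at hkey
    have := (abs_le.1 hkey).1
    nlinarith

theorem one_sub_mul_abs_sub_le_dist (hD : RulingBounds a b f g J M N L K c) (hs : s ∈ J)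
    (hs' : s' ∈ J) (hh : h ∈ Icc (0 : ℝ) 1) (hh' : h' ∈ Icc (0 : ℝ) 1) :
    (1 - c) * |s' - s|
      ≤ (1 + 12 * N) * dist (rulingMap a b f g (h, s)) (rulingMap a b f g (h', s')) := by
  have hN : 0 ≤ N := (abs_nonneg _).trans (hD.abs_f_le s hs)
  have hY := abs_fst_sub_le_dist (rulingMap a b f g (h, s)) (rulingMap a b f g (h', s'))
  have hT := abs_snd_sub_le_dist (rulingMap a b f g (h, s)) (rulingMap a b f g (h', s'))
  simp only [rulingMap] at hY hT ⊢
  nlinarith [hD.one_sub_mul_abs_sub_le hs hs' hh hh']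

/-- Near `s₀` the width `b - a` stays above `ω > 0`, so `Δh` is controlled by `Δy` and `Δs`. -/
theorem exists_lipschitzOnWith_ball (hD : RulingBounds a b f g J M N L K c) (hJ : IsOpen J)
    (hc : c < 1) {u : ℝ × ℝ → ℝ}
    (hu : ∀ q ∈ Ioo 0 1 ×ˢ J, u (rulingMap a b f g q) = rulingX f g q) {w : ℝ × ℝ}
    (hw : w ∈ rulingMap a b f g '' (Ioo 0 1 ×ˢ J)) :
    ∃ ε > 0, ∃ C : ℝ≥0,
      LipschitzOnWith C u (Metric.ball w ε ∩ rulingMap a b f g '' (Ioo 0 1 ×ˢ J)) := by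
  obtain ⟨⟨h₀, s₀⟩, ⟨hh₀, hs₀⟩, rfl⟩ := hw
  have hN : 0 ≤ N := (abs_nonneg _).trans (hD.abs_f_le s₀ hs₀)
  have hc' : 0 < 1 - c := sub_pos.2 hc
  obtain ⟨ω, hω, hωs₀⟩ : ∃ ω, 0 < ω ∧ ω < b s₀ - a s₀ :=
    ⟨_, half_pos (sub_pos.2 (hD.a_lt_b hs₀)), half_lt_self (sub_pos.2 (hD.a_lt_b hs₀))⟩
  obtain ⟨η, hη, hwidth⟩ : ∃ η > 0, ∀ ⦃s⦄, dist s s₀ < η → ω < b s - a s :=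
    Metric.eventually_nhds_iff.1 <|
      ((hD.lipschitzOnWith_b.continuousOn.sub hD.lipschitzOnWith_a.continuousOn).continuousAt
        (hJ.mem_nhds hs₀)).eventually (lt_mem_nhds hωs₀)
  set C₂ := (1 + 12 * N) / (1 - c)
  have hC₂ : 0 ≤ C₂ := div_nonneg (by linarith) hc'.le
  have hds : ∀ q ∈ Ioo 0 1 ×ˢ J, ∀ q' ∈ Ioo 0 1 ×ˢ J,
      |q'.2 - q.2| ≤ C₂ * dist (rulingMap a b f g q) (rulingMap a b f g q') := by
    rintro ⟨h, s⟩ ⟨hh, hs⟩ ⟨h', s'⟩ ⟨hh', hs'⟩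
    rw [div_mul_eq_mul_div, le_div_iff₀ hc', mul_comm]
    exact hD.one_sub_mul_abs_sub_le_dist hs hs' (Ioo_subset_Icc_self hh) (Ioo_subset_Icc_self hh')
  have hC : 0 ≤ 3 * K * C₂ + 2 * N * (1 + 3 * L * C₂) / ω := by positivity
  refine ⟨(1 - c) * η / (1 + 12 * N), by positivity,
    (3 * K * C₂ + 2 * N * (1 + 3 * L * C₂) / ω).toNNReal, ?_⟩
  refine LipschitzOnWith.of_dist_le_mul fun w hw w' hw' => ?_
  obtain ⟨hwball, ⟨h, s⟩, hq, rfl⟩ := hw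
  obtain ⟨-, ⟨h', s'⟩, hq', rfl⟩ := hw'
  have hnear : ω < b s - a s := by
    refine hwidth ?_
    have := hds _ ⟨hh₀, hs₀⟩ _ hq
    rw [Metric.mem_ball, dist_comm, lt_div_iff₀ (by linarith)] at hwball
    rw [Real.dist_eq]
    rw [div_mul_eq_mul_div, le_div_iff₀ hc'] at this
    nlinarith
  rw [hu _ hq, hu _ hq', Real.dist_eq, abs_sub_comm, Real.coe_toNNReal _ hC]
  have hdy := abs_fst_sub_le_dist (rulingMap a b f g (h, s)) (rulingMap a b f g (h', s'))
  calc _ ≤ 3 * K * |s' - s| + 2 * N * ((|rulingY a b (h', s') - rulingY a b (h, s)|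
          + 3 * L * |s' - s|) / ω) :=
        hD.abs_rulingX_sub_le hq.2 hq'.2 (Ioo_subset_Icc_self hq'.1) hω hnear.le
    _ ≤ 3 * K * (C₂ * dist (rulingMap a b f g (h, s)) (rulingMap a b f g (h', s')))
          + 2 * N * ((dist (rulingMap a b f g (h, s)) (rulingMap a b f g (h', s'))
          + 3 * L * (C₂ * dist (rulingMap a b f g (h, s)) (rulingMap a b f g (h', s')))) / ω) := by
        gcongr
        all_goals first | exact hds _ hq _ hq' | exact hdy
    _ = _ := by ring

theorem isRightLipschitzGraph_image (hD : RulingBounds a b f g J M N L K c) (hJ : IsOpen J)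
    (hc : c < 1) {ρ : ℝ × ℝ → ℝ × ℝ × ℝ}
    (hρ : ∀ q ∈ Ioo 0 1 ×ˢ J, piR (ρ q) = rulingMap a b f g q)
    (hρX : ∀ q ∈ Ioo 0 1 ×ˢ J, (ρ q).1 = rulingX f g q) :
    IsRightLipschitzGraph (ρ '' (Ioo 0 1 ×ˢ J)) := by
  set R := ρ '' (Ioo 0 1 ×ˢ J)
  have hDr : piR '' R = rulingMap a b f g '' (Ioo 0 1 ×ˢ J) := by
    rw [image_image]
    exact image_congr hρ
  have hinj : InjOn piR R := by
    rintro _ ⟨q, hq, rfl⟩ _ ⟨q', hq', rfl⟩ he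
    rw [hρ q hq, hρ q' hq'] at he
    rw [hD.injOn_rulingMap hc ⟨Ioo_subset_Icc_self hq.1, hq.2⟩
      ⟨Ioo_subset_Icc_self hq'.1, hq'.2⟩ he]
  refine ⟨hDr ▸ hD.isOpen_image_rulingMap hJ hc, fun w => (Function.invFunOn piR R w).1,
    fun w hw => ?_, eq_image_of_injOn_piR hinj⟩
  rw [hDr] at hw ⊢
  refine hD.exists_lipschitzOnWith_ball hJ hc (fun q hq => ?_) hw
  rw [← hρ q hq, hinj.leftInvOn_invFunOn (mem_image_of_mem _ hq), hρX q hq]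

end RulingBounds

theorem stmt_12_general (tb : ℝ)
    (γ₁ γ₂ φ₁ φ₂ : ℝ → ℝ) (Mγ Lγ Mφ Lφ : NNReal)
    (hγ₁lip : LipschitzOnWith Lγ γ₁ (Set.Icc 0 tb))
    (hγ₂lip : LipschitzOnWith Lγ γ₂ (Set.Icc 0 tb))
    (hγ₁bd : ∀ s ∈ Set.Icc 0 tb, |γ₁ s| ≤ (Mγ : ℝ))
    (hγ₂bd : ∀ s ∈ Set.Icc 0 tb, |γ₂ s| ≤ (Mγ : ℝ))
    (hφ₁lip : LipschitzOnWith Lφ φ₁ (Set.Icc 0 tb))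
    (hφ₂lip : LipschitzOnWith Lφ φ₂ (Set.Icc 0 tb))
    (hφ₁bd : ∀ s ∈ Set.Icc 0 tb, |φ₁ s| ≤ (Mφ : ℝ))
    (hφ₂bd : ∀ s ∈ Set.Icc 0 tb, |φ₂ s| ≤ (Mφ : ℝ))
    (hsign : ∀ t ∈ Set.Ioo 0 tb, γ₁ t < 0 ∧ 0 < γ₂ t)
    (zeta : ℝ) (hzdef : zeta = 4 * ((Mγ : ℝ) + (Lγ : ℝ)) * ((Mφ : ℝ) + (Lφ : ℝ)))
    (hzeta : zeta < (Real.sqrt 721 - 25) / 48)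
    (lam : ℝ → ℝ)
    (hlam_bij : Set.BijOn lam (Set.Icc 0 tb) (Set.Icc 0 tb))
    (hlam_mono : StrictMonoOn lam (Set.Icc 0 tb))
    (hlam_sol : ∀ s ∈ Set.Icc 0 tb, Qphi γ₁ γ₂ φ₁ φ₂ s (lam s) = 0)
    (hlam0 : lam 0 = 0) (hlamt : lam tb = tb)
    :
    IsOpen (piR '' (heisRho γ₁ γ₂ φ₁ φ₂ lam '' (Set.Ioo (0:ℝ) 1 ×ˢ Set.Ioo (0:ℝ) tb))) ∧
    ∃ ur : ℝ × ℝ → ℝ,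
      -- u^r is locally Lipschitz on D^r
      (∀ w ∈ piR '' (heisRho γ₁ γ₂ φ₁ φ₂ lam '' (Set.Ioo (0:ℝ) 1 ×ˢ Set.Ioo (0:ℝ) tb)),
        ∃ ε > (0:ℝ), ∃ K : NNReal,
          LipschitzOnWith K ur (Metric.ball w ε ∩
            piR '' (heisRho γ₁ γ₂ φ₁ φ₂ lam '' (Set.Ioo (0:ℝ) 1 ×ˢ Set.Ioo (0:ℝ) tb)))) ∧
      -- R_φ = S^r_{u^r}
      heisRho γ₁ γ₂ φ₁ φ₂ lam '' (Set.Ioo (0:ℝ) 1 ×ˢ Set.Ioo (0:ℝ) tb)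
        = (fun w : ℝ × ℝ => (ur w, w.1, w.2 - 2 * w.1 * ur w)) ''
            (piR '' (heisRho γ₁ γ₂ φ₁ φ₂ lam '' (Set.Ioo (0:ℝ) 1 ×ˢ Set.Ioo (0:ℝ) tb))) := by
  have hζ : zeta ≤ 1 / 24 := by
    have : √721 ≤ 27 := Real.sqrt_le_iff.2 ⟨by norm_num, by norm_num⟩
    linarith
  have hκ : 4 * Lγ * Mφ + 4 * Mγ * Lφ ≤ (1 / 24 : ℝ) := by
    have := mul_nonneg Mγ.coe_nonneg Mφ.coe_nonneg
    have := mul_nonneg Lγ.coe_nonneg Lφ.coe_nonneg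
    nlinarith
  have hlam := lipschitzOnWith_two_of_Qphi_eq_zero hγ₁lip hγ₂lip hφ₁lip hφ₂lip hγ₁bd hγ₂bd
    hφ₁bd hφ₂bd (by linarith) hlam_bij.mapsTo hlam_sol
  have hlamIoo : MapsTo lam (Ioo 0 tb) (Ioo 0 tb) := by
    simpa only [hlam0, hlamt] using hlam_mono.mapsTo_Ioo
  have hD := RulingBounds.of_lipschitzOnWith hγ₁lip hγ₂lip hγ₁bd hγ₂bd hφ₁lip hφ₂lip hφ₁bd hφ₂bd
    hsign hκ Ioo_subset_Icc_self hlam hlam_bij.mapsTo hlamIoo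
  exact hD.isRightLipschitzGraph_image isOpen_Ioo (by norm_num)
    (fun q hq => piR_heisRho (hlam_sol _ (Ioo_subset_Icc_self hq.2))) (fun q _ => heisRho_fst ..)

/-- the ruled surface `R_φ` is also a right intrinsic graph: with
`D^r = π^r(R_φ)`, `D^r` is open and `R_φ = S^r_{u^r}` for a locally Lipschitz
`u^r : D^r → ℝ`. -/
theorem stmt_12 (tb : ℝ) (htb : 0 < tb)
    (γ₁ γ₂ φ₁ φ₂ : ℝ → ℝ) (Mγ Lγ Mφ Lφ : NNReal)
    (hγ₁lip : LipschitzOnWith Lγ γ₁ (Set.Icc 0 tb))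
    (hγ₂lip : LipschitzOnWith Lγ γ₂ (Set.Icc 0 tb))
    (hγ₁bd : ∀ s ∈ Set.Icc 0 tb, |γ₁ s| ≤ (Mγ : ℝ))
    (hγ₂bd : ∀ s ∈ Set.Icc 0 tb, |γ₂ s| ≤ (Mγ : ℝ))
    (hφ₁lip : LipschitzOnWith Lφ φ₁ (Set.Icc 0 tb))
    (hφ₂lip : LipschitzOnWith Lφ φ₂ (Set.Icc 0 tb))
    (hφ₁bd : ∀ s ∈ Set.Icc 0 tb, |φ₁ s| ≤ (Mφ : ℝ))
    (hφ₂bd : ∀ s ∈ Set.Icc 0 tb, |φ₂ s| ≤ (Mφ : ℝ))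
    (hsign : ∀ t ∈ Set.Ioo 0 tb, γ₁ t < 0 ∧ 0 < γ₂ t)
    (hγ₁0 : γ₁ 0 = 0) (hγ₁t : γ₁ tb = 0) (hγ₂0 : γ₂ 0 = 0) (hγ₂t : γ₂ tb = 0)
    (hφ0 : φ₁ 0 = φ₂ 0) (hφt : φ₁ tb = φ₂ tb)
    (hconv : ConvexOn ℝ (Set.Icc 0 tb) γ₁)
    (hconc : ConcaveOn ℝ (Set.Icc 0 tb) γ₂)
    (zeta : ℝ) (hzdef : zeta = 4 * ((Mγ : ℝ) + (Lγ : ℝ)) * ((Mφ : ℝ) + (Lφ : ℝ)))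
    (hzeta : zeta < (Real.sqrt 721 - 25) / 48)
    (lam : ℝ → ℝ)
    (hlam_bij : Set.BijOn lam (Set.Icc 0 tb) (Set.Icc 0 tb))
    (hlam_mono : StrictMonoOn lam (Set.Icc 0 tb))
    (hlam_sol : ∀ s ∈ Set.Icc 0 tb, Qphi γ₁ γ₂ φ₁ φ₂ s (lam s) = 0)
    (hlam0 : lam 0 = 0) (hlamt : lam tb = tb)
    :
    IsOpen (piR '' (heisRho γ₁ γ₂ φ₁ φ₂ lam '' (Set.Ioo (0:ℝ) 1 ×ˢ Set.Ioo (0:ℝ) tb))) ∧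
    ∃ ur : ℝ × ℝ → ℝ,
      -- u^r is locally Lipschitz on D^r
      (∀ w ∈ piR '' (heisRho γ₁ γ₂ φ₁ φ₂ lam '' (Set.Ioo (0:ℝ) 1 ×ˢ Set.Ioo (0:ℝ) tb)),
        ∃ ε > (0:ℝ), ∃ K : NNReal,
          LipschitzOnWith K ur (Metric.ball w ε ∩
            piR '' (heisRho γ₁ γ₂ φ₁ φ₂ lam '' (Set.Ioo (0:ℝ) 1 ×ˢ Set.Ioo (0:ℝ) tb)))) ∧
      -- R_φ = S^r_{u^r}
      heisRho γ₁ γ₂ φ₁ φ₂ lam '' (Set.Ioo (0:ℝ) 1 ×ˢ Set.Ioo (0:ℝ) tb)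
        = (fun w : ℝ × ℝ => (ur w, w.1, w.2 - 2 * w.1 * ur w)) ''
            (piR '' (heisRho γ₁ γ₂ φ₁ φ₂ lam '' (Set.Ioo (0:ℝ) 1 ×ˢ Set.Ioo (0:ℝ) tb))) :=
  stmt_12_general tb γ₁ γ₂ φ₁ φ₂ Mγ Lγ Mφ Lφ hγ₁lip hγ₂lip hγ₁bd hγ₂bd hφ₁lip hφ₂lip hφ₁bd hφ₂bd
    hsign zeta hzdef hzeta lam hlam_bij hlam_mono hlam_sol hlam0 hlamt
end
end
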